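/- arXiv:1403.6526 — 15 statements merged into one kernel-verified Lean document; each statement's English description precedes it below -/
import Mathlib

section
/- Let h : E → ℝ ∪ {+∞} be a proper lower semicontinuous convex function with Q ⊆ dom h and let β > 0. Define ψ(x) = h(x) + β d(x). Then the minimization problem min_{x ∈ Q} ψ(x) has a unique solution z* ∈ Q, and for every x ∈ Q one has ψ(x) ≥ ψ(z*) + β ξ(z*, x). -/
/-!
`ψ = h + β d` is lower semicontinuous on the closed set `Q` and coercive: a convex lower
semicontinuous `h` decreases at most linearly (compare it with its minimum on a unit ball), while
the Bregman bound at `x₀` makes `d` grow quadratically. Hence `ψ` attains its minimum on `Q`.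
At a minimizer `z`, convexity of `h` along the chord from `z` to `u` together with the
differentiability of `d` at `z` gives `h z ≤ h u + β ⟪∇d z, u - z⟫`, which is the three-point
inequality; at a second minimizer `w` it forces `σ / 2 * ‖w - z‖ ^ 2 ≤ 0`.
-/

open Set Filter Topology Metric

theorem LowerSemicontinuousOn.exists_isMinOn' {β : Type*} [TopologicalSpace β] {s : Set β}
    {f : β → ℝ} (hf : LowerSemicontinuousOn f s) (hsc : IsClosed s) {x₀ : β} (h₀ : x₀ ∈ s)
    (hc : ∀ᶠ x in cocompact β ⊓ 𝓟 s, f x₀ ≤ f x) : ∃ x ∈ s, IsMinOn f s x := by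
  rcases (hasBasis_cocompact.inf_principal _).eventually_iff.1 hc with ⟨K, hK, hKf⟩
  have hsub : insert x₀ (K ∩ s) ⊆ s := insert_subset_iff.2 ⟨h₀, inter_subset_right⟩
  obtain ⟨x, hx, hxf⟩ := (hf.mono hsub).exists_isMinOn (insert_nonempty _ _)
    ((hK.inter_right hsc).insert x₀)
  refine ⟨x, hsub hx, fun y hy => ?_⟩
  by_cases hyK : y ∈ K
  exacts [hxf (Or.inr ⟨hyK, hy⟩), (hxf (Or.inl rfl)).trans (hKf ⟨hyK, hy⟩)]

section Convex

variable {E : Type*} [NormedAddCommGroup E] [NormedSpace ℝ E] {Q : Set E} {h : E → ℝ}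

theorem ConvexOn.apply_add_smul_sub_le (hh : ConvexOn ℝ Q h) {x y : E} (hx : x ∈ Q) (hy : y ∈ Q)
    {t : ℝ} (ht : t ∈ Icc 0 1) : h (x + t • (y - x)) ≤ h x + t * (h y - h x) := by
  have := hh.2 hx hy (sub_nonneg.2 ht.2) ht.1 (sub_add_cancel 1 t)
  rw [smul_eq_mul, smul_eq_mul] at this
  rw [show x + t • (y - x) = (1 - t) • x + t • y by module]
  linarith

theorem ConvexOn.exists_sub_mul_norm_le [ProperSpace E] (hh : ConvexOn ℝ Q h) (hQ : IsClosed Q)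
    (hlsc : LowerSemicontinuousOn h Q) {x₀ : E} (hx₀ : x₀ ∈ Q) :
    ∃ a b, ∀ u ∈ Q, a - b * ‖u - x₀‖ ≤ h u := by
  obtain ⟨v, -, hv⟩ := (hlsc.mono inter_subset_left).exists_isMinOn
    (s := Q ∩ closedBall x₀ 1) ⟨x₀, hx₀, mem_closedBall_self zero_le_one⟩
    ((isCompact_closedBall x₀ 1).inter_left hQ)
  have hvx₀ : h v ≤ h x₀ := hv ⟨hx₀, mem_closedBall_self zero_le_one⟩
  refine ⟨h v, h x₀ - h v, fun u hu => ?_⟩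
  set s := ‖u - x₀‖
  rcases le_or_gt s 1 with hs | hs
  · have : h v ≤ h u := hv ⟨hu, by rwa [mem_closedBall, dist_eq_norm]⟩
    nlinarith [norm_nonneg (u - x₀)]
  · -- compare with the point of the segment `[x₀, u]` on the unit sphere around `x₀`
    have ht : s⁻¹ ∈ Icc (0 : ℝ) 1 := ⟨by positivity, inv_le_one_of_one_le₀ hs.le⟩
    have hp : x₀ + s⁻¹ • (u - x₀) ∈ Q ∩ closedBall x₀ 1 := by
      refine ⟨hh.1.add_smul_sub_mem hx₀ hu ht, ?_⟩
      rw [mem_closedBall, dist_eq_norm, add_sub_cancel_left, norm_smul, norm_inv, norm_norm,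
        inv_mul_cancel₀ (by positivity)]
    have hconv := (hv hp).trans (hh.apply_add_smul_sub_le hx₀ hu ht)
    have hmul : s * h v ≤ s * h x₀ + (h u - h x₀) := by
      have := mul_le_mul_of_nonneg_left hconv (by positivity : (0 : ℝ) ≤ s)
      rwa [mul_add, ← mul_assoc, mul_inv_cancel₀ (by positivity), one_mul] at this
    nlinarith

theorem IsMinOn.le_add_fderiv_of_convexOn {g : E → ℝ} {g' : E →L[ℝ] ℝ} {z u : E}
    (hmin : IsMinOn (fun x => h x + g x) Q z) (hh : ConvexOn ℝ Q h)
    (hg : HasFDerivWithinAt g g' Q z) (hz : z ∈ Q) (hu : u ∈ Q) : h z ≤ h u + g' (u - z) := by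
  -- on the chord `t ↦ z + t • (u - z)`, `h` lies below its secant, so `g` plus that secant
  -- is minimal at `t = 0`
  set φ : ℝ → ℝ := fun t => g (z + t • (u - z)) + t * (h u - h z)
  have hφmin : IsMinOn φ (Icc 0 1) 0 := fun t ht => by
    have hmin_t : h z + g z ≤ h _ + g _ := hmin (hh.1.add_smul_sub_mem hz hu ht)
    have := hh.apply_add_smul_sub_le hz hu ht
    change φ 0 ≤ φ t
    simp only [φ, zero_smul, add_zero, zero_mul]
    linarith
  have hline : HasDerivWithinAt (fun t : ℝ => z + t • (u - z)) (u - z) (Icc 0 1) 0 := by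
    simpa using ((hasDerivAt_id (0 : ℝ)).smul_const (u - z)).const_add z |>.hasDerivWithinAt
  have hφ : HasDerivWithinAt φ (g' (u - z) + (h u - h z)) (Icc 0 1) 0 :=
    (hg.comp_hasDerivWithinAt_of_eq 0 hline (fun t ht => hh.1.add_smul_sub_mem hz hu ht)
      (by simp)).add ((hasDerivAt_mul_const (h u - h z)).hasDerivWithinAt)
  have h1 : (1 : ℝ) ∈ posTangentConeAt (Icc 0 1) 0 :=
    mem_posTangentConeAt_of_segment_subset (by simp [segment_eq_Icc])
  have := hφmin.localize.hasFDerivWithinAt_nonneg hφ.hasFDerivWithinAt h1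
  rw [ContinuousLinearMap.toSpanSingleton_apply, one_smul] at this
  linarith

end Convex

theorem eventually_le_of_quadratic_growth {E : Type*} [NormedAddCommGroup E] [ProperSpace E]
    {s : Set E} {f : E → ℝ} {x₀ : E} {a b c : ℝ} (hc : 0 < c)
    (hf : ∀ u ∈ s, a - b * ‖u - x₀‖ + c * ‖u - x₀‖ ^ 2 ≤ f u) (K : ℝ) :
    ∀ᶠ u in cocompact E ⊓ 𝓟 s, K ≤ f u := by
  have hq : Tendsto (fun r : ℝ => a - b * r + c * r ^ 2) atTop atTop := by
    have : Tendsto (fun r : ℝ => r * (c * r - b)) atTop atTop :=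
      tendsto_id.atTop_mul_atTop₀ ((tendsto_id.const_mul_atTop hc).atTop_add tendsto_const_nhds)
    exact (this.atTop_add (tendsto_const_nhds (x := a))).congr fun r => by ring
  have hdist := (hq.comp (tendsto_dist_right_cocompact_atTop x₀)).eventually_ge_atTop K
  filter_upwards [hdist.filter_mono inf_le_left, mem_inf_of_right (mem_principal_self s)]
    with u hu hus
  simp only [Function.comp_apply, dist_eq_norm] at hu
  exact hu.trans (hf u hus)

theorem prox_operation_lemma_general
    {E : Type*} [NormedAddCommGroup E] [NormedSpace ℝ E] [FiniteDimensional ℝ E]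
    (Q : Set E) (hQcl : IsClosed Q)
    (σ : ℝ) (hσ : 0 < σ)
    (d : E → ℝ) (d' : E → E →L[ℝ] ℝ)
    (hd_diff : ∀ y ∈ Q, HasFDerivWithinAt d (d' y) Q y)
    (x₀ : E) (hx₀Q : x₀ ∈ Q)
    (hBreg : ∀ w ∈ Q, ∀ u ∈ Q, σ / 2 * ‖u - w‖ ^ 2 ≤ d u - d w - d' w (u - w))
    (h : E → ℝ) (hh_cv : ConvexOn ℝ Q h) (hh_lsc : LowerSemicontinuousOn h Q)
    (β : ℝ) (hβ : 0 < β) :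
    ∃ zs ∈ Q, (∀ u ∈ Q, h zs + β * d zs ≤ h u + β * d u) ∧
      (∀ w ∈ Q, (∀ u ∈ Q, h w + β * d w ≤ h u + β * d u) → w = zs) ∧
      (∀ u ∈ Q, h zs + β * d zs + β * (d u - d zs - d' zs (u - zs)) ≤ h u + β * d u) := by
  have hψ_lsc : LowerSemicontinuousOn (fun u => h u + β * d u) Q :=
    hh_lsc.add (ContinuousOn.const_smul (fun y hy => (hd_diff y hy).continuousWithinAt) β
      |>.lowerSemicontinuousOn)
  obtain ⟨a, b, hab⟩ := hh_cv.exists_sub_mul_norm_le hQcl hh_lsc hx₀Q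
  have hψ_growth : ∀ u ∈ Q, (a + β * d x₀) - (b + β * ‖d' x₀‖) * ‖u - x₀‖
      + β * σ / 2 * ‖u - x₀‖ ^ 2 ≤ h u + β * d u := fun u hu => by
    have := neg_le_of_abs_le ((d' x₀).le_opNorm (u - x₀))
    nlinarith [hab u hu, hBreg x₀ hx₀Q u hu]
  obtain ⟨zs, hzsQ, hzs_min⟩ := hψ_lsc.exists_isMinOn' hQcl hx₀Q
    (eventually_le_of_quadratic_growth (by positivity) hψ_growth _)
  have hthree (u) (hu : u ∈ Q) :
      h zs + β * d zs + β * (d u - d zs - d' zs (u - zs)) ≤ h u + β * d u := by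
    have := hzs_min.le_add_fderiv_of_convexOn hh_cv ((hd_diff zs hzsQ).const_mul β) hzsQ hu
    simp only [FunLike.coe_smul, Pi.smul_apply, smul_eq_mul] at this
    linarith
  refine ⟨zs, hzsQ, hzs_min, fun w hw hw_min => ?_, hthree⟩
  have : ‖w - zs‖ ^ 2 ≤ 0 := by
    nlinarith [hthree w hw, hw_min zs hzsQ, hBreg zs hzsQ w hw, mul_pos hβ hσ]
  simpa [sub_eq_zero] using this

/-- Lemma 3.1 (prox-operation): existence/uniqueness of the minimizer of
`h + β d` over `Q`, together with the three-point inequality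
`ψ(x) ≥ ψ(z*) + β ξ(z*, x)` where `ξ(z, x) = d x - d z - ⟪∇d z, x - z⟫`. -/
theorem prox_operation_lemma
    {E : Type*} [NormedAddCommGroup E] [NormedSpace ℝ E] [FiniteDimensional ℝ E]
    (Q : Set E) (hQne : Q.Nonempty) (hQcl : IsClosed Q) (hQcv : Convex ℝ Q)
    (σ : ℝ) (hσ : 0 < σ)
    (d : E → ℝ) (d' : E → E →L[ℝ] ℝ)
    (hd_sc : StrongConvexOn Q σ d)
    (hd_diff : ∀ y ∈ Q, HasFDerivWithinAt d (d' y) Q y)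
    (x₀ : E) (hx₀Q : x₀ ∈ Q) (hdx₀ : d x₀ = 0) (hd_nonneg : ∀ u ∈ Q, 0 ≤ d u)
    (hBreg : ∀ w ∈ Q, ∀ u ∈ Q, σ / 2 * ‖u - w‖ ^ 2 ≤ d u - d w - d' w (u - w))
    (h : E → ℝ) (hh_cv : ConvexOn ℝ Q h) (hh_lsc : LowerSemicontinuousOn h Q)
    (β : ℝ) (hβ : 0 < β) :
    ∃ zs ∈ Q, (∀ u ∈ Q, h zs + β * d zs ≤ h u + β * d u) ∧
      (∀ w ∈ Q, (∀ u ∈ Q, h w + β * d w ≤ h u + β * d u) → w = zs) ∧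
      (∀ u ∈ Q, h zs + β * d zs + β * (d u - d zs - d' zs (u - zs)) ≤ h u + β * d u) :=
  prox_operation_lemma_general Q hQcl σ hσ d d' hd_diff x₀ hx₀Q hBreg h hh_cv hh_lsc β hβ
end

section
/- Let ψ_{−1}(x) := β_{−1} d(x), and for each k ≥ −1 let ψ_{k+1} be defined either by the extended mirror-descent model ψ_{k+1}(x) := min_{z∈Q} ψ_k(z) + λ_{k+1} l_f(x_{k+1}; x) + β_{k+1} d(x) − β_k l_d(z_k; x), or by the dual-averaging model ψ_{k+1}(x) := ψ_k(x) + λ_{k+1} l_f(x_{k+1}; x) + β_{k+1} d(x) − β_k d(x), where z_k := argmin_{x∈Q} ψ_k(x). Then the resulting sequence {ψ_k} satisfies: (i) min_{x∈Q} ψ_{−1}(x) = 0 and z_{−1} = x_0; (ii) for every k ≥ −1 and all x ∈ Q, ψ_{k+1}(x) ≥ min_{z∈Q} ψ_k(z) + λ_{k+1} l_f(x_{k+1}; x) + β_{k+1} d(x) − β_k l_d(z_k; x); and (iii) for every k ≥ 0, min_{x∈Q} ψ_k(x) ≤ min_{x∈Q} { Σ_{i=0}^k λ_i l_f(x_i;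 x) + β_k l_d(z_k; x) }. -/
open Filter Topology Set

lemma keyA_aux {E : Type*} [NormedAddCommGroup E] [NormedSpace ℝ E]
    {Q : Set E} (hQcv : Convex ℝ Q)
    {d : E → ℝ} {d' : E → E →L[ℝ] ℝ} {β : ℝ} (hβ : 0 < β)
    {g : E → ℝ} (hg : ConvexOn ℝ Q g)
    {z : E} (hz : z ∈ Q) (hdz : HasFDerivWithinAt d (d' z) Q z)
    (hmin : ∀ u ∈ Q, g z + β * d z ≤ g u + β * d u)
    {u : E} (hu : u ∈ Q) :
    g z - g u ≤ β * d' z (u - z) := by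
  set c : ℝ → E := fun t => z + t • (u - z) with hc
  have hmaps : Set.MapsTo c (Icc (0:ℝ) 1) Q := by
    intro t ht
    have : c t = (1 - t) • z + t • u := by
      simp only [c]
      rw [smul_sub, sub_smul, one_smul]
      abel
    rw [this]
    exact hQcv hz hu (by linarith [ht.2]) ht.1 (by ring)
  have hc0 : c 0 = z := by simp [c]
  have hder : HasDerivWithinAt c (u - z) (Icc (0:ℝ) 1) 0 := by
    have : HasDerivAt c (u - z) 0 := by
      have h1 : HasDerivAt (fun t : ℝ => t • (u - z)) ((1:ℝ) • (u - z)) 0 :=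
        (hasDerivAt_id (0:ℝ)).smul_const (u - z)
      simpa [c, one_smul] using h1.const_add z
    exact this.hasDerivWithinAt
  have hφ : HasDerivWithinAt (fun t => β * d (c t)) (β * d' z (u - z)) (Icc (0:ℝ) 1) 0 := by
    have hdz' : HasFDerivWithinAt d (d' z) Q (c 0) := hc0.symm ▸ hdz
    have := (hdz'.comp_hasDerivWithinAt 0 hder hmaps)
    have h2 := this.const_mul β
    simpa [hc0, Function.comp] using h2
  -- the key inequality on slopes
  have hineq : ∀ t ∈ Ioc (0:ℝ) 1, g z - g u ≤ slope (fun t => β * d (c t)) 0 t := by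
    intro t ht
    have hctQ : c t ∈ Q := hmaps ⟨ht.1.le, ht.2⟩
    have hcomb : g (c t) ≤ (1 - t) * g z + t * g u := by
      have : c t = (1 - t) • z + t • u := by
        simp only [c]; rw [smul_sub, sub_smul, one_smul]; abel
      rw [this]
      exact hg.2 hz hu (by linarith [ht.2]) ht.1.le (by ring)
    have hmin' := hmin (c t) hctQ
    have hkey : t * (g z - g u) ≤ β * (d (c t) - d z) := by nlinarith
    have hslope : slope (fun t => β * d (c t)) 0 t = (β * d (c t) - β * d (c 0)) / t := by
      simp [slope_def_field]
    rw [hslope, hc0, le_div_iff₀ ht.1]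
    nlinarith
  have hdiff : (Icc (0:ℝ) 1) \ {0} = Ioc (0:ℝ) 1 := by
    ext t; simp only [Set.mem_diff, Set.mem_Icc, Set.mem_singleton_iff, Set.mem_Ioc]
    constructor
    · rintro ⟨⟨h0, h1⟩, hne⟩; exact ⟨lt_of_le_of_ne h0 (Ne.symm hne), h1⟩
    · rintro ⟨h0, h1⟩; exact ⟨⟨h0.le, h1⟩, h0.ne'⟩
  have htend : Tendsto (slope (fun t => β * d (c t)) 0) (𝓝[Ioc (0:ℝ) 1] 0)
      (𝓝 (β * d' z (u - z))) := by
    have := hasDerivWithinAt_iff_tendsto_slope.1 hφ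
    rwa [hdiff] at this
  have hNe : (𝓝[Ioc (0:ℝ) 1] (0:ℝ)).NeBot := by
    rw [← mem_closure_iff_nhdsWithin_neBot, closure_Ioc (by norm_num : (0:ℝ) ≠ 1)]
    exact ⟨le_refl 0, by norm_num⟩
  exact ge_of_tendsto htend (eventually_nhdsWithin_of_forall (fun t ht => hineq t ht))

/-- Proposition 3.1: any sequence of auxiliary functions built from
`ψ₋₁ = β₋₁ d` by arbitrary choices of the extended mirror-descent update or the
dual-averaging update satisfies Property 1.  (Indices are shifted by one:
`ψ n`, `z n`, `β n` stand for the paper's `ψ_{n-1}`, `z_{n-1}`, `β_{n-1}`.) -/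
theorem auxiliary_functions_admit_property
    {E : Type*} [NormedAddCommGroup E] [NormedSpace ℝ E] [FiniteDimensional ℝ E]
    (Q : Set E) (hQne : Q.Nonempty) (hQcl : IsClosed Q) (hQcv : Convex ℝ Q)
    (f : E → ℝ) (hf_cv : ConvexOn ℝ Q f) (hf_lsc : LowerSemicontinuousOn f Q)
    (σ : ℝ) (hσ : 0 < σ)
    (d : E → ℝ) (d' : E → E →L[ℝ] ℝ)
    (hd_sc : StrongConvexOn Q σ d)
    (hd_diff : ∀ y ∈ Q, HasFDerivWithinAt d (d' y) Q y)
    (x₀ : E) (hx₀Q : x₀ ∈ Q) (hdx₀ : d x₀ = 0) (hd_nonneg : ∀ u ∈ Q, 0 ≤ d u)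
    (hBreg : ∀ w ∈ Q, ∀ u ∈ Q, σ / 2 * ‖u - w‖ ^ 2 ≤ d u - d w - d' w (u - w))
    (lam : ℕ → ℝ) (hlam : ∀ k, 0 < lam k)
    (β : ℕ → ℝ) (hβ0 : 0 < β 0) (hβmono : ∀ k, β k ≤ β (k + 1))
    (x : ℕ → E) (hxQ : ∀ k, x k ∈ Q)
    (ψ : ℕ → E → ℝ) (z : ℕ → E)
    (hzQ : ∀ n, z n ∈ Q) (hzmin : ∀ n, ∀ u ∈ Q, ψ n (z n) ≤ ψ n u)
    (lf : E → E → ℝ)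
    (hlf_cv : ∀ y ∈ Q, ConvexOn ℝ Q (lf y))
    (hlf_lsc : ∀ y ∈ Q, LowerSemicontinuousOn (lf y) Q)
    (hlf_le : ∀ y ∈ Q, ∀ u ∈ Q, lf y u ≤ f u)
    (hψ0 : ∀ u : E, ψ 0 u = β 0 * d u)
    (hstep : ∀ n : ℕ,
      (∀ u : E, ψ (n + 1) u = ψ n (z n) + lam n * lf (x n) u + β (n + 1) * d u
        - β n * (d (z n) + d' (z n) (u - z n)))
      ∨ (∀ u : E, ψ (n + 1) u = ψ n u + lam n * lf (x n) u + β (n + 1) * d u - β n * d u)) :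
    (ψ 0 (z 0) = 0 ∧ z 0 = x₀)
    ∧ (∀ n : ℕ, ∀ u ∈ Q,
        ψ n (z n) + lam n * lf (x n) u + β (n + 1) * d u
          - β n * (d (z n) + d' (z n) (u - z n)) ≤ ψ (n + 1) u)
    ∧ (∀ k : ℕ, ∀ u ∈ Q,
        ψ (k + 1) (z (k + 1)) ≤ (∑ i ∈ Finset.range (k + 1), lam i * lf (x i) u)
          + β (k + 1) * (d (z (k + 1)) + d' (z (k + 1)) (u - z (k + 1)))) := by
  have hβpos : ∀ n, 0 < β n := by
    intro n; induction n with
    | zero => exact hβ0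
    | succ k ih => exact ih.trans_le (hβmono k)
  -- structural invariant
  have Inv : ∀ n : ℕ,
      (∃ g : E → ℝ, ConvexOn ℝ Q g ∧ ∀ u ∈ Q, ψ n u = g u + β n * d u)
      ∧ (∀ u ∈ Q, ψ n u ≤ (∑ i ∈ Finset.range n, lam i * lf (x i) u) + β n * d u) := by
    intro n
    -- helper: from representation, get lower bound (P n)
    induction n with
    | zero =>
      refine ⟨⟨fun _ => 0, ⟨hQcv, fun _ _ _ _ _ _ _ _ _ => by simp⟩, fun u _ => by
        simp [hψ0 u]⟩, fun u _ => by simp [hψ0 u]⟩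
    | succ n ih =>
      obtain ⟨⟨g, hgcv, hgrep⟩, hU⟩ := ih
      -- P n : lower bound for ψ n
      have hP : ∀ u ∈ Q, ψ n (z n) + β n * (d u - d (z n) - d' (z n) (u - z n)) ≤ ψ n u := by
        intro u hu
        have hmin : ∀ v ∈ Q, g (z n) + β n * d (z n) ≤ g v + β n * d v := by
          intro v hv
          have := hzmin n v hv
          rwa [hgrep (z n) (hzQ n), hgrep v hv] at this
        have hkey := keyA_aux hQcv (hβpos n) hgcv (hzQ n) (hd_diff (z n) (hzQ n)) hmin hu
        have h1 := hgrep u hu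
        have h2 := hgrep (z n) (hzQ n)
        nlinarith
      -- C n : upper bound for ψ n (z n)
      have hC : ∀ u ∈ Q, ψ n (z n) ≤ (∑ i ∈ Finset.range n, lam i * lf (x i) u)
          + β n * (d (z n) + d' (z n) (u - z n)) := by
        intro u hu
        have h1 := hP u hu
        have h2 := hU u hu
        nlinarith
      rcases hstep n with hMD | hDA
      · refine ⟨⟨fun u => (lam n * lf (x n) u) + (ψ n (z n)
            - β n * (d (z n) + d' (z n) (u - z n))), ?_, fun u _ => by rw [hMD u]; ring⟩,
          fun u hu => ?_⟩
        · -- convexity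
          have haff : ConvexOn ℝ Q (fun u => ψ n (z n)
              - β n * (d (z n) + d' (z n) (u - z n))) := by
            refine ⟨hQcv, fun p hp q hq a b ha hb hab => le_of_eq ?_⟩
            have hlin : (d' (z n)) (a • p + b • q - z n)
                = a * d' (z n) (p - z n) + b * d' (z n) (q - z n) := by
              have harg : a • p + b • q - z n = a • (p - z n) + b • (q - z n) := by
                have h2 : a • (p - z n) + b • (q - z n)
                    = a • p + b • q - (a + b) • z n := by
                  rw [smul_sub, smul_sub, add_smul]; abel
                rw [h2, hab, one_smul]
              rw [harg, map_add, map_smul, map_smul]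
              simp [smul_eq_mul]
            simp only [smul_eq_mul]
            rw [hlin]
            linear_combination (β n * d (z n) - ψ n (z n)) * hab
          have hcv2 : ConvexOn ℝ Q (fun u => lam n * lf (x n) u) :=
            (hlf_cv (x n) (hxQ n)).smul (hlam n).le
          exact hcv2.add haff
        · rw [hMD u]
          have h1 := hC u hu
          rw [Finset.sum_range_succ]
          nlinarith
      · refine ⟨⟨fun u => g u + lam n * lf (x n) u, ?_, fun u hu => by
            rw [hDA u, hgrep u hu]; ring⟩, fun u hu => ?_⟩
        · exact hgcv.add ((hlf_cv (x n) (hxQ n)).smul (hlam n).le)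
        · rw [hDA u]
          have h1 := hU u hu
          rw [Finset.sum_range_succ]
          nlinarith [hβmono n, hd_nonneg u hu]
  -- P for all n
  have hP : ∀ n, ∀ u ∈ Q, ψ n (z n) + β n * (d u - d (z n) - d' (z n) (u - z n)) ≤ ψ n u := by
    intro n u hu
    obtain ⟨⟨g, hgcv, hgrep⟩, _⟩ := Inv n
    have hmin : ∀ v ∈ Q, g (z n) + β n * d (z n) ≤ g v + β n * d v := by
      intro v hv
      have := hzmin n v hv
      rwa [hgrep (z n) (hzQ n), hgrep v hv] at this
    have hkey := keyA_aux hQcv (hβpos n) hgcv (hzQ n) (hd_diff (z n) (hzQ n)) hmin hu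
    have h1 := hgrep u hu
    have h2 := hgrep (z n) (hzQ n)
    nlinarith
  have hC : ∀ n, ∀ u ∈ Q, ψ n (z n) ≤ (∑ i ∈ Finset.range n, lam i * lf (x i) u)
      + β n * (d (z n) + d' (z n) (u - z n)) := by
    intro n u hu
    have h1 := hP n u hu
    have h2 := (Inv n).2 u hu
    nlinarith
  -- part (i)
  have hdz0 : d (z 0) = 0 := by
    have h1 : ψ 0 (z 0) ≤ ψ 0 x₀ := hzmin 0 x₀ hx₀Q
    rw [hψ0, hψ0, hdx₀] at h1
    have h2 := hd_nonneg (z 0) (hzQ 0)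
    nlinarith [hβ0]
  have hψ00 : ψ 0 (z 0) = 0 := by rw [hψ0, hdz0, mul_zero]
  have hz0 : z 0 = x₀ := by
    have hder0 : 0 ≤ β 0 * d' (z 0) (x₀ - z 0) := by
      have hmin : ∀ v ∈ Q, (0:ℝ) + β 0 * d (z 0) ≤ 0 + β 0 * d v := by
        intro v hv
        have := hzmin 0 v hv
        rw [hψ0, hψ0] at this
        linarith
      have := keyA_aux (g := fun _ => (0:ℝ)) hQcv hβ0
        ⟨hQcv, fun _ _ _ _ _ _ _ _ _ => by simp⟩ (hzQ 0)
        (hd_diff (z 0) (hzQ 0)) hmin hx₀Q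
      simpa using this
    have hB := hBreg (z 0) (hzQ 0) x₀ hx₀Q
    rw [hdx₀, hdz0] at hB
    have hD : 0 ≤ d' (z 0) (x₀ - z 0) := by nlinarith [hβ0]
    have : ‖x₀ - z 0‖ ^ 2 ≤ 0 := by nlinarith [hσ, sq_nonneg ‖x₀ - z 0‖]
    have : ‖x₀ - z 0‖ = 0 := by nlinarith [norm_nonneg (x₀ - z 0)]
    have := norm_eq_zero.1 this
    have := sub_eq_zero.1 this
    exact this.symm
  refine ⟨⟨hψ00, hz0⟩, fun n u hu => ?_, fun k u hu => hC (k + 1) u hu⟩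
  rcases hstep n with hMD | hDA
  · rw [hMD u]
  · rw [hDA u]
    have := hP n u hu
    nlinarith
end

section
/- Let {ψ_k} be a sequence of auxiliary functions satisfying Property 1 associated with weight parameters {λ_k}, scaling parameters {β_k}, test points {x_k} ⊆ Q, and a lower convex approximation l_f(y; x) of f. If a point x̂_k ∈ Q satisfies the relation (R_k): S_k f(x̂_k) ≤ min_{x∈Q} ψ_k(x) + C_k for some k ≥ 0 and some constant C_k, then f(x̂_k) − f(x*) ≤ (β_k l_d(z_k; x*) + C_k)/S_k, where z_k := argmin_{x∈Q} ψ_k(x). -/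
/-- Lemma 3.2 (gen-bound): under Property 1, if `(R_k) : S_k f(x̂_k) ≤ min_Q ψ_k + C_k`
holds, then `f(x̂_k) - f(x*) ≤ (β_k l_d(z_k; x*) + C_k) / S_k`.
(Indices shifted: `ψ (k+1)`, `z (k+1)`, `β (k+1)` are the paper's `ψ_k`, `z_k`, `β_k`.) -/
theorem gen_bound
    {E : Type*} [NormedAddCommGroup E] [NormedSpace ℝ E] [FiniteDimensional ℝ E]
    (Q : Set E) (hQne : Q.Nonempty) (hQcl : IsClosed Q) (hQcv : Convex ℝ Q)
    (f : E → ℝ) (hf_cv : ConvexOn ℝ Q f) (hf_lsc : LowerSemicontinuousOn f Q)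
    (σ : ℝ) (hσ : 0 < σ)
    (d : E → ℝ) (d' : E → E →L[ℝ] ℝ)
    (hd_sc : StrongConvexOn Q σ d)
    (hd_diff : ∀ y ∈ Q, HasFDerivWithinAt d (d' y) Q y)
    (x₀ : E) (hx₀Q : x₀ ∈ Q) (hdx₀ : d x₀ = 0) (hd_nonneg : ∀ u ∈ Q, 0 ≤ d u)
    (hBreg : ∀ w ∈ Q, ∀ u ∈ Q, σ / 2 * ‖u - w‖ ^ 2 ≤ d u - d w - d' w (u - w))
    (lam : ℕ → ℝ) (hlam : ∀ k, 0 < lam k)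
    (β : ℕ → ℝ) (hβ0 : 0 < β 0) (hβmono : ∀ k, β k ≤ β (k + 1))
    (x : ℕ → E) (hxQ : ∀ k, x k ∈ Q)
    (ψ : ℕ → E → ℝ) (z : ℕ → E)
    (hzQ : ∀ n, z n ∈ Q) (hzmin : ∀ n, ∀ u ∈ Q, ψ n (z n) ≤ ψ n u)
    (lf : E → E → ℝ)
    (hlf_cv : ∀ y ∈ Q, ConvexOn ℝ Q (lf y))
    (hlf_lsc : ∀ y ∈ Q, LowerSemicontinuousOn (lf y) Q)
    (hlf_le : ∀ y ∈ Q, ∀ u ∈ Q, lf y u ≤ f u)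
    (hP1a : ψ 0 (z 0) = 0) (hP1b : z 0 = x₀)
    (hP2 : ∀ n : ℕ, ∀ u ∈ Q,
      ψ n (z n) + lam n * lf (x n) u + β (n + 1) * d u
        - β n * (d (z n) + d' (z n) (u - z n)) ≤ ψ (n + 1) u)
    (hP3 : ∀ k : ℕ, ∀ u ∈ Q,
      ψ (k + 1) (z (k + 1)) ≤ (∑ i ∈ Finset.range (k + 1), lam i * lf (x i) u)
        + β (k + 1) * (d (z (k + 1)) + d' (z (k + 1)) (u - z (k + 1))))
    (xs : E) (hxsQ : xs ∈ Q) (hxs_opt : ∀ u ∈ Q, f xs ≤ f u)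
    (k : ℕ) (xhat : E) (hxhatQ : xhat ∈ Q) (C : ℝ)
    (hRk : (∑ i ∈ Finset.range (k + 1), lam i) * f xhat ≤ ψ (k + 1) (z (k + 1)) + C) :
    f xhat - f xs ≤
      (β (k + 1) * (d (z (k + 1)) + d' (z (k + 1)) (xs - z (k + 1))) + C) / (∑ i ∈ Finset.range (k + 1), lam i) := by
  have hS : 0 < ∑ i ∈ Finset.range (k + 1), lam i :=
    Finset.sum_pos (fun i _ => hlam i) (by simp)
  rw [le_div_iff₀ hS]
  have h3 := hP3 k xs hxsQ
  have hsum : (∑ i ∈ Finset.range (k + 1), lam i * lf (x i) xs)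
      ≤ (∑ i ∈ Finset.range (k + 1), lam i) * f xs := by
    rw [Finset.sum_mul]
    exact Finset.sum_le_sum fun i _ =>
      mul_le_mul_of_nonneg_left (hlf_le (x i) (hxQ i) xs hxsQ) (hlam i).le
  nlinarith
end

section
/- Let {ψ_k} be a sequence of auxiliary functions satisfying Property 1 associated with weight parameters {λ_k}, scaling parameters {β_k}, test points {x_k} ⊆ Q, and a lower convex approximation l_f(y; x) of f. If for some k ≥ 0 and constant C_k the relation (Ĥ_k): Σ_{i=0}^k λ_i f(x_i) ≤ min_{x∈Q} ψ_k(x) + C_k holds, then (1/S_k) Σ_{i=0}^k λ_i f(x_i) − f(x*) ≤ (β_k l_d(z_k; x*) + C_k)/S_k, where z_k := argmin_{x∈Q} ψ_k(x). -/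
/-- Alternative of Lemma 3.2 for the relation `(Ĥ_k) : Σ λ_i f(x_i) ≤ min_Q ψ_k + C_k`.
(Indices shifted: `ψ (k+1)`, `z (k+1)`, `β (k+1)` are the paper's `ψ_k`, `z_k`, `β_k`.) -/
theorem gen_bound_alt
    {E : Type*} [NormedAddCommGroup E] [NormedSpace ℝ E] [FiniteDimensional ℝ E]
    (Q : Set E) (hQne : Q.Nonempty) (hQcl : IsClosed Q) (hQcv : Convex ℝ Q)
    (f : E → ℝ) (hf_cv : ConvexOn ℝ Q f) (hf_lsc : LowerSemicontinuousOn f Q)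
    (σ : ℝ) (hσ : 0 < σ)
    (d : E → ℝ) (d' : E → E →L[ℝ] ℝ)
    (hd_sc : StrongConvexOn Q σ d)
    (hd_diff : ∀ y ∈ Q, HasFDerivWithinAt d (d' y) Q y)
    (x₀ : E) (hx₀Q : x₀ ∈ Q) (hdx₀ : d x₀ = 0) (hd_nonneg : ∀ u ∈ Q, 0 ≤ d u)
    (hBreg : ∀ w ∈ Q, ∀ u ∈ Q, σ / 2 * ‖u - w‖ ^ 2 ≤ d u - d w - d' w (u - w))
    (lam : ℕ → ℝ) (hlam : ∀ k, 0 < lam k)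
    (β : ℕ → ℝ) (hβ0 : 0 < β 0) (hβmono : ∀ k, β k ≤ β (k + 1))
    (x : ℕ → E) (hxQ : ∀ k, x k ∈ Q)
    (ψ : ℕ → E → ℝ) (z : ℕ → E)
    (hzQ : ∀ n, z n ∈ Q) (hzmin : ∀ n, ∀ u ∈ Q, ψ n (z n) ≤ ψ n u)
    (lf : E → E → ℝ)
    (hlf_cv : ∀ y ∈ Q, ConvexOn ℝ Q (lf y))
    (hlf_lsc : ∀ y ∈ Q, LowerSemicontinuousOn (lf y) Q)
    (hlf_le : ∀ y ∈ Q, ∀ u ∈ Q, lf y u ≤ f u)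
    (hP1a : ψ 0 (z 0) = 0) (hP1b : z 0 = x₀)
    (hP2 : ∀ n : ℕ, ∀ u ∈ Q,
      ψ n (z n) + lam n * lf (x n) u + β (n + 1) * d u
        - β n * (d (z n) + d' (z n) (u - z n)) ≤ ψ (n + 1) u)
    (hP3 : ∀ k : ℕ, ∀ u ∈ Q,
      ψ (k + 1) (z (k + 1)) ≤ (∑ i ∈ Finset.range (k + 1), lam i * lf (x i) u)
        + β (k + 1) * (d (z (k + 1)) + d' (z (k + 1)) (u - z (k + 1))))
    (xs : E) (hxsQ : xs ∈ Q) (hxs_opt : ∀ u ∈ Q, f xs ≤ f u)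
    (k : ℕ) (C : ℝ)
    (hRhat : (∑ i ∈ Finset.range (k + 1), lam i * f (x i)) ≤ ψ (k + 1) (z (k + 1)) + C) :
    (∑ i ∈ Finset.range (k + 1), lam i)⁻¹ * (∑ i ∈ Finset.range (k + 1), lam i * f (x i)) - f xs ≤
      (β (k + 1) * (d (z (k + 1)) + d' (z (k + 1)) (xs - z (k + 1))) + C) / (∑ i ∈ Finset.range (k + 1), lam i) := by
  set S := ∑ i ∈ Finset.range (k + 1), lam i with hS
  have hSpos : 0 < S := Finset.sum_pos (fun i _ => hlam i) ⟨0, Finset.mem_range.mpr (Nat.succ_pos k)⟩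
  have h1 : (∑ i ∈ Finset.range (k + 1), lam i * lf (x i) xs) ≤ S * f xs := by
    rw [hS, Finset.sum_mul]
    apply Finset.sum_le_sum
    intro i _
    have := hlf_le (x i) (hxQ i) xs hxsQ
    have hfx : f xs ≤ f xs := le_refl _
    nlinarith [hlam i, hlf_le (x i) (hxQ i) xs hxsQ]
  have h2 := hP3 k xs hxsQ
  have key : (∑ i ∈ Finset.range (k + 1), lam i * f (x i))
      ≤ S * f xs + (β (k + 1) * (d (z (k + 1)) + d' (z (k + 1)) (xs - z (k + 1))) + C) := by
    linarith
  rw [div_eq_inv_mul]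
  have := mul_le_mul_of_nonneg_left key (le_of_lt (inv_pos.mpr hSpos))
  rw [mul_add, inv_mul_cancel_left₀ (ne_of_gt hSpos)] at this
  linarith
end

section
/- Let {ψ_k} satisfy Property 1 with the lower convex approximation l_f(y; x) := f(y) + ⟨g(y), x − y⟩, z_k := argmin_{x∈Q} ψ_k(x), g_i := g(x_i), and C_k := (1/(2σ)) Σ_{i=0}^k (λ_i²/β_{i−1}) ‖g_i‖_*². Suppose the relation (R_k): S_k f(x̂_k) ≤ min_{x∈Q} ψ_k(x) + C_k holds for some k ≥ 0 and that x_{k+1} = z_k. Then (R_{k+1}) holds with x̂_{k+1} := (S_k x̂_k + λ_{k+1} x_{k+1})/S_{k+1}. Moreover, if the relation (Ĥ_k): Σ_{i=0}^k λ_i f(x_i) ≤ min_{x∈Q} ψ_k(x) + C_k holds and x_{k+1} = z_k, then (Ĥ_{k+1}) holds. -/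
private lemma aux_quad (a b s t : ℝ) (hb : 0 < b) (hs : 0 < s) (ht : 0 ≤ t) :
    -(a ^ 2 / b / (2 * s)) ≤ b * s / 2 * t ^ 2 - a * t := by
  rw [div_div]
  have h : a * t - b * s / 2 * t ^ 2 ≤ a ^ 2 / (b * (2 * s)) := by
    rw [le_div_iff₀ (by positivity)]
    nlinarith [sq_nonneg (b * s * t - a)]
  linarith

/-- Theorem 4.1 (b): if `(R_k)` holds and `x_{k+1} = z_k`, then `(R_{k+1})` holds with
`x̂_{k+1} := (S_k x̂_k + λ_{k+1} x_{k+1}) / S_{k+1}`; similarly `(Ĥ_k)` implies `(Ĥ_{k+1})`.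
(Indices shifted: `ψ (k+1)`, `z (k+1)`, `β (k+1)` are the paper's `ψ_k`, `z_k`, `β_k`.) -/
theorem estrel_nonsmooth_step
    {E : Type*} [NormedAddCommGroup E] [NormedSpace ℝ E] [FiniteDimensional ℝ E]
    (Q : Set E) (hQne : Q.Nonempty) (hQcl : IsClosed Q) (hQcv : Convex ℝ Q)
    (f : E → ℝ) (hf_cv : ConvexOn ℝ Q f) (hf_lsc : LowerSemicontinuousOn f Q)
    (σ : ℝ) (hσ : 0 < σ)
    (d : E → ℝ) (d' : E → E →L[ℝ] ℝ)
    (hd_sc : StrongConvexOn Q σ d)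
    (hd_diff : ∀ y ∈ Q, HasFDerivWithinAt d (d' y) Q y)
    (x₀ : E) (hx₀Q : x₀ ∈ Q) (hdx₀ : d x₀ = 0) (hd_nonneg : ∀ u ∈ Q, 0 ≤ d u)
    (hBreg : ∀ w ∈ Q, ∀ u ∈ Q, σ / 2 * ‖u - w‖ ^ 2 ≤ d u - d w - d' w (u - w))
    (lam : ℕ → ℝ) (hlam : ∀ k, 0 < lam k)
    (β : ℕ → ℝ) (hβ0 : 0 < β 0) (hβmono : ∀ k, β k ≤ β (k + 1))
    (x : ℕ → E) (hxQ : ∀ k, x k ∈ Q)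
    (ψ : ℕ → E → ℝ) (z : ℕ → E)
    (hzQ : ∀ n, z n ∈ Q) (hzmin : ∀ n, ∀ u ∈ Q, ψ n (z n) ≤ ψ n u)
    (g : ℕ → E →L[ℝ] ℝ) (hg : ∀ k, ∀ y : E, f (x k) + g k (y - x k) ≤ f y)
    (hP1a : ψ 0 (z 0) = 0) (hP1b : z 0 = x₀)
    (hP2 : ∀ n : ℕ, ∀ u ∈ Q,
      ψ n (z n) + lam n * (f (x n) + g n (u - x n)) + β (n + 1) * d u
        - β n * (d (z n) + d' (z n) (u - z n)) ≤ ψ (n + 1) u)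
    (hP3 : ∀ k : ℕ, ∀ u ∈ Q,
      ψ (k + 1) (z (k + 1)) ≤ (∑ i ∈ Finset.range (k + 1), lam i * (f (x i) + g i (u - x i)))
        + β (k + 1) * (d (z (k + 1)) + d' (z (k + 1)) (u - z (k + 1))))
    (k : ℕ) (xhat : E) (hxhatQ : xhat ∈ Q)
    (hx : x (k + 1) = z (k + 1)) :
    ((∑ i ∈ Finset.range (k + 1), lam i) * f xhat ≤ ψ (k + 1) (z (k + 1)) + (1 / (2 * σ) * ∑ i ∈ Finset.range (k + 1), (lam i) ^ 2 / β i * ‖g i‖ ^ 2) →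
      (∑ i ∈ Finset.range (k + 2), lam i) * f ((∑ i ∈ Finset.range (k + 2), lam i)⁻¹ •
          ((∑ i ∈ Finset.range (k + 1), lam i) • xhat + lam (k + 1) • x (k + 1)))
        ≤ ψ (k + 2) (z (k + 2)) + (1 / (2 * σ) * ∑ i ∈ Finset.range (k + 2), (lam i) ^ 2 / β i * ‖g i‖ ^ 2))
    ∧ ((∑ i ∈ Finset.range (k + 1), lam i * f (x i)) ≤ ψ (k + 1) (z (k + 1)) + (1 / (2 * σ) * ∑ i ∈ Finset.range (k + 1), (lam i) ^ 2 / β i * ‖g i‖ ^ 2) →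
      (∑ i ∈ Finset.range (k + 2), lam i * f (x i)) ≤ ψ (k + 2) (z (k + 2)) + (1 / (2 * σ) * ∑ i ∈ Finset.range (k + 2), (lam i) ^ 2 / β i * ‖g i‖ ^ 2)) := by
  have hβpos : ∀ n, 0 < β n := by
    intro n
    induction n with
    | zero => exact hβ0
    | succ m ih => exact ih.trans_le (hβmono m)
  have hzkQ := hzQ (k + 1)
  have huQ := hzQ (k + 2)
  set zk := z (k + 1) with hzk
  set u := z (k + 2) with hu
  -- Key: ψ(k+2)(z(k+2)) ≥ ψ(k+1)(z(k+1)) + λ f(x(k+1)) − λ²/β · ‖g‖²/(2σ)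
  have key : ψ (k + 1) zk + lam (k + 1) * f (x (k + 1))
      - (lam (k + 1)) ^ 2 / β (k + 1) * ‖g (k + 1)‖ ^ 2 / (2 * σ) ≤ ψ (k + 2) u := by
    have h2 := hP2 (k + 1) u huQ
    rw [hx] at h2
    have hb := hBreg zk hzkQ u huQ
    have hdn := hd_nonneg u huQ
    have hm := hβmono (k + 1)
    have hgv : -(‖g (k + 1)‖ * ‖u - zk‖) ≤ g (k + 1) (u - zk) := by
      have h1 := (g (k + 1)).le_opNorm (u - zk)
      rw [Real.norm_eq_abs] at h1
      exact neg_le_of_abs_le h1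
    have hquad := aux_quad (lam (k + 1) * ‖g (k + 1)‖) (β (k + 1)) σ ‖u - zk‖
      (hβpos (k + 1)) hσ (norm_nonneg _)
    have heq : (lam (k + 1) * ‖g (k + 1)‖) ^ 2 / β (k + 1) / (2 * σ)
        = (lam (k + 1)) ^ 2 / β (k + 1) * ‖g (k + 1)‖ ^ 2 / (2 * σ) := by ring
    rw [heq] at hquad
    rw [hx]
    have h2' : ψ (k + 1) zk + lam (k + 1) * (f zk + g (k + 1) (u - zk)) + β (k + 2) * d u
        - β (k + 1) * (d zk + d' zk (u - zk)) ≤ ψ (k + 2) u := h2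
    have hβd : β (k + 1) * d u ≤ β (k + 2) * d u :=
      mul_le_mul_of_nonneg_right hm hdn
    have hβb : β (k + 1) * (σ / 2 * ‖u - zk‖ ^ 2)
        ≤ β (k + 1) * (d u - d zk - d' zk (u - zk)) :=
      mul_le_mul_of_nonneg_left hb (hβpos (k + 1)).le
    have hlg : lam (k + 1) * -(‖g (k + 1)‖ * ‖u - zk‖) ≤ lam (k + 1) * g (k + 1) (u - zk) :=
      mul_le_mul_of_nonneg_left hgv (hlam (k + 1)).le
    linarith [h2', hβd, hβb, hlg, hquad]
  constructor
  · intro hR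
    set S := ∑ i ∈ Finset.range (k + 1), lam i with hS
    have hSpos : 0 < S := Finset.sum_pos (fun i _ => hlam i) ⟨0, by simp⟩
    have hS' : (∑ i ∈ Finset.range (k + 2), lam i) = S + lam (k + 1) := by
      rw [Finset.sum_range_succ]
    have hS'pos : 0 < S + lam (k + 1) := by linarith [hlam (k + 1)]
    have ha : 0 ≤ S / (S + lam (k + 1)) := div_nonneg hSpos.le hS'pos.le
    have hbb : 0 ≤ lam (k + 1) / (S + lam (k + 1)) := div_nonneg (hlam (k + 1)).le hS'pos.le
    have hab : S / (S + lam (k + 1)) + lam (k + 1) / (S + lam (k + 1)) = 1 := by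
      field_simp
    have hconv := hf_cv.2 hxhatQ (hxQ (k + 1)) ha hbb hab
    have hpt : (S + lam (k + 1))⁻¹ • (S • xhat + lam (k + 1) • x (k + 1))
        = (S / (S + lam (k + 1))) • xhat + (lam (k + 1) / (S + lam (k + 1))) • x (k + 1) := by
      rw [smul_add, smul_smul, smul_smul, div_eq_inv_mul, div_eq_inv_mul]
    rw [hS', hpt]
    have hmul : (S + lam (k + 1)) *
        (S / (S + lam (k + 1)) * f xhat + lam (k + 1) / (S + lam (k + 1)) * f (x (k + 1)))
        = S * f xhat + lam (k + 1) * f (x (k + 1)) := by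
      field_simp
    have h1 : (S + lam (k + 1)) * f ((S / (S + lam (k + 1))) • xhat
        + (lam (k + 1) / (S + lam (k + 1))) • x (k + 1))
        ≤ S * f xhat + lam (k + 1) * f (x (k + 1)) := by
      calc (S + lam (k + 1)) * f ((S / (S + lam (k + 1))) • xhat
            + (lam (k + 1) / (S + lam (k + 1))) • x (k + 1))
          ≤ (S + lam (k + 1)) * (S / (S + lam (k + 1)) * f xhat
            + lam (k + 1) / (S + lam (k + 1)) * f (x (k + 1))) :=
            mul_le_mul_of_nonneg_left hconv hS'pos.le
        _ = S * f xhat + lam (k + 1) * f (x (k + 1)) := hmul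
    rw [Finset.sum_range_succ (fun i => (lam i) ^ 2 / β i * ‖g i‖ ^ 2)]
    have : 1 / (2 * σ) * ((∑ i ∈ Finset.range (k + 1), (lam i) ^ 2 / β i * ‖g i‖ ^ 2)
        + (lam (k + 1)) ^ 2 / β (k + 1) * ‖g (k + 1)‖ ^ 2)
        = 1 / (2 * σ) * (∑ i ∈ Finset.range (k + 1), (lam i) ^ 2 / β i * ‖g i‖ ^ 2)
        + (lam (k + 1)) ^ 2 / β (k + 1) * ‖g (k + 1)‖ ^ 2 / (2 * σ) := by ring
    rw [this]
    linarith [h1, key, hR]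
  · intro hH
    rw [Finset.sum_range_succ (fun i => lam i * f (x i)),
      Finset.sum_range_succ (fun i => (lam i) ^ 2 / β i * ‖g i‖ ^ 2)]
    have : 1 / (2 * σ) * ((∑ i ∈ Finset.range (k + 1), (lam i) ^ 2 / β i * ‖g i‖ ^ 2)
        + (lam (k + 1)) ^ 2 / β (k + 1) * ‖g (k + 1)‖ ^ 2)
        = 1 / (2 * σ) * (∑ i ∈ Finset.range (k + 1), (lam i) ^ 2 / β i * ‖g i‖ ^ 2)
        + (lam (k + 1)) ^ 2 / β (k + 1) * ‖g (k + 1)‖ ^ 2 / (2 * σ) := by ring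
    rw [this]
    linarith [key, hH]
end

section
/- Let {ψ_k} satisfy Property 1 with the lower convex approximation l_f(y; x) := f(y) + ⟨g(y), x − y⟩, z_k := argmin_{x∈Q} ψ_k(x), g_i := g(x_i), and C_k := (1/(2σ)) Σ_{i=0}^k (λ_i²/β_{i−1}) ‖g_i‖_*². Suppose the relation (R_k): S_k f(x̂_k) ≤ min_{x∈Q} ψ_k(x) + C_k holds for some k ≥ 0 and that x_{k+1} = (S_k x̂_k + λ_{k+1} z_k)/S_{k+1}. Then the relation (R_{k+1}) is satisfied by setting x̂_{k+1} := x_{k+1}. -/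
lemma quad_bound_aux (σ B L a t : ℝ) (hσ : 0 < σ) (hB : 0 < B) :
    -(1 / (2 * σ) * (L ^ 2 / B * a ^ 2)) ≤ -(L * (a * t)) + B * (σ / 2 * t ^ 2) := by
  have hD : 1 / (2 * σ) * (L ^ 2 / B * a ^ 2) = L ^ 2 * a ^ 2 / (2 * σ * B) := by
    field_simp
  rw [hD, ← neg_div, div_le_iff₀ (by positivity : (0:ℝ) < 2 * σ * B)]
  nlinarith [sq_nonneg (σ * B * t - L * a)]

/-- Theorem 4.1 (b'): if `(R_k)` holds and `x_{k+1} = (S_k x̂_k + λ_{k+1} z_k)/S_{k+1}`,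
then `(R_{k+1})` holds with `x̂_{k+1} := x_{k+1}`.
(Indices shifted: `ψ (k+1)`, `z (k+1)`, `β (k+1)` are the paper's `ψ_k`, `z_k`, `β_k`.) -/
theorem estrel_nonsmooth_step_alt
    {E : Type*} [NormedAddCommGroup E] [NormedSpace ℝ E] [FiniteDimensional ℝ E]
    (Q : Set E) (hQne : Q.Nonempty) (hQcl : IsClosed Q) (hQcv : Convex ℝ Q)
    (f : E → ℝ) (hf_cv : ConvexOn ℝ Q f) (hf_lsc : LowerSemicontinuousOn f Q)
    (σ : ℝ) (hσ : 0 < σ)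
    (d : E → ℝ) (d' : E → E →L[ℝ] ℝ)
    (hd_sc : StrongConvexOn Q σ d)
    (hd_diff : ∀ y ∈ Q, HasFDerivWithinAt d (d' y) Q y)
    (x₀ : E) (hx₀Q : x₀ ∈ Q) (hdx₀ : d x₀ = 0) (hd_nonneg : ∀ u ∈ Q, 0 ≤ d u)
    (hBreg : ∀ w ∈ Q, ∀ u ∈ Q, σ / 2 * ‖u - w‖ ^ 2 ≤ d u - d w - d' w (u - w))
    (lam : ℕ → ℝ) (hlam : ∀ k, 0 < lam k)
    (β : ℕ → ℝ) (hβ0 : 0 < β 0) (hβmono : ∀ k, β k ≤ β (k + 1))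
    (x : ℕ → E) (hxQ : ∀ k, x k ∈ Q)
    (ψ : ℕ → E → ℝ) (z : ℕ → E)
    (hzQ : ∀ n, z n ∈ Q) (hzmin : ∀ n, ∀ u ∈ Q, ψ n (z n) ≤ ψ n u)
    (g : ℕ → E →L[ℝ] ℝ) (hg : ∀ k, ∀ y : E, f (x k) + g k (y - x k) ≤ f y)
    (hP1a : ψ 0 (z 0) = 0) (hP1b : z 0 = x₀)
    (hP2 : ∀ n : ℕ, ∀ u ∈ Q,
      ψ n (z n) + lam n * (f (x n) + g n (u - x n)) + β (n + 1) * d u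
        - β n * (d (z n) + d' (z n) (u - z n)) ≤ ψ (n + 1) u)
    (hP3 : ∀ k : ℕ, ∀ u ∈ Q,
      ψ (k + 1) (z (k + 1)) ≤ (∑ i ∈ Finset.range (k + 1), lam i * (f (x i) + g i (u - x i)))
        + β (k + 1) * (d (z (k + 1)) + d' (z (k + 1)) (u - z (k + 1))))
    (k : ℕ) (xhat : E) (hxhatQ : xhat ∈ Q)
    (hRk : (∑ i ∈ Finset.range (k + 1), lam i) * f xhat ≤ ψ (k + 1) (z (k + 1)) + (1 / (2 * σ) * ∑ i ∈ Finset.range (k + 1), (lam i) ^ 2 / β i * ‖g i‖ ^ 2))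
    (hx : x (k + 1) = (∑ i ∈ Finset.range (k + 2), lam i)⁻¹ •
        ((∑ i ∈ Finset.range (k + 1), lam i) • xhat + lam (k + 1) • z (k + 1))) :
    (∑ i ∈ Finset.range (k + 2), lam i) * f (x (k + 1)) ≤ ψ (k + 2) (z (k + 2)) + (1 / (2 * σ) * ∑ i ∈ Finset.range (k + 2), (lam i) ^ 2 / β i * ‖g i‖ ^ 2) := by

  have hBpos : ∀ n, 0 < β n := by
    intro n
    induction n with
    | zero => exact hβ0
    | succ m ih => exact lt_of_lt_of_le ih (hβmono m)
  set S := ∑ i ∈ Finset.range (k + 1), lam i with hSdef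
  have hSpos : 0 < S := Finset.sum_pos (fun i _ => hlam i) ⟨0, by simp⟩
  set L := lam (k + 1) with hLdef
  have hLpos : 0 < L := hlam (k + 1)
  have hTsum : ∑ i ∈ Finset.range (k + 2), lam i = S + L := Finset.sum_range_succ _ _
  set T := S + L with hTdef
  have hTpos : 0 < T := by positivity
  set w := z (k + 1) with hwdef
  set u := z (k + 2) with hudef
  set X := x (k + 1) with hXdef
  set G := g (k + 1) with hGdef
  set B := β (k + 1) with hBdef
  have hBp : 0 < B := hBpos (k + 1)
  -- convex combination identity
  have hxv : T • X = S • xhat + L • w := by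
    rw [hx, hTsum, smul_smul, mul_inv_cancel₀ hTpos.ne', one_smul]
  have hvec : S • (xhat - X) + L • (u - X) = L • (u - w) := by
    have h2 : S • (xhat - X) + L • (u - X)
        = (S • xhat + L • w) - T • X + L • (u - w) := by
      rw [hTdef]; module
    rw [hxv] at h2; simpa using h2
  have hkey : S * G (xhat - X) + L * G (u - X) = L * G (u - w) := by
    have := congrArg G hvec
    simpa [map_add, map_smul, smul_eq_mul] using this
  -- Property 1 (ii)
  have h1 : ψ (k+1) w + L * (f X + G (u - X)) + β (k+2) * d u
      - B * (d w + d' w (u - w)) ≤ ψ (k+2) u := hP2 (k+1) u (hzQ (k+2))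
  -- strong convexity / Bregman bound
  have h2 : σ / 2 * ‖u - w‖ ^ 2 ≤ d u - d w - d' w (u - w) :=
    hBreg w (hzQ (k+1)) u (hzQ (k+2))
  have hdu : 0 ≤ d u := hd_nonneg u (hzQ (k+2))
  have hβle : B ≤ β (k+2) := hβmono (k+1)
  have hprod1 : B * (σ / 2 * ‖u - w‖ ^ 2) ≤ β (k+2) * d u - B * (d w + d' w (u - w)) := by
    nlinarith [mul_le_mul_of_nonneg_left h2 hBp.le, mul_nonneg (sub_nonneg.mpr hβle) hdu]
  -- subgradient inequality at x_{k+1}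
  have h3 : f X + G (xhat - X) ≤ f xhat := hg (k+1) xhat
  have hS3 : S * (f X + G (xhat - X)) ≤ S * f xhat :=
    mul_le_mul_of_nonneg_left h3 hSpos.le
  -- quadratic AM-GM bound
  have hGv : -(‖G‖ * ‖u - w‖) ≤ G (u - w) := by
    have h := G.le_opNorm (u - w)
    rw [Real.norm_eq_abs] at h
    linarith [neg_abs_le (G (u - w))]
  have hLGv : -(L * (‖G‖ * ‖u - w‖)) ≤ L * G (u - w) := by
    have := mul_le_mul_of_nonneg_left hGv hLpos.le
    linarith
  have hquad : -(1 / (2 * σ) * (L ^ 2 / B * ‖G‖ ^ 2))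
      ≤ L * G (u - w) + B * (σ / 2 * ‖u - w‖ ^ 2) := by
    have := quad_bound_aux σ B L ‖G‖ ‖u - w‖ hσ hBp
    linarith [hLGv]
  -- assemble
  rw [hTsum, Finset.sum_range_succ]
  have hC : ψ (k + 1) w + 1 / (2 * σ) * ∑ i ∈ Finset.range (k + 1), lam i ^ 2 / β i * ‖g i‖ ^ 2
      ≥ S * f xhat := hRk
  have hfinal : T * f X ≤ ψ (k+2) u
      + (1 / (2 * σ) * ∑ i ∈ Finset.range (k + 1), lam i ^ 2 / β i * ‖g i‖ ^ 2)
      + 1 / (2 * σ) * (L ^ 2 / B * ‖G‖ ^ 2) := by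
    have hTexp : T * f X = S * f X + L * f X := by rw [hTdef]; ring
    linarith [h1, hprod1, hC, hS3, hkey, hquad]
  calc T * f X ≤ ψ (k+2) u
      + (1 / (2 * σ) * ∑ i ∈ Finset.range (k + 1), lam i ^ 2 / β i * ‖g i‖ ^ 2)
      + 1 / (2 * σ) * (L ^ 2 / B * ‖G‖ ^ 2) := hfinal
    _ = ψ (k+2) u + 1 / (2 * σ) *
        ((∑ i ∈ Finset.range (k + 1), lam i ^ 2 / β i * ‖g i‖ ^ 2) + L ^ 2 / B * ‖G‖ ^ 2) := by
      ring
end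

section
/- Let {(z_{k−1}, x_k, g_k, x̂_k)}_{k≥0} be generated by the general subgradient-based method variant (a): x_k := z_{k−1} := argmin_{x∈Q} ψ_{k−1}(x), x̂_k := (1/S_k) Σ_{i=0}^k λ_i x_i, g_k := g(x_k) ∈ ∂f(x_k), where {ψ_k} is any sequence of auxiliary functions satisfying Property 1 with l_f(y; x) := f(y) + ⟨g(y), x − y⟩. Then for all k ≥ 0: f(x̂_k) − f(x*) ≤ (1/S_k) Σ_{i=0}^k λ_i f(x_i) − f(x*) ≤ (β_k l_d(z_k; x*) + (1/(2σ)) Σ_{i=0}^k (λ_i²/β_{i−1}) ‖g_i‖_*²)/S_k. -/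
/-- Corollary 4.1 (a): convergence estimate for the general subgradient-based method,
variant (a).  (Indices shifted: `z k`, `β k` stand for the paper's `z_{k-1}`, `β_{k-1}`.) -/
theorem subgradient_method_estimate_a
    {E : Type*} [NormedAddCommGroup E] [NormedSpace ℝ E] [FiniteDimensional ℝ E]
    (Q : Set E) (hQne : Q.Nonempty) (hQcl : IsClosed Q) (hQcv : Convex ℝ Q)
    (f : E → ℝ) (hf_cv : ConvexOn ℝ Q f) (hf_lsc : LowerSemicontinuousOn f Q)
    (σ : ℝ) (hσ : 0 < σ)
    (d : E → ℝ) (d' : E → E →L[ℝ] ℝ)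
    (hd_sc : StrongConvexOn Q σ d)
    (hd_diff : ∀ y ∈ Q, HasFDerivWithinAt d (d' y) Q y)
    (x₀ : E) (hx₀Q : x₀ ∈ Q) (hdx₀ : d x₀ = 0) (hd_nonneg : ∀ u ∈ Q, 0 ≤ d u)
    (hBreg : ∀ w ∈ Q, ∀ u ∈ Q, σ / 2 * ‖u - w‖ ^ 2 ≤ d u - d w - d' w (u - w))
    (lam : ℕ → ℝ) (hlam : ∀ k, 0 < lam k)
    (β : ℕ → ℝ) (hβ0 : 0 < β 0) (hβmono : ∀ k, β k ≤ β (k + 1))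
    (x : ℕ → E) (hxQ : ∀ k, x k ∈ Q)
    (ψ : ℕ → E → ℝ) (z : ℕ → E)
    (hzQ : ∀ n, z n ∈ Q) (hzmin : ∀ n, ∀ u ∈ Q, ψ n (z n) ≤ ψ n u)
    (g : ℕ → E →L[ℝ] ℝ) (hg : ∀ k, ∀ y : E, f (x k) + g k (y - x k) ≤ f y)
    (hP1a : ψ 0 (z 0) = 0) (hP1b : z 0 = x₀)
    (hP2 : ∀ n : ℕ, ∀ u ∈ Q,
      ψ n (z n) + lam n * (f (x n) + g n (u - x n)) + β (n + 1) * d u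
        - β n * (d (z n) + d' (z n) (u - z n)) ≤ ψ (n + 1) u)
    (hP3 : ∀ k : ℕ, ∀ u ∈ Q,
      ψ (k + 1) (z (k + 1)) ≤ (∑ i ∈ Finset.range (k + 1), lam i * (f (x i) + g i (u - x i)))
        + β (k + 1) * (d (z (k + 1)) + d' (z (k + 1)) (u - z (k + 1))))
    (xs : E) (hxsQ : xs ∈ Q) (hxs_opt : ∀ u ∈ Q, f xs ≤ f u)
    (xhat : ℕ → E)
    (hmx : ∀ k, x k = z k)
    (hmxhat : ∀ k, xhat k = (∑ i ∈ Finset.range (k + 1), lam i)⁻¹ • ∑ i ∈ Finset.range (k + 1), lam i • x i) :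
    ∀ k : ℕ,
      f (xhat k) - f xs ≤ (∑ i ∈ Finset.range (k + 1), lam i)⁻¹ * (∑ i ∈ Finset.range (k + 1), lam i * f (x i)) - f xs
      ∧ (∑ i ∈ Finset.range (k + 1), lam i)⁻¹ * (∑ i ∈ Finset.range (k + 1), lam i * f (x i)) - f xs ≤
        (β (k + 1) * (d (z (k + 1)) + d' (z (k + 1)) (xs - z (k + 1))) + (1 / (2 * σ) * ∑ i ∈ Finset.range (k + 1), (lam i) ^ 2 / β i * ‖g i‖ ^ 2))
          / (∑ i ∈ Finset.range (k + 1), lam i) := by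
  have hβpos : ∀ n, 0 < β n := by
    intro n
    induction n with
    | zero => exact hβ0
    | succ n ih => exact lt_of_lt_of_le ih (hβmono n)
  -- key lower bound by induction
  have key : ∀ n : ℕ, (∑ i ∈ Finset.range n, lam i * f (x i))
      - (1 / (2 * σ)) * ∑ i ∈ Finset.range n, (lam i) ^ 2 / β i * ‖g i‖ ^ 2 ≤ ψ n (z n) := by
    intro n
    induction n with
    | zero => simp [hP1a]
    | succ n ih =>
      have h2 := hP2 n (z (n + 1)) (hzQ (n + 1))
      have hb := hBreg (z n) (hzQ n) (z (n + 1)) (hzQ (n + 1))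
      have hdnn := hd_nonneg (z (n + 1)) (hzQ (n + 1))
      have hβp := hβpos n
      have fact1 : β n * d (z (n + 1)) ≤ β (n + 1) * d (z (n + 1)) :=
        mul_le_mul_of_nonneg_right (hβmono n) hdnn
      have fact2 : β n * (σ / 2 * ‖z (n + 1) - z n‖ ^ 2)
          ≤ β n * (d (z (n + 1)) - d (z n) - d' (z n) (z (n + 1) - z n)) :=
        mul_le_mul_of_nonneg_left hb hβp.le
      have hgb : -(‖g n‖ * ‖z (n + 1) - z n‖) ≤ g n (z (n + 1) - x n) := by
        rw [hmx n]
        have h3 := (g n).le_opNorm (z (n + 1) - z n)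
        rw [Real.norm_eq_abs] at h3
        linarith [neg_abs_le (g n (z (n + 1) - z n)), abs_le.mp h3]
      have fact3 : -(lam n * (‖g n‖ * ‖z (n + 1) - z n‖)) ≤ lam n * g n (z (n + 1) - x n) := by
        have := mul_le_mul_of_nonneg_left hgb (hlam n).le
        linarith [this]
      have amgm : lam n * (‖g n‖ * ‖z (n + 1) - z n‖) ≤
          1 / (2 * σ) * ((lam n) ^ 2 / β n * ‖g n‖ ^ 2)
            + β n * (σ / 2 * ‖z (n + 1) - z n‖ ^ 2) := by
        rw [← sub_nonneg]
        have heq : 1 / (2 * σ) * ((lam n) ^ 2 / β n * ‖g n‖ ^ 2)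
              + β n * (σ / 2 * ‖z (n + 1) - z n‖ ^ 2)
              - lam n * (‖g n‖ * ‖z (n + 1) - z n‖)
            = (lam n * ‖g n‖ - σ * β n * ‖z (n + 1) - z n‖) ^ 2 / (2 * σ * β n) := by
          field_simp
          ring
        rw [heq]
        positivity
      rw [Finset.sum_range_succ, Finset.sum_range_succ]
      nlinarith [h2, ih, fact1, fact2, fact3, amgm]
  intro k
  have hSpos : 0 < ∑ i ∈ Finset.range (k + 1), lam i :=
    Finset.sum_pos (fun i _ => hlam i) ⟨0, by simp⟩
  constructor
  · -- Jensen's inequality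
    have hJ := hf_cv.map_centerMass_le (t := Finset.range (k + 1)) (w := lam) (p := x)
      (fun i _ => (hlam i).le) hSpos (fun i _ => hxQ i)
    simp only [Finset.centerMass, Function.comp, smul_eq_mul, Finset.mul_sum] at hJ
    rw [hmxhat k]
    have : (∑ i ∈ Finset.range (k + 1), lam i)⁻¹ * ∑ i ∈ Finset.range (k + 1), lam i * f (x i)
        = ∑ i ∈ Finset.range (k + 1),
            (∑ i ∈ Finset.range (k + 1), lam i)⁻¹ * (lam i * f (x i)) := by
      rw [Finset.mul_sum]
    rw [this]
    have hxx : (∑ i ∈ Finset.range (k + 1), lam i)⁻¹ • ∑ i ∈ Finset.range (k + 1), lam i • x i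
        = (Finset.range (k + 1)).centerMass lam x := rfl
    rw [hxx]
    simp only [Finset.centerMass, Function.comp, smul_eq_mul, Finset.mul_sum] at *
    linarith [hJ]
  · -- main estimate
    have h3 := hP3 k xs hxsQ
    have hsum : (∑ i ∈ Finset.range (k + 1), lam i * (f (x i) + g i (xs - x i)))
        ≤ (∑ i ∈ Finset.range (k + 1), lam i) * f xs := by
      rw [Finset.sum_mul]
      refine Finset.sum_le_sum fun i _ => ?_
      exact mul_le_mul_of_nonneg_left (hg i xs) (hlam i).le
    have hmain : (∑ i ∈ Finset.range (k + 1), lam i * f (x i))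
        - (∑ i ∈ Finset.range (k + 1), lam i) * f xs
        ≤ β (k + 1) * (d (z (k + 1)) + d' (z (k + 1)) (xs - z (k + 1)))
          + 1 / (2 * σ) * ∑ i ∈ Finset.range (k + 1), (lam i) ^ 2 / β i * ‖g i‖ ^ 2 := by
      linarith [key (k + 1), h3, hsum]
    have heq2 : (∑ i ∈ Finset.range (k + 1), lam i)⁻¹
          * (∑ i ∈ Finset.range (k + 1), lam i * f (x i)) - f xs
        = ((∑ i ∈ Finset.range (k + 1), lam i * f (x i))
            - (∑ i ∈ Finset.range (k + 1), lam i) * f xs)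
          / (∑ i ∈ Finset.range (k + 1), lam i) := by
      field_simp
    rw [heq2]
    exact div_le_div_of_nonneg_right hmain hSpos.le
end

section
/- Let {(z_{k−1}, x_k, g_k, x̂_k)}_{k≥0} be generated by the general subgradient-based method variant (b): z_{k−1} := argmin_{x∈Q} ψ_{k−1}(x), x̂_k := x_k := (1/S_k) Σ_{i=0}^k λ_i z_{i−1}, g_k := g(x_k) ∈ ∂f(x_k), where {ψ_k} is any sequence of auxiliary functions satisfying Property 1 with l_f(y; x) := f(y) + ⟨g(y), x − y⟩. Then for all k ≥ 0: f(x̂_k) − f(x*) ≤ (β_k l_d(z_k; x*) + (1/(2σ)) Σ_{i=0}^k (λ_i²/β_{i−1}) ‖g_i‖_*²)/S_k. -/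
private lemma young_aux (a t b : ℝ) (hb : 0 < b) : a * t ≤ a^2/(2*b) + b/2*t^2 := by
  have h : (a - b*t)^2 / (2*b) = a^2/(2*b) + b/2*t^2 - a*t := by
    field_simp; ring
  have h0 : 0 ≤ (a - b*t)^2 / (2*b) := div_nonneg (sq_nonneg _) (by linarith)
  rw [h] at h0; linarith

/-- Corollary 4.1 (b): convergence estimate for the general subgradient-based method,
variant (b).  (Indices shifted: `z k`, `β k` stand for the paper's `z_{k-1}`, `β_{k-1}`.) -/
theorem subgradient_method_estimate_b
    {E : Type*} [NormedAddCommGroup E] [NormedSpace ℝ E] [FiniteDimensional ℝ E]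
    (Q : Set E) (hQne : Q.Nonempty) (hQcl : IsClosed Q) (hQcv : Convex ℝ Q)
    (f : E → ℝ) (hf_cv : ConvexOn ℝ Q f) (hf_lsc : LowerSemicontinuousOn f Q)
    (σ : ℝ) (hσ : 0 < σ)
    (d : E → ℝ) (d' : E → E →L[ℝ] ℝ)
    (hd_sc : StrongConvexOn Q σ d)
    (hd_diff : ∀ y ∈ Q, HasFDerivWithinAt d (d' y) Q y)
    (x₀ : E) (hx₀Q : x₀ ∈ Q) (hdx₀ : d x₀ = 0) (hd_nonneg : ∀ u ∈ Q, 0 ≤ d u)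
    (hBreg : ∀ w ∈ Q, ∀ u ∈ Q, σ / 2 * ‖u - w‖ ^ 2 ≤ d u - d w - d' w (u - w))
    (lam : ℕ → ℝ) (hlam : ∀ k, 0 < lam k)
    (β : ℕ → ℝ) (hβ0 : 0 < β 0) (hβmono : ∀ k, β k ≤ β (k + 1))
    (x : ℕ → E) (hxQ : ∀ k, x k ∈ Q)
    (ψ : ℕ → E → ℝ) (z : ℕ → E)
    (hzQ : ∀ n, z n ∈ Q) (hzmin : ∀ n, ∀ u ∈ Q, ψ n (z n) ≤ ψ n u)
    (g : ℕ → E →L[ℝ] ℝ) (hg : ∀ k, ∀ y : E, f (x k) + g k (y - x k) ≤ f y)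
    (hP1a : ψ 0 (z 0) = 0) (hP1b : z 0 = x₀)
    (hP2 : ∀ n : ℕ, ∀ u ∈ Q,
      ψ n (z n) + lam n * (f (x n) + g n (u - x n)) + β (n + 1) * d u
        - β n * (d (z n) + d' (z n) (u - z n)) ≤ ψ (n + 1) u)
    (hP3 : ∀ k : ℕ, ∀ u ∈ Q,
      ψ (k + 1) (z (k + 1)) ≤ (∑ i ∈ Finset.range (k + 1), lam i * (f (x i) + g i (u - x i)))
        + β (k + 1) * (d (z (k + 1)) + d' (z (k + 1)) (u - z (k + 1))))
    (xs : E) (hxsQ : xs ∈ Q) (hxs_opt : ∀ u ∈ Q, f xs ≤ f u)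
    (xhat : ℕ → E)
    (hmx : ∀ k, x k = (∑ i ∈ Finset.range (k + 1), lam i)⁻¹ • ∑ i ∈ Finset.range (k + 1), lam i • z i)
    (hmxhat : ∀ k, xhat k = x k) :
    ∀ k : ℕ,
      f (xhat k) - f xs ≤
        (β (k + 1) * (d (z (k + 1)) + d' (z (k + 1)) (xs - z (k + 1))) + (1 / (2 * σ) * ∑ i ∈ Finset.range (k + 1), (lam i) ^ 2 / β i * ‖g i‖ ^ 2))
          / (∑ i ∈ Finset.range (k + 1), lam i) := by
  have hβpos : ∀ n, 0 < β n := by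
    intro n; induction n with
    | zero => exact hβ0
    | succ m ih => exact lt_of_lt_of_le ih (hβmono m)
  set S : ℕ → ℝ := fun n => ∑ i ∈ Finset.range (n+1), lam i with hSdef
  have hSpos : ∀ n, 0 < S n := fun n =>
    Finset.sum_pos (fun i _ => hlam i) ⟨0, Finset.mem_range.mpr (Nat.succ_pos n)⟩
  have hsum : ∀ n, ∑ i ∈ Finset.range (n+1), lam i • z i = (S n) • x n := by
    intro n
    rw [hmx n, smul_smul, mul_inv_cancel₀ (hSpos n).ne', one_smul]
  have hx0 : x 0 = z 0 := by
    have h := hmx 0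
    simp only [zero_add, Finset.sum_range_one] at h
    rw [h, smul_smul, inv_mul_cancel₀ (hlam 0).ne', one_smul]
  -- Step (1): weighted-average lower bound
  have key1 : ∀ n, S n * f (x n)
      ≤ ∑ i ∈ Finset.range (n+1), lam i * (f (x i) + g i (z i - x i)) := by
    intro n
    induction n with
    | zero =>
      simp [hSdef, Finset.sum_range_one, hx0]
    | succ m ih =>
      have hS1 : S (m+1) = S m + lam (m+1) := by
        simp [hSdef, Finset.sum_range_succ]
      have h1 : (S m + lam (m+1)) • x (m+1) = S m • x m + lam (m+1) • z (m+1) := by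
        rw [← hS1, ← hsum, ← hsum, Finset.sum_range_succ]
      have hrel : lam (m+1) • (z (m+1) - x (m+1)) = S m • (x (m+1) - x m) := by
        rw [smul_sub, smul_sub]
        rw [add_smul] at h1
        linear_combination (norm := module) -h1
      have hg' : lam (m+1) * (g (m+1)) (z (m+1) - x (m+1))
          = S m * (g (m+1)) (x (m+1) - x m) := by
        have := congrArg (g (m+1)) hrel
        simpa [map_smul, smul_eq_mul] using this
      have hsub : f (x (m+1)) - f (x m) ≤ g (m+1) (x (m+1) - x m) := by
        have h2 := hg (m+1) (x m)
        have hneg : (g (m+1)) (x m - x (m+1)) = - (g (m+1)) (x (m+1) - x m) := by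
          rw [← map_neg]; congr 1; abel
        rw [hneg] at h2; linarith
      have hmul := mul_le_mul_of_nonneg_left hsub (hSpos m).le
      rw [Finset.sum_range_succ]
      have hfin : S (m+1) * f (x (m+1))
          ≤ S m * f (x m) + lam (m+1) * (f (x (m+1)) + (g (m+1)) (z (m+1) - x (m+1))) := by
        rw [hS1]; nlinarith [hg', hmul]
      linarith
  -- Step (2): per-iteration Young/Bregman estimate
  have step : ∀ n, lam n * (f (x n) + g n (z n - x n)) - (lam n)^2 / β n * ‖g n‖^2 / (2*σ)
      ≤ lam n * (f (x n) + g n (z (n+1) - x n)) + β (n+1) * d (z (n+1))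
        - β n * (d (z n) + d' (z n) (z (n+1) - z n)) := by
    intro n
    set v := z (n+1) - z n with hv
    have hsplit : (g n) (z (n+1) - x n) = (g n) (z n - x n) + (g n) v := by
      rw [← map_add]; congr 1; rw [hv]; abel
    have hbreg := hBreg (z n) (hzQ n) (z (n+1)) (hzQ (n+1))
    have hdpos : 0 ≤ d (z (n+1)) := hd_nonneg _ (hzQ (n+1))
    have hβm : β n * d (z (n+1)) ≤ β (n+1) * d (z (n+1)) :=
      mul_le_mul_of_nonneg_right (hβmono n) hdpos
    have habs : -(‖g n‖ * ‖v‖) ≤ (g n) v := by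
      have := (g n).le_opNorm v
      have h2 : |(g n) v| ≤ ‖g n‖ * ‖v‖ := by rwa [← Real.norm_eq_abs]
      linarith [neg_abs_le ((g n) v)]
    have hyoung := young_aux (lam n * ‖g n‖) ‖v‖ (σ * β n) (mul_pos hσ (hβpos n))
    have heq : (lam n * ‖g n‖)^2 / (2*(σ * β n)) = (lam n)^2 / β n * ‖g n‖^2 / (2*σ) := by
      field_simp
    rw [heq] at hyoung
    have hgv : -((lam n)^2 / β n * ‖g n‖^2 / (2*σ)) - (σ * β n)/2 * ‖v‖^2 ≤ lam n * (g n) v := by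
      nlinarith [mul_le_mul_of_nonneg_left habs (hlam n).le]
    rw [hsplit]
    nlinarith [mul_le_mul_of_nonneg_left hbreg (hβpos n).le]
  -- Step (2'): telescoping lower bound for ψ
  have key2 : ∀ n, (∑ i ∈ Finset.range (n+1),
      (lam i * (f (x i) + g i (z i - x i)) - (lam i)^2 / β i * ‖g i‖^2 / (2*σ)))
      ≤ ψ (n+1) (z (n+1)) := by
    intro n
    induction n with
    | zero =>
      have h := hP2 0 (z 1) (hzQ 1)
      rw [hP1a] at h
      have hs := step 0
      simp only [zero_add, Finset.sum_range_one]
      linarith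
    | succ m ih =>
      have h := hP2 (m+1) (z (m+2)) (hzQ (m+2))
      have hmin := hzmin (m+1) (z (m+2))
      have hs := step (m+1)
      rw [Finset.sum_range_succ]
      linarith
  -- Step (3): upper bound via hP3 at xs
  intro k
  have key3 : ψ (k+1) (z (k+1)) ≤ S k * f xs
      + β (k+1) * (d (z (k+1)) + d' (z (k+1)) (xs - z (k+1))) := by
    have h := hP3 k xs hxsQ
    have hle : (∑ i ∈ Finset.range (k+1), lam i * (f (x i) + g i (xs - x i)))
        ≤ ∑ i ∈ Finset.range (k+1), lam i * f xs := by
      apply Finset.sum_le_sum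
      intro i _
      exact mul_le_mul_of_nonneg_left (hg i xs) (hlam i).le
    rw [← Finset.sum_mul] at hle
    linarith
  have hsum2 : (∑ i ∈ Finset.range (k+1),
      (lam i * (f (x i) + g i (z i - x i)) - (lam i)^2 / β i * ‖g i‖^2 / (2*σ)))
      = (∑ i ∈ Finset.range (k+1), lam i * (f (x i) + g i (z i - x i)))
        - 1/(2*σ) * ∑ i ∈ Finset.range (k+1), (lam i)^2 / β i * ‖g i‖^2 := by
    rw [Finset.sum_sub_distrib, Finset.mul_sum]
    congr 1
    apply Finset.sum_congr rfl
    intro i _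
    field_simp
  have h2 := key2 k
  rw [hsum2] at h2
  have hk1 := key1 k
  rw [hmxhat k]
  rw [le_div_iff₀ (hSpos k)]
  nlinarith [h2, hk1, key3]
end

section
/- Let {(z_{k−1}, x_k, g_k, x̂_k)}_{k≥0} be generated by the general subgradient-based method (either variant (a) or (b)) with simple-average parameters λ_k := 1 and β_k := γ β̂_k for some γ > 0, where β̂_{−1} := β̂_0 := 1 and β̂_{k+1} := β̂_k + 1/β̂_k. Then for all k ≥ 0, f(x̂_k) − f(x*) ≤ (γ l_d(z_k; x*) + M_k²/(2σγ)) · (0.5 + √(2k+1))/(k+1), where M_{−1} := 0 and M_k := max_{0≤i≤k} ‖g_i‖_* for k ≥ 0; moreover, for all k ≥ −1 the points z_k, x_{k+1}, x̂_{k+1} lie in the set { x ∈ Q : ‖x − x*‖² ≤ 2 d(x*)/σ + M_k²/(σ²γ²) }. -/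
/-!
Evaluating Property 2 at `u = z_{n+1}` and paying for the linearisation error with the Bregman
term (`a t - c t² / 2 ≤ a² / (2c)`) gives `ψ_{n+1}(z_{n+1}) ≥ ψ_n(z_n) + λ_n l_f(x_n; z_n) -
λ_n² ‖g_n‖² / (2σβ_n)`. Telescoping, and comparing with Property 3 at `u = x*`, yields
`S_k (f x̂_k - f x*) ≤ β_{k+1} l_d(z_{k+1}; x*) + M_{k+1}² / (2σ) ∑_{i≤k} λ_i² / β_i`, once
`S_k f(x̂_k) ≤ ∑ λ_i l_f(x_i; z_i)`: this is Jensen in variant (a), and in variant (b) the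
subgradient inequality along consecutive averages, which telescopes. For `λ = 1`, `β = γ β̂`,
`∑_{i≤k} 1/β̂_i = β̂_{k+1} ≤ 1/2 + √(2k+1)`. Since the left side is nonnegative, the same estimate
bounds `-l_d(z_{k+1}; x*)` (for `z_0 = x_0`, first-order optimality of `x_0` for `d` gives
`l_d(x_0; x*) ≥ 0`), which strong convexity turns into the bound on `‖z_n - x*‖²`; the averages
stay in the convex set `Q ∩ {‖· - x*‖² ≤ R}`.
-/

open Finset

theorem mul_sub_half_mul_sq_le (a t : ℝ) {c : ℝ} (hc : 0 < c) :
    a * t - c / 2 * t ^ 2 ≤ a ^ 2 / (2 * c) := by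
  rw [le_div_iff₀ (by positivity)]
  nlinarith [sq_nonneg (a - c * t)]

theorem add_inv_le_add_inv {a b : ℝ} (ha : 1 ≤ a) (hab : a ≤ b) : a + a⁻¹ ≤ b + b⁻¹ := by
  have hb : 1 ≤ b := ha.trans hab
  have : a⁻¹ - b⁻¹ ≤ b - a :=
    calc a⁻¹ - b⁻¹ = (b - a) * (a * b)⁻¹ := by
          field_simp [(zero_lt_one.trans_le ha).ne', (zero_lt_one.trans_le hb).ne']
      _ ≤ (b - a) * 1 := mul_le_mul_of_nonneg_left
          (inv_le_one_of_one_le₀ (one_le_mul_of_one_le_of_one_le ha hb)) (sub_nonneg.2 hab)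
      _ = b - a := mul_one _
  linarith

theorem half_add_sqrt_add_inv_le {c : ℝ} (hc : 1 / 4 ≤ c) :
    (1 / 2 + √c) + (1 / 2 + √c)⁻¹ ≤ 1 / 2 + √(c + 2) := by
  set a := √c
  set s := √(c + 2)
  have ha : 1 / 2 ≤ a := (Real.le_sqrt (by norm_num) (by linarith)).2 (by linarith)
  have hs2 : s ^ 2 = a ^ 2 + 2 := by
    rw [Real.sq_sqrt (by linarith), Real.sq_sqrt (by linarith)]
  have hs0 : 0 ≤ s := Real.sqrt_nonneg _
  have hsa : a ≤ s := Real.sqrt_le_sqrt (by linarith)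
  have hs1 : s ≤ a + 1 := by nlinarith
  have : (1 / 2 + a)⁻¹ ≤ s - a := by
    rw [inv_le_iff_one_le_mul₀ (by linarith)]
    nlinarith
  linarith

section RecursiveSequence

variable {b : ℕ → ℝ}

theorem one_le_and_le_half_add_sqrt (hb1 : b 1 = 1)
    (hrec : ∀ n, 1 ≤ n → b (n + 1) = b n + (b n)⁻¹) (n : ℕ) :
    1 ≤ b (n + 1) ∧ b (n + 1) ≤ 1 / 2 + √(2 * n + 1) := by
  induction n with
  | zero => norm_num [hb1]
  | succ n ih =>
    rw [hrec (n + 1) n.succ_pos]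
    refine ⟨by linarith [inv_pos.2 (zero_lt_one.trans_le ih.1)], ?_⟩
    calc b (n + 1) + (b (n + 1))⁻¹
        ≤ (1 / 2 + √(2 * n + 1)) + (1 / 2 + √(2 * n + 1))⁻¹ := add_inv_le_add_inv ih.1 ih.2
      _ ≤ 1 / 2 + √(2 * n + 1 + 2) :=
        half_add_sqrt_add_inv_le (by linarith [n.cast_nonneg (α := ℝ)])
      _ = 1 / 2 + √(2 * ↑(n + 1) + 1) := by push_cast; ring_nf

theorem sum_range_inv_eq (hb0 : b 0 = 1) (hb1 : b 1 = 1)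
    (hrec : ∀ n, 1 ≤ n → b (n + 1) = b n + (b n)⁻¹) (k : ℕ) :
    ∑ i ∈ range (k + 1), (b i)⁻¹ = b (k + 1) := by
  induction k with
  | zero => simp [hb0, hb1]
  | succ k ih => rw [sum_range_succ, ih, hrec (k + 1) k.succ_pos]

end RecursiveSequence

theorem sum_range_le_of_add_le {a φ : ℕ → ℝ} (h0 : φ 0 = 0) (h : ∀ n, φ n + a n ≤ φ (n + 1))
    (k : ℕ) : ∑ n ∈ range k, a n ≤ φ k :=
  calc ∑ n ∈ range k, a n ≤ ∑ n ∈ range k, (φ (n + 1) - φ n) :=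
        sum_le_sum fun n _ => by linarith [h n]
    _ = φ k := by rw [sum_range_sub, h0, sub_zero]

section MaxRecursion

variable {a M : ℕ → ℝ}

theorem le_of_max_rec (hM : ∀ n, M (n + 1) = max (M n) (a n)) {i n : ℕ} (h : i < n) :
    a i ≤ M n := by
  induction n, h using Nat.le_induction with
  | base => exact (hM i).symm ▸ le_max_right _ _
  | succ n _ ih => exact ih.trans ((hM n).symm ▸ le_max_left _ _)

theorem monotone_of_max_rec (hM : ∀ n, M (n + 1) = max (M n) (a n)) : Monotone M :=
  monotone_nat_of_le_succ fun n => (hM n).symm ▸ le_max_left _ _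

end MaxRecursion

theorem IsMinOn.hasFDerivWithinAt_sub_nonneg {E : Type*} [NormedAddCommGroup E]
    [NormedSpace ℝ E] {s : Set E} {φ : E → ℝ} {φ' : E →L[ℝ] ℝ} {a y : E} (h : IsMinOn φ s a)
    (hs : Convex ℝ s) (ha : a ∈ s) (hφ : HasFDerivWithinAt φ φ' s a) (hy : y ∈ s) :
    0 ≤ φ' (y - a) :=
  h.localize.hasFDerivWithinAt_nonneg hφ
    (sub_mem_posTangentConeAt_of_segment_subset (hs.segment_subset ha hy))

theorem convex_setOf_sq_norm_sub_le {E : Type*} [NormedAddCommGroup E] [NormedSpace ℝ E]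
    (c : E) (R : ℝ) : Convex ℝ {y | ‖y - c‖ ^ 2 ≤ R} := by
  rcases lt_or_ge R 0 with hR | hR
  · convert convex_empty (𝕜 := ℝ) (E := E)
    ext y
    simpa using hR.trans_le (sq_nonneg _)
  · convert convex_closedBall c √R using 1
    ext y
    rw [Set.mem_ofPred_eq, Metric.mem_closedBall, dist_eq_norm, Real.le_sqrt (norm_nonneg _) hR]

theorem ConvexOn.sum_mul_map_centerMass_le {E ι : Type*} [AddCommGroup E] [Module ℝ E]
    {s : Set E} {f : E → ℝ} (hf : ConvexOn ℝ s f) {t : Finset ι} {w : ι → ℝ} {p : ι → E}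
    (h₀ : ∀ i ∈ t, 0 ≤ w i) (h₁ : 0 < ∑ i ∈ t, w i) (hmem : ∀ i ∈ t, p i ∈ s) :
    (∑ i ∈ t, w i) * f (t.centerMass w p) ≤ ∑ i ∈ t, w i * f (p i) := by
  have h := mul_le_mul_of_nonneg_left (hf.map_centerMass_le h₀ h₁ hmem) h₁.le
  have hmean : t.centerMass w (f ∘ p) = (∑ i ∈ t, w i)⁻¹ * ∑ i ∈ t, w i * f (p i) := rfl
  rwa [hmean, ← mul_assoc, mul_inv_cancel₀ h₁.ne', one_mul] at h

namespace SubgradientMethod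

variable {E : Type*} [NormedAddCommGroup E] [NormedSpace ℝ E] {Q : Set E} {f d : E → ℝ}
  {d' : E → E →L[ℝ] ℝ} {σ : ℝ} {lam β : ℕ → ℝ} {x z : ℕ → E} {ψ : ℕ → E → ℝ}
  {g : ℕ → E →L[ℝ] ℝ}

theorem psi_succ_ge (hσ : 0 < σ) (hzQ : ∀ n, z n ∈ Q) (hd_nonneg : ∀ u ∈ Q, 0 ≤ d u)
    (hBreg : ∀ w ∈ Q, ∀ u ∈ Q, σ / 2 * ‖u - w‖ ^ 2 ≤ d u - d w - d' w (u - w))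
    (hβpos : ∀ n, 0 < β n) (hβmono : ∀ n, β n ≤ β (n + 1))
    (hP2 : ∀ n : ℕ, ∀ u ∈ Q,
      ψ n (z n) + lam n * (f (x n) + g n (u - x n)) + β (n + 1) * d u
        - β n * (d (z n) + d' (z n) (u - z n)) ≤ ψ (n + 1) u) (n : ℕ) :
    ψ n (z n) + (lam n * (f (x n) + g n (z n - x n)) - lam n ^ 2 * ‖g n‖ ^ 2 / (2 * σ * β n))
      ≤ ψ (n + 1) (z (n + 1)) := by
  set t := ‖z (n + 1) - z n‖
  have hsplit : g n (z (n + 1) - x n) = g n (z n - x n) + g n (z (n + 1) - z n) := by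
    rw [← map_add, sub_add_sub_cancel']
  have hdual : -(|lam n| * ‖g n‖ * t) ≤ lam n * g n (z (n + 1) - z n) := by
    refine neg_le_of_abs_le ?_
    rw [abs_mul, mul_assoc]
    exact mul_le_mul_of_nonneg_left
      (by simpa only [Real.norm_eq_abs] using (g n).le_opNorm _) (abs_nonneg _)
  have hyoung := mul_sub_half_mul_sq_le (|lam n| * ‖g n‖) t (mul_pos hσ (hβpos n))
  rw [mul_pow, sq_abs, ← mul_assoc] at hyoung
  have hbreg := mul_le_mul_of_nonneg_left (hBreg _ (hzQ n) _ (hzQ (n + 1))) (hβpos n).le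
  have hd := mul_le_mul_of_nonneg_right (hβmono n) (hd_nonneg _ (hzQ (n + 1)))
  have hP := hP2 n _ (hzQ (n + 1))
  rw [hsplit] at hP
  linarith

theorem psi_succ_le (hlam : ∀ i, 0 ≤ lam i) (hg : ∀ k, ∀ y : E, f (x k) + g k (y - x k) ≤ f y)
    (hP3 : ∀ k : ℕ, ∀ u ∈ Q,
      ψ (k + 1) (z (k + 1)) ≤ (∑ i ∈ range (k + 1), lam i * (f (x i) + g i (u - x i)))
        + β (k + 1) * (d (z (k + 1)) + d' (z (k + 1)) (u - z (k + 1))))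
    {u : E} (hu : u ∈ Q) (k : ℕ) :
    ψ (k + 1) (z (k + 1)) ≤ (∑ i ∈ range (k + 1), lam i) * f u
      + β (k + 1) * (d (z (k + 1)) + d' (z (k + 1)) (u - z (k + 1))) := by
  refine (hP3 k u hu).trans (add_le_add_left ?_ _)
  rw [sum_mul]
  exact sum_le_sum fun i _ => mul_le_mul_of_nonneg_left (hg i u) (hlam i)

theorem sum_mul_sub_le (hσ : 0 < σ) (hzQ : ∀ n, z n ∈ Q) (hd_nonneg : ∀ u ∈ Q, 0 ≤ d u)
    (hBreg : ∀ w ∈ Q, ∀ u ∈ Q, σ / 2 * ‖u - w‖ ^ 2 ≤ d u - d w - d' w (u - w))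
    (hlam : ∀ i, 0 ≤ lam i) (hβpos : ∀ n, 0 < β n) (hβmono : ∀ n, β n ≤ β (n + 1))
    (hg : ∀ k, ∀ y : E, f (x k) + g k (y - x k) ≤ f y) (hP1a : ψ 0 (z 0) = 0)
    (hP2 : ∀ n : ℕ, ∀ u ∈ Q,
      ψ n (z n) + lam n * (f (x n) + g n (u - x n)) + β (n + 1) * d u
        - β n * (d (z n) + d' (z n) (u - z n)) ≤ ψ (n + 1) u)
    (hP3 : ∀ k : ℕ, ∀ u ∈ Q,
      ψ (k + 1) (z (k + 1)) ≤ (∑ i ∈ range (k + 1), lam i * (f (x i) + g i (u - x i)))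
        + β (k + 1) * (d (z (k + 1)) + d' (z (k + 1)) (u - z (k + 1))))
    {u y : E} (hu : u ∈ Q) {k : ℕ}
    (hy : (∑ i ∈ range (k + 1), lam i) * f y
      ≤ ∑ i ∈ range (k + 1), lam i * (f (x i) + g i (z i - x i))) :
    (∑ i ∈ range (k + 1), lam i) * (f y - f u)
      ≤ β (k + 1) * (d (z (k + 1)) + d' (z (k + 1)) (u - z (k + 1)))
        + ∑ i ∈ range (k + 1), lam i ^ 2 * ‖g i‖ ^ 2 / (2 * σ * β i) := by
  have hlow := sum_range_le_of_add_le hP1a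
    (psi_succ_ge hσ hzQ hd_nonneg hBreg hβpos hβmono hP2) (k + 1)
  rw [sum_sub_distrib] at hlow
  have hup := psi_succ_le hlam hg hP3 hu k
  rw [mul_sub]
  linarith

theorem sum_sq_mul_sq_norm_div_le (hσ : 0 < σ) (hβpos : ∀ n, 0 < β n) {k : ℕ} {M : ℝ}
    (hgM : ∀ i < k + 1, ‖g i‖ ≤ M) :
    ∑ i ∈ range (k + 1), lam i ^ 2 * ‖g i‖ ^ 2 / (2 * σ * β i)
      ≤ M ^ 2 / (2 * σ) * ∑ i ∈ range (k + 1), lam i ^ 2 / β i := by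
  rw [mul_sum]
  refine sum_le_sum fun i hi => ?_
  have := hβpos i
  calc lam i ^ 2 * ‖g i‖ ^ 2 / (2 * σ * β i) ≤ lam i ^ 2 * M ^ 2 / (2 * σ * β i) := by
        gcongr; exact hgM i (mem_range.mp hi)
    _ = M ^ 2 / (2 * σ) * (lam i ^ 2 / β i) := by field_simp

theorem sum_sq_mul_sq_norm_div_le_of_simple {γ M : ℝ} {b : ℕ → ℝ} (hσ : 0 < σ)
    (hγ : 0 < γ) (hβpos : ∀ n, 0 < β n) (hb0 : b 0 = 1) (hb1 : b 1 = 1)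
    (hrec : ∀ n, 1 ≤ n → b (n + 1) = b n + (b n)⁻¹) (hlam1 : ∀ k, lam k = 1)
    (hβ : ∀ n, β n = γ * b n) {k : ℕ} (hgM : ∀ i < k + 1, ‖g i‖ ≤ M) :
    ∑ i ∈ range (k + 1), lam i ^ 2 * ‖g i‖ ^ 2 / (2 * σ * β i)
      ≤ b (k + 1) * (M ^ 2 / (2 * σ * γ)) := by
  have hweights : ∑ i ∈ range (k + 1), lam i ^ 2 / β i = γ⁻¹ * b (k + 1) := by
    rw [← sum_range_inv_eq hb0 hb1 hrec k, mul_sum]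
    exact sum_congr rfl fun i _ => by rw [hlam1, hβ, one_pow, one_div, mul_inv]
  refine (sum_sq_mul_sq_norm_div_le hσ hβpos hgM).trans_eq ?_
  rw [hweights]
  field_simp

theorem sq_norm_sub_le_of_linearization_nonneg {γ M : ℝ} {w u : E} (hσ : 0 < σ) (hγ : 0 < γ)
    (hBreg : ∀ w ∈ Q, ∀ u ∈ Q, σ / 2 * ‖u - w‖ ^ 2 ≤ d u - d w - d' w (u - w))
    (hw : w ∈ Q) (hu : u ∈ Q) (hlin : 0 ≤ γ * (d w + d' w (u - w)) + M ^ 2 / (2 * σ * γ)) :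
    ‖w - u‖ ^ 2 ≤ 2 * d u / σ + M ^ 2 / (σ ^ 2 * γ ^ 2) := by
  have hL : -(d w + d' w (u - w)) ≤ M ^ 2 / (2 * σ * γ) / γ := by
    rw [le_div_iff₀ hγ]; linarith
  have hB := hBreg w hw u hu
  rw [norm_sub_rev] at hB
  calc ‖w - u‖ ^ 2 = 2 / σ * (σ / 2 * ‖w - u‖ ^ 2) := by field_simp
    _ ≤ 2 / σ * (d u + M ^ 2 / (2 * σ * γ) / γ) := by gcongr; linarith
    _ = 2 * d u / σ + M ^ 2 / (σ ^ 2 * γ ^ 2) := by field_simp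

theorem centerMass_range_mem {K : Set E} (hK : Convex ℝ K) (hlam : ∀ i, 0 < lam i) {p : ℕ → E}
    {n : ℕ} (hp : ∀ i ≤ n, p i ∈ K) : (range (n + 1)).centerMass lam p ∈ K :=
  hK.centerMass_mem (fun i _ => (hlam i).le) (sum_pos (fun i _ => hlam i) nonempty_range_add_one)
    fun i hi => hp i (Nat.lt_succ_iff.mp (mem_range.mp hi))

theorem sum_mul_le_of_centerMass (hlam : ∀ i, 0 < lam i)
    (hx : ∀ k, x k = (range (k + 1)).centerMass lam z)
    (hg : ∀ k, ∀ y : E, f (x k) + g k (y - x k) ≤ f y) (k : ℕ) :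
    (∑ i ∈ range (k + 1), lam i) * f (x k)
      ≤ ∑ i ∈ range (k + 1), lam i * (f (x i) + g i (z i - x i)) := by
  set S := fun k => ∑ i ∈ range (k + 1), lam i
  have hS : ∀ k, 0 < S k := fun k => sum_pos (fun i _ => hlam i) nonempty_range_add_one
  have hsum : ∀ k, S k • x k = ∑ i ∈ range (k + 1), lam i • z i := fun k => by
    rw [hx k, centerMass, smul_inv_smul₀ (hS k).ne']
  have hgap : ∀ k, lam (k + 1) • (z (k + 1) - x (k + 1)) = S k • (x (k + 1) - x k) := fun k => by
    have h := hsum (k + 1)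
    rw [show S (k + 1) = S k + lam (k + 1) from sum_range_succ _ _, sum_range_succ, ← hsum k,
      add_smul] at h
    rw [smul_sub, smul_sub, sub_eq_sub_iff_add_eq_add, h, add_comm]
  induction k with
  | zero =>
    have hx0 : x 0 = z 0 := by rw [hx 0, range_one, centerMass_singleton _ _ (hlam 0).ne']
    simp [hx0]
  | succ k ih =>
    have hsub :
        S k * (f (x (k + 1)) - f (x k)) ≤ lam (k + 1) * g (k + 1) (z (k + 1) - x (k + 1)) := by
      rw [← smul_eq_mul (lam (k + 1)), ← map_smul, hgap k, map_smul, smul_eq_mul]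
      refine mul_le_mul_of_nonneg_left ?_ (hS k).le
      have := hg (k + 1) (x k)
      rw [← neg_sub, map_neg] at this
      linarith
    rw [sum_range_succ (fun i => lam i * (f (x i) + g i (z i - x i))) (k + 1),
      sum_range_succ lam (k + 1)]
    simp only [S] at hsub
    linarith

/-- Variants (a) and (b) of the method: the test points are the minimizers `z k` and the output
averages them, or the test points are themselves the averages of the minimizers. -/
def IsAveragingScheme (lam : ℕ → ℝ) (x z xhat : ℕ → E) : Prop :=
  ((∀ k, x k = z k) ∧ ∀ k, xhat k = (range (k + 1)).centerMass lam x) ∨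
    ((∀ k, x k = (range (k + 1)).centerMass lam z) ∧ ∀ k, xhat k = x k)

variable {xhat : ℕ → E}

theorem IsAveragingScheme.mem (h : IsAveragingScheme lam x z xhat) (hlam : ∀ i, 0 < lam i)
    {K : Set E} (hK : Convex ℝ K) {n : ℕ} (hz : ∀ i ≤ n, z i ∈ K) : x n ∈ K ∧ xhat n ∈ K := by
  rcases h with ⟨hx, hxhat⟩ | ⟨hx, hxhat⟩
  · exact ⟨hx n ▸ hz n le_rfl, hxhat n ▸ centerMass_range_mem hK hlam fun i hi => hx i ▸ hz i hi⟩
  · have hxn : x n ∈ K := hx n ▸ centerMass_range_mem hK hlam hz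
    exact ⟨hxn, hxhat n ▸ hxn⟩

theorem IsAveragingScheme.sum_mul_le (h : IsAveragingScheme lam x z xhat) (hlam : ∀ i, 0 < lam i)
    (hf : ConvexOn ℝ Q f) (hxQ : ∀ k, x k ∈ Q)
    (hg : ∀ k, ∀ y : E, f (x k) + g k (y - x k) ≤ f y) (k : ℕ) :
    (∑ i ∈ range (k + 1), lam i) * f (xhat k)
      ≤ ∑ i ∈ range (k + 1), lam i * (f (x i) + g i (z i - x i)) := by
  rcases h with ⟨hx, hxhat⟩ | ⟨hx, hxhat⟩
  · rw [hxhat k]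
    calc _ ≤ ∑ i ∈ range (k + 1), lam i * f (x i) :=
          hf.sum_mul_map_centerMass_le (fun i _ => (hlam i).le)
            (sum_pos (fun i _ => hlam i) nonempty_range_add_one) fun i _ => hxQ i
      _ = _ := sum_congr rfl fun i _ => by rw [hx i, sub_self, map_zero, add_zero]
  · rw [hxhat k]
    exact sum_mul_le_of_centerMass hlam hx hg k

end SubgradientMethod

/-- Indices are shifted: `z n`, `β n`, `bhat n`, `M n` stand for the paper's `z_{n-1}`, `β_{n-1}`,
`β̂_{n-1}`, `M_{n-1}`. -/
theorem subgradient_method_simple_averages_general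
    {E : Type*} [NormedAddCommGroup E] [NormedSpace ℝ E]
    (Q : Set E) (hQcv : Convex ℝ Q)
    (f : E → ℝ) (hf_cv : ConvexOn ℝ Q f)
    (σ : ℝ) (hσ : 0 < σ)
    (d : E → ℝ) (d' : E → E →L[ℝ] ℝ)
    (hd_diff : ∀ y ∈ Q, HasFDerivWithinAt d (d' y) Q y)
    (x₀ : E) (hx₀Q : x₀ ∈ Q) (hdx₀ : d x₀ = 0) (hd_nonneg : ∀ u ∈ Q, 0 ≤ d u)
    (hBreg : ∀ w ∈ Q, ∀ u ∈ Q, σ / 2 * ‖u - w‖ ^ 2 ≤ d u - d w - d' w (u - w))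
    (lam : ℕ → ℝ) (hlam : ∀ k, 0 < lam k)
    (β : ℕ → ℝ) (hβ0 : 0 < β 0) (hβmono : ∀ k, β k ≤ β (k + 1))
    (x : ℕ → E) (hxQ : ∀ k, x k ∈ Q)
    (ψ : ℕ → E → ℝ) (z : ℕ → E)
    (hzQ : ∀ n, z n ∈ Q)
    (g : ℕ → E →L[ℝ] ℝ) (hg : ∀ k, ∀ y : E, f (x k) + g k (y - x k) ≤ f y)
    (hP1a : ψ 0 (z 0) = 0) (hP1b : z 0 = x₀)
    (hP2 : ∀ n : ℕ, ∀ u ∈ Q,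
      ψ n (z n) + lam n * (f (x n) + g n (u - x n)) + β (n + 1) * d u
        - β n * (d (z n) + d' (z n) (u - z n)) ≤ ψ (n + 1) u)
    (hP3 : ∀ k : ℕ, ∀ u ∈ Q,
      ψ (k + 1) (z (k + 1)) ≤ (∑ i ∈ Finset.range (k + 1), lam i * (f (x i) + g i (u - x i)))
        + β (k + 1) * (d (z (k + 1)) + d' (z (k + 1)) (u - z (k + 1))))
    (xs : E) (hxsQ : xs ∈ Q) (hxs_opt : ∀ u ∈ Q, f xs ≤ f u)
    (xhat : ℕ → E)
    (hmethod :
      ((∀ k, x k = z k) ∧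
        (∀ k, xhat k = (∑ i ∈ Finset.range (k + 1), lam i)⁻¹ • ∑ i ∈ Finset.range (k + 1), lam i • x i))
      ∨ ((∀ k, x k = (∑ i ∈ Finset.range (k + 1), lam i)⁻¹ • ∑ i ∈ Finset.range (k + 1), lam i • z i) ∧
        (∀ k, xhat k = x k)))
    (γ : ℝ) (hγ : 0 < γ)
    (bhat : ℕ → ℝ) (hbhat0 : bhat 0 = 1) (hbhat1 : bhat 1 = 1)
    (hbhatrec : ∀ n, 1 ≤ n → bhat (n + 1) = bhat n + (bhat n)⁻¹)
    (hlam1 : ∀ k, lam k = 1) (hβ : ∀ n, β n = γ * bhat n)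
    (M : ℕ → ℝ) (hM0 : M 0 = 0) (hMrec : ∀ n, M (n + 1) = max (M n) ‖g n‖) :
    (∀ k : ℕ, f (xhat k) - f xs ≤
      (γ * (d (z (k + 1)) + d' (z (k + 1)) (xs - z (k + 1))) + (M (k + 1)) ^ 2 / (2 * σ * γ)) *
        ((0.5 + Real.sqrt (2 * (k : ℝ) + 1)) / ((k : ℝ) + 1)))
    ∧ (∀ n : ℕ,
      (z n ∈ Q ∧ ‖z n - xs‖ ^ 2 ≤ 2 * d xs / σ + (M n) ^ 2 / (σ ^ 2 * γ ^ 2)) ∧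
      (x n ∈ Q ∧ ‖x n - xs‖ ^ 2 ≤ 2 * d xs / σ + (M n) ^ 2 / (σ ^ 2 * γ ^ 2)) ∧
      (xhat n ∈ Q ∧ ‖xhat n - xs‖ ^ 2 ≤ 2 * d xs / σ + (M n) ^ 2 / (σ ^ 2 * γ ^ 2))) := by
  have hβpos : ∀ n, 0 < β n := fun n => hβ0.trans_le (monotone_nat_of_le_succ hβmono n.zero_le)
  have hxhatQ : ∀ k, xhat k ∈ Q := fun k =>
    (SubgradientMethod.IsAveragingScheme.mem hmethod hlam hQcv fun i _ => hzQ i).2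
  have hrate : ∀ k : ℕ, ((k : ℝ) + 1) * (f (xhat k) - f xs) ≤ bhat (k + 1) *
      (γ * (d (z (k + 1)) + d' (z (k + 1)) (xs - z (k + 1))) + M (k + 1) ^ 2 / (2 * σ * γ)) := by
    intro k
    have hmain := SubgradientMethod.sum_mul_sub_le hσ hzQ hd_nonneg hBreg (fun i => (hlam i).le)
      hβpos hβmono hg hP1a hP2 hP3 hxsQ
      (SubgradientMethod.IsAveragingScheme.sum_mul_le hmethod hlam hf_cv hxQ hg k)
    have hgrad := SubgradientMethod.sum_sq_mul_sq_norm_div_le_of_simple hσ hγ hβpos hbhat0 hbhat1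
      hbhatrec hlam1 hβ (k := k) fun i hi => le_of_max_rec hMrec hi (M := M)
    rw [show ∑ i ∈ range (k + 1), lam i = k + 1 by simp [hlam1], hβ (k + 1)] at hmain
    linarith
  have hlin : ∀ n, 0 ≤ γ * (d (z n) + d' (z n) (xs - z n)) + M n ^ 2 / (2 * σ * γ)
    | 0 => by
      rw [hP1b, hdx₀, hM0, zero_add, zero_pow two_ne_zero, zero_div, add_zero]
      have hmin : IsMinOn d Q x₀ := fun u hu => hdx₀ ▸ hd_nonneg u hu
      exact mul_nonneg hγ.le (hmin.hasFDerivWithinAt_sub_nonneg hQcv hx₀Q (hd_diff x₀ hx₀Q) hxsQ)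
    | k + 1 => nonneg_of_mul_nonneg_right ((mul_nonneg (by positivity)
        (sub_nonneg.2 (hxs_opt _ (hxhatQ k)))).trans (hrate k))
        (zero_lt_one.trans_le (one_le_and_le_half_add_sqrt hbhat1 hbhatrec k).1)
  refine ⟨fun k => ?_, fun n => ?_⟩
  · rw [show (0.5 : ℝ) = 1 / 2 by norm_num, ← mul_div_assoc, le_div_iff₀ (by positivity),
      mul_comm _ ((k : ℝ) + 1), mul_comm _ (1 / 2 + _)]
    exact (hrate k).trans (mul_le_mul_of_nonneg_right
      (one_le_and_le_half_add_sqrt hbhat1 hbhatrec k).2 (hlin (k + 1)))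
  · have hMmono := monotone_of_max_rec hMrec
    have hK : ∀ i ≤ n, z i ∈ Q ∩ {y | ‖y - xs‖ ^ 2 ≤ 2 * d xs / σ + M n ^ 2 / (σ ^ 2 * γ ^ 2)} :=
      fun i hi => ⟨hzQ i, (SubgradientMethod.sq_norm_sub_le_of_linearization_nonneg hσ hγ hBreg
        (hzQ i) hxsQ (hlin i)).trans (by gcongr; exacts [hM0 ▸ hMmono i.zero_le, hMmono hi])⟩
    exact ⟨hK n le_rfl, SubgradientMethod.IsAveragingScheme.mem hmethod hlam
      (hQcv.inter (convex_setOf_sq_norm_sub_le xs _)) hK⟩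

/-- Corollary 4.2, simple averages: with `λ_k = 1` and `β_k = γ β̂_k`, the general
subgradient-based method (variant (a) or (b)) satisfies the optimal-rate estimate and
produces bounded iterates.  (Indices shifted: `z n`, `β n`, `bhat n`, `M n` stand for the
paper's `z_{n-1}`, `β_{n-1}`, `β̂_{n-1}`, `M_{n-1}`.) -/
theorem subgradient_method_simple_averages
    {E : Type*} [NormedAddCommGroup E] [NormedSpace ℝ E] [FiniteDimensional ℝ E]
    (Q : Set E) (hQne : Q.Nonempty) (hQcl : IsClosed Q) (hQcv : Convex ℝ Q)
    (f : E → ℝ) (hf_cv : ConvexOn ℝ Q f) (hf_lsc : LowerSemicontinuousOn f Q)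
    (σ : ℝ) (hσ : 0 < σ)
    (d : E → ℝ) (d' : E → E →L[ℝ] ℝ)
    (hd_sc : StrongConvexOn Q σ d)
    (hd_diff : ∀ y ∈ Q, HasFDerivWithinAt d (d' y) Q y)
    (x₀ : E) (hx₀Q : x₀ ∈ Q) (hdx₀ : d x₀ = 0) (hd_nonneg : ∀ u ∈ Q, 0 ≤ d u)
    (hBreg : ∀ w ∈ Q, ∀ u ∈ Q, σ / 2 * ‖u - w‖ ^ 2 ≤ d u - d w - d' w (u - w))
    (lam : ℕ → ℝ) (hlam : ∀ k, 0 < lam k)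
    (β : ℕ → ℝ) (hβ0 : 0 < β 0) (hβmono : ∀ k, β k ≤ β (k + 1))
    (x : ℕ → E) (hxQ : ∀ k, x k ∈ Q)
    (ψ : ℕ → E → ℝ) (z : ℕ → E)
    (hzQ : ∀ n, z n ∈ Q) (hzmin : ∀ n, ∀ u ∈ Q, ψ n (z n) ≤ ψ n u)
    (g : ℕ → E →L[ℝ] ℝ) (hg : ∀ k, ∀ y : E, f (x k) + g k (y - x k) ≤ f y)
    (hP1a : ψ 0 (z 0) = 0) (hP1b : z 0 = x₀)
    (hP2 : ∀ n : ℕ, ∀ u ∈ Q,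
      ψ n (z n) + lam n * (f (x n) + g n (u - x n)) + β (n + 1) * d u
        - β n * (d (z n) + d' (z n) (u - z n)) ≤ ψ (n + 1) u)
    (hP3 : ∀ k : ℕ, ∀ u ∈ Q,
      ψ (k + 1) (z (k + 1)) ≤ (∑ i ∈ Finset.range (k + 1), lam i * (f (x i) + g i (u - x i)))
        + β (k + 1) * (d (z (k + 1)) + d' (z (k + 1)) (u - z (k + 1))))
    (xs : E) (hxsQ : xs ∈ Q) (hxs_opt : ∀ u ∈ Q, f xs ≤ f u)
    (xhat : ℕ → E)
    (hmethod :
      ((∀ k, x k = z k) ∧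
        (∀ k, xhat k = (∑ i ∈ Finset.range (k + 1), lam i)⁻¹ • ∑ i ∈ Finset.range (k + 1), lam i • x i))
      ∨ ((∀ k, x k = (∑ i ∈ Finset.range (k + 1), lam i)⁻¹ • ∑ i ∈ Finset.range (k + 1), lam i • z i) ∧
        (∀ k, xhat k = x k)))
    (γ : ℝ) (hγ : 0 < γ)
    (bhat : ℕ → ℝ) (hbhat0 : bhat 0 = 1) (hbhat1 : bhat 1 = 1)
    (hbhatrec : ∀ n, 1 ≤ n → bhat (n + 1) = bhat n + (bhat n)⁻¹)
    (hlam1 : ∀ k, lam k = 1) (hβ : ∀ n, β n = γ * bhat n)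
    (M : ℕ → ℝ) (hM0 : M 0 = 0) (hMrec : ∀ n, M (n + 1) = max (M n) ‖g n‖) :
    (∀ k : ℕ, f (xhat k) - f xs ≤
      (γ * (d (z (k + 1)) + d' (z (k + 1)) (xs - z (k + 1))) + (M (k + 1)) ^ 2 / (2 * σ * γ)) *
        ((0.5 + Real.sqrt (2 * (k : ℝ) + 1)) / ((k : ℝ) + 1)))
    ∧ (∀ n : ℕ,
      (z n ∈ Q ∧ ‖z n - xs‖ ^ 2 ≤ 2 * d xs / σ + (M n) ^ 2 / (σ ^ 2 * γ ^ 2)) ∧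
      (x n ∈ Q ∧ ‖x n - xs‖ ^ 2 ≤ 2 * d xs / σ + (M n) ^ 2 / (σ ^ 2 * γ ^ 2)) ∧
      (xhat n ∈ Q ∧ ‖xhat n - xs‖ ^ 2 ≤ 2 * d xs / σ + (M n) ^ 2 / (σ ^ 2 * γ ^ 2))) :=
  subgradient_method_simple_averages_general Q hQcv f hf_cv σ hσ d d' hd_diff x₀ hx₀Q hdx₀ hd_nonneg
    hBreg lam hlam β hβ0 hβmono x hxQ ψ z hzQ g hg hP1a hP1b hP2 hP3 xs hxsQ hxs_opt xhat hmethod γ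
    hγ bhat hbhat0 hbhat1 hbhatrec hlam1 hβ M hM0 hMrec
end

section
/- Let {(z_{k−1}, x_k, g_k, x̂_k)}_{k≥0} be generated by the general subgradient-based method (either variant (a) or (b)) with weighted-average parameters λ_k := 1/‖g_k‖_* (assuming g_k ≠ 0) and β_k := β̂_k/(ρ√σ) for some ρ > 0, where β̂_{−1} := β̂_0 := 1 and β̂_{k+1} := β̂_k + 1/β̂_k. Then for all k ≥ 0, f(x̂_k) − f(x*) ≤ M_k (1/√σ)(l_d(z_k; x*)/ρ + ρ/2) · (0.5 + √(2k+1))/(k+1), where M_k := max_{0≤i≤k} ‖g_i‖_*; moreover, for all k ≥ −1 the points z_k, x_{k+1}, x̂_{k+1} lie in the set { x ∈ Q : ‖x − x*‖² ≤ (2 d(x*) + ρ²)/σ }. -/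
/-!
Write `ℓ n = λ_n (f (x n) + g_n (z n - x n))` and `S_k = ∑_{i ≤ k} λ_i`. The lower half of
Property 1, the σ-strong convexity of `d` and Young's inequality give
`ψ_{n+1}(z_{n+1}) ≥ ψ_n(z_n) + ℓ n - (λ_n ‖g_n‖)² / (2σβ_n)`, while its upper half at `x*` gives
`ψ_{k+1}(z_{k+1}) ≤ S_k f(x*) + β_{k+1} l_d(z_{k+1}; x*)`. In both variants `S_k f(x̂_k) ≤ ∑ ℓ n`:
by Jensen for (a), and for (b) by an induction on the subgradient inequality at `x_{k+1}`
evaluated at `x_k`. With `λ_n ‖g_n‖ = 1` the error terms add up to `ρ b̂_{k+1} / (2√σ)` because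
`∑_{n ≤ k} 1 / b̂_n = b̂_{k+1}`; finally `b̂_{k+1} ≤ 1/2 + √(2k+1)` and `S_k ≥ (k+1) / M_{k+1}`.

As the gap is nonnegative, so is `l_d(z_{k+1}; x*) / ρ + ρ / 2`, which by strong convexity puts
every `z n` in the ball `‖· - x*‖² ≤ (2 d(x*) + ρ²) / σ`; the points `x n` and `x̂ n` are convex
combinations of the `z i`.
-/

open Finset

theorem half_add_sqrt_add_inv_le_s11 (n : ℕ) :
    (0.5 + √(2 * (n : ℝ) + 1)) + (0.5 + √(2 * (n : ℝ) + 1))⁻¹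
      ≤ 0.5 + √(2 * ((n : ℝ) + 1) + 1) := by
  set s := √(2 * (n : ℝ) + 1)
  set r := √(2 * ((n : ℝ) + 1) + 1)
  have hs1 : 1 ≤ s := Real.one_le_sqrt.2 (by linarith [n.cast_nonneg (α := ℝ)])
  have hs2 : s ^ 2 = 2 * n + 1 := Real.sq_sqrt (by positivity)
  have hr2 : r ^ 2 = s ^ 2 + 2 := by rw [hs2, Real.sq_sqrt (by positivity)]; ring
  have hsr : s ≤ r := Real.sqrt_le_sqrt (by linarith)
  have hrs : r ≤ s + 1 := (Real.sqrt_le_left (by positivity)).2 (by nlinarith)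
  -- since `(r - s) (r + s) = 2` and `r + s ≤ 2 s + 1`
  have : (0.5 + s)⁻¹ ≤ r - s := by
    rw [inv_le_iff_one_le_mul₀' (by positivity)]
    nlinarith [mul_nonneg (sub_nonneg.2 hsr) (sub_nonneg.2 hrs)]
  linarith

section BHat

variable {bhat : ℕ → ℝ}

theorem one_le_bhat_succ (h1 : bhat 1 = 1)
    (hrec : ∀ n, 1 ≤ n → bhat (n + 1) = bhat n + (bhat n)⁻¹) (n : ℕ) : 1 ≤ bhat (n + 1) := by
  induction n with
  | zero => rw [h1]
  | succ n ih =>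
    rw [hrec (n + 1) (by omega)]
    linarith [inv_pos.2 (one_pos.trans_le ih)]

theorem bhat_pos (h0 : bhat 0 = 1) (h1 : bhat 1 = 1)
    (hrec : ∀ n, 1 ≤ n → bhat (n + 1) = bhat n + (bhat n)⁻¹) : ∀ n, 0 < bhat n
  | 0 => h0 ▸ one_pos
  | n + 1 => one_pos.trans_le (one_le_bhat_succ h1 hrec n)

theorem sum_range_inv_bhat (h0 : bhat 0 = 1) (h1 : bhat 1 = 1)
    (hrec : ∀ n, 1 ≤ n → bhat (n + 1) = bhat n + (bhat n)⁻¹) (k : ℕ) :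
    ∑ n ∈ range (k + 1), (bhat n)⁻¹ = bhat (k + 1) := by
  induction k with
  | zero => simp [h0, h1]
  | succ k ih => rw [sum_range_succ, ih, hrec (k + 1) (by omega)]

theorem bhat_succ_le (h1 : bhat 1 = 1)
    (hrec : ∀ n, 1 ≤ n → bhat (n + 1) = bhat n + (bhat n)⁻¹) (k : ℕ) :
    bhat (k + 1) ≤ 0.5 + √(2 * (k : ℝ) + 1) := by
  induction k with
  | zero => norm_num [h1]
  | succ k ih =>
    rw [hrec (k + 1) (by omega)]
    push_cast
    exact (add_inv_le_add_inv (one_le_bhat_succ h1 hrec k) ih).trans (half_add_sqrt_add_inv_le_s11 k)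

end BHat

theorem le_of_succ_eq_max {a M : ℕ → ℝ} (hM : ∀ n, M (n + 1) = max (M n) (a n)) {i k : ℕ}
    (hik : i ≤ k) : a i ≤ M (k + 1) :=
  ((hM i).symm ▸ le_max_right _ _ : a i ≤ M (i + 1)).trans <|
    monotone_nat_of_le_succ (fun n => (hM n).symm ▸ le_max_left _ _) (by omega)

theorem add_one_le_mul_sum_inv {a : ℕ → ℝ} {m : ℝ} {k : ℕ} (ha : ∀ i ≤ k, 0 < a i)
    (ham : ∀ i ≤ k, a i ≤ m) : (k + 1 : ℝ) ≤ m * ∑ i ∈ range (k + 1), (a i)⁻¹ := by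
  have hterm : ∀ i ∈ range (k + 1), 1 ≤ m * (a i)⁻¹ := fun i hi => by
    have hi := mem_range_succ_iff.1 hi
    rw [← div_eq_mul_inv, one_le_div (ha i hi)]
    exact ham i hi
  calc (k + 1 : ℝ) = ∑ _i ∈ range (k + 1), (1 : ℝ) := by simp
    _ ≤ m * ∑ i ∈ range (k + 1), (a i)⁻¹ := by rw [mul_sum]; exact sum_le_sum hterm

section SubgradientMethod

variable {E : Type*} [NormedAddCommGroup E] [NormedSpace ℝ E]

theorem neg_sq_norm_div_le_apply_add (φ : E →L[ℝ] ℝ) {c : ℝ} (hc : 0 < c) (v : E) :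
    -(‖φ‖ ^ 2 / (2 * c)) ≤ φ v + c / 2 * ‖v‖ ^ 2 := by
  have hφv : -(‖φ‖ * ‖v‖) ≤ φ v := neg_le_of_abs_le (φ.le_opNorm v)
  have key : -(‖φ‖ * ‖v‖) + c / 2 * ‖v‖ ^ 2 + ‖φ‖ ^ 2 / (2 * c)
      = (c * ‖v‖ - ‖φ‖) ^ 2 / (2 * c) := by
    field_simp
    ring
  linarith [div_nonneg (sq_nonneg (c * ‖v‖ - ‖φ‖)) (by positivity : (0 : ℝ) ≤ 2 * c)]

theorem IsMinOn.hasFDerivWithinAt_sub_nonneg_s11 {Q : Set E} {d : E → ℝ} {d' : E →L[ℝ] ℝ} {w u : E}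
    (hmin : IsMinOn d Q w) (hd : HasFDerivWithinAt d d' Q w) (hQ : Convex ℝ Q) (hw : w ∈ Q)
    (hu : u ∈ Q) : 0 ≤ d' (u - w) :=
  hmin.localize.hasFDerivWithinAt_nonneg hd
    (sub_mem_posTangentConeAt_of_segment_subset (hQ.segment_subset hw hu))

theorem norm_sub_sq_le_of_bregman {σ ρ : ℝ} {d : E → ℝ} {d' : E →L[ℝ] ℝ} {w u : E} (hσ : 0 < σ)
    (hBreg : σ / 2 * ‖u - w‖ ^ 2 ≤ d u - d w - d' (u - w))
    (hl : -(ρ ^ 2 / 2) ≤ d w + d' (u - w)) :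
    ‖w - u‖ ^ 2 ≤ (2 * d u + ρ ^ 2) / σ := by
  rw [norm_sub_rev, le_div_iff₀ hσ]
  linarith

theorem convex_setOf_norm_sub_sq_le (u : E) (c : ℝ) : Convex ℝ {v : E | ‖v - u‖ ^ 2 ≤ c} := by
  simpa [dist_eq_norm] using
    ((convexOn_dist u convex_univ).pow (fun _ _ => dist_nonneg) 2).convex_le c

variable {Q : Set E} {f d : E → ℝ} {σ : ℝ} {d' : E → E →L[ℝ] ℝ} {lam β : ℕ → ℝ}
  {x z xhat : ℕ → E} {ψ : ℕ → E → ℝ} {g : ℕ → E →L[ℝ] ℝ}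

theorem auxMin_add_le_auxMin_succ {n : ℕ} (hσ : 0 < σ) (hβ : 0 < β n) (hβmono : β n ≤ β (n + 1))
    (hd : 0 ≤ d (z (n + 1)))
    (hBreg : σ / 2 * ‖z (n + 1) - z n‖ ^ 2
      ≤ d (z (n + 1)) - d (z n) - d' (z n) (z (n + 1) - z n))
    (hP2 : ψ n (z n) + lam n * (f (x n) + g n (z (n + 1) - x n)) + β (n + 1) * d (z (n + 1))
      - β n * (d (z n) + d' (z n) (z (n + 1) - z n)) ≤ ψ (n + 1) (z (n + 1))) :
    ψ n (z n) + lam n * (f (x n) + g n (z n - x n)) - (lam n * ‖g n‖) ^ 2 / (2 * σ * β n)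
      ≤ ψ (n + 1) (z (n + 1)) := by
  have hsplit : g n (z (n + 1) - x n) = g n (z n - x n) + g n (z (n + 1) - z n) := by
    rw [← map_add, sub_add_sub_cancel']
  have hyoung := neg_sq_norm_div_le_apply_add (lam n • g n) (mul_pos hσ hβ) (z (n + 1) - z n)
  rw [norm_smul, Real.norm_eq_abs, mul_pow, sq_abs, ← mul_pow, ← mul_assoc] at hyoung
  simp only [smul_apply, smul_eq_mul] at hyoung
  rw [hsplit] at hP2
  nlinarith [mul_le_mul_of_nonneg_left hBreg hβ.le, mul_le_mul_of_nonneg_right hβmono hd]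

theorem sum_linearization_sub_le {xs : E} (hσ : 0 < σ) (hβ : ∀ n, 0 < β n)
    (hβmono : ∀ n, β n ≤ β (n + 1)) (hlam : ∀ n, 0 ≤ lam n) (hzQ : ∀ n, z n ∈ Q)
    (hd_nonneg : ∀ u ∈ Q, 0 ≤ d u)
    (hBreg : ∀ w ∈ Q, ∀ u ∈ Q, σ / 2 * ‖u - w‖ ^ 2 ≤ d u - d w - d' w (u - w))
    (hg : ∀ k, ∀ y : E, f (x k) + g k (y - x k) ≤ f y)
    (hP1 : ψ 0 (z 0) = 0)
    (hP2 : ∀ n : ℕ, ∀ u ∈ Q,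
      ψ n (z n) + lam n * (f (x n) + g n (u - x n)) + β (n + 1) * d u
        - β n * (d (z n) + d' (z n) (u - z n)) ≤ ψ (n + 1) u)
    (hP3 : ∀ k : ℕ, ∀ u ∈ Q,
      ψ (k + 1) (z (k + 1)) ≤ (∑ i ∈ range (k + 1), lam i * (f (x i) + g i (u - x i)))
        + β (k + 1) * (d (z (k + 1)) + d' (z (k + 1)) (u - z (k + 1))))
    (hxs : xs ∈ Q) (k : ℕ) :
    ∑ n ∈ range (k + 1), lam n * (f (x n) + g n (z n - x n)) - (∑ n ∈ range (k + 1), lam n) * f xs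
      ≤ β (k + 1) * (d (z (k + 1)) + d' (z (k + 1)) (xs - z (k + 1)))
        + ∑ n ∈ range (k + 1), (lam n * ‖g n‖) ^ 2 / (2 * σ * β n) := by
  have lower : ∑ n ∈ range (k + 1),
      (lam n * (f (x n) + g n (z n - x n)) - (lam n * ‖g n‖) ^ 2 / (2 * σ * β n))
        ≤ ψ (k + 1) (z (k + 1)) :=
    calc _ ≤ ∑ n ∈ range (k + 1), (ψ (n + 1) (z (n + 1)) - ψ n (z n)) :=
          sum_le_sum fun n _ => by
            linarith [auxMin_add_le_auxMin_succ hσ (hβ n) (hβmono n) (hd_nonneg _ (hzQ _))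
              (hBreg _ (hzQ n) _ (hzQ _)) (hP2 n _ (hzQ _))]
      _ = ψ (k + 1) (z (k + 1)) := by rw [sum_range_sub (fun n => ψ n (z n)), hP1, sub_zero]
  have upper : ∑ i ∈ range (k + 1), lam i * (f (x i) + g i (xs - x i))
      ≤ (∑ n ∈ range (k + 1), lam n) * f xs := by
    rw [sum_mul]
    exact sum_le_sum fun i _ => mul_le_mul_of_nonneg_left (hg i xs) (hlam i)
  rw [sum_sub_distrib] at lower
  linarith [hP3 k xs hxs]

theorem mul_le_sum_linearization_of_smul_eq_sum (hlam : ∀ n, 0 ≤ lam n)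
    (hg : ∀ k, ∀ y : E, f (x k) + g k (y - x k) ≤ f y)
    (hx : ∀ k, (∑ i ∈ range (k + 1), lam i) • x k = ∑ i ∈ range (k + 1), lam i • z i) (k : ℕ) :
    (∑ i ∈ range (k + 1), lam i) * f (x k)
      ≤ ∑ n ∈ range (k + 1), lam n * (f (x n) + g n (z n - x n)) := by
  induction k with
  | zero =>
    have hx0 : lam 0 • x 0 = lam 0 • z 0 := by simpa using hx 0
    have : lam 0 * g 0 (z 0 - x 0) = 0 := by
      rw [← smul_eq_mul, ← map_smul, smul_sub, hx0, sub_self, map_zero]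
    rw [zero_add, sum_range_one, sum_range_one, mul_add, this, add_zero]
  | succ m ih =>
    set S := ∑ i ∈ range (m + 1), lam i
    have hS : 0 ≤ S := sum_nonneg fun i _ => hlam i
    have hvec : S • (x m - x (m + 1)) = lam (m + 1) • (x (m + 1) - z (m + 1)) := by
      have h := hx (m + 1)
      rw [sum_range_succ lam (m + 1), sum_range_succ (fun i => lam i • z i) (m + 1), add_smul,
        ← hx m] at h
      rw [smul_sub, smul_sub]
      linear_combination (norm := module) -h
    have hlin : S * g (m + 1) (x m - x (m + 1))
        = -(lam (m + 1) * g (m + 1) (z (m + 1) - x (m + 1))) := by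
      rw [← smul_eq_mul, ← map_smul, hvec, map_smul, smul_eq_mul, ← mul_neg, ← map_neg, neg_sub]
    have hsub := mul_le_mul_of_nonneg_left (hg (m + 1) (x m)) hS
    rw [mul_add] at hsub
    rw [sum_range_succ lam (m + 1), sum_range_succ _ (m + 1), add_mul, mul_add]
    linarith

/-- Variants (a) and (b) of the method. -/
def IsWeightedAveraging (lam : ℕ → ℝ) (z x xhat : ℕ → E) : Prop :=
  ((∀ k, x k = z k) ∧ ∀ k, xhat k = (range (k + 1)).centerMass lam x) ∨
    ((∀ k, x k = (range (k + 1)).centerMass lam z) ∧ ∀ k, xhat k = x k)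

theorem IsWeightedAveraging.mem (hmethod : IsWeightedAveraging lam z x xhat)
    (hlam : ∀ n, 0 < lam n) {K : Set E} (hK : Convex ℝ K) (hz : ∀ n, z n ∈ K) (n : ℕ) :
    x n ∈ K ∧ xhat n ∈ K := by
  have avg : ∀ {p : ℕ → E}, (∀ i, p i ∈ K) → ∀ k, (range (k + 1)).centerMass lam p ∈ K :=
    fun hp k => hK.centerMass_mem (fun i _ => (hlam i).le)
      (sum_pos (fun i _ => hlam i) nonempty_range_add_one) (fun i _ => hp i)
  rcases hmethod with ⟨hxz, hxhat⟩ | ⟨hxz, hxhat⟩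
  · have hx : ∀ n, x n ∈ K := fun n => hxz n ▸ hz n
    exact ⟨hx n, hxhat n ▸ avg hx n⟩
  · exact ⟨hxz n ▸ avg hz n, (hxhat n).symm ▸ hxz n ▸ avg hz n⟩

theorem IsWeightedAveraging.mul_le_sum_linearization (hmethod : IsWeightedAveraging lam z x xhat)
    (hf : ConvexOn ℝ Q f) (hlam : ∀ n, 0 < lam n) (hzQ : ∀ n, z n ∈ Q)
    (hg : ∀ k, ∀ y : E, f (x k) + g k (y - x k) ≤ f y) (k : ℕ) :
    (∑ i ∈ range (k + 1), lam i) * f (xhat k)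
      ≤ ∑ n ∈ range (k + 1), lam n * (f (x n) + g n (z n - x n)) := by
  have hS : 0 < ∑ i ∈ range (k + 1), lam i := sum_pos (fun i _ => hlam i) nonempty_range_add_one
  have hxQ := fun n => (hmethod.mem hlam hf.1 hzQ n).1
  rcases hmethod with ⟨hxz, hxhat⟩ | ⟨hxz, hxhat⟩
  · have hJ := hf.map_centerMass_le (t := range (k + 1)) (fun i _ => (hlam i).le) hS
      (fun i _ => hxQ i)
    simp only [← hxz, sub_self, map_zero, add_zero, hxhat]
    calc _ ≤ (∑ i ∈ range (k + 1), lam i) * (range (k + 1)).centerMass lam (f ∘ x) :=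
          mul_le_mul_of_nonneg_left hJ hS.le
      _ = ∑ i ∈ range (k + 1), lam i * f (x i) := by
          simp [centerMass, smul_eq_mul, mul_inv_cancel_left₀ hS.ne']
  · rw [hxhat]
    refine mul_le_sum_linearization_of_smul_eq_sum (fun n => (hlam n).le) hg (fun n => ?_) k
    rw [hxz n, centerMass, smul_inv_smul₀ (sum_pos (fun i _ => hlam i) nonempty_range_add_one).ne']

end SubgradientMethod

theorem weighted_bound_eq {σ ρ l : ℝ} {lam β bhat : ℕ → ℝ} {a : ℕ → ℝ} (hσ : 0 < σ) (hρ : 0 < ρ)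
    (hunit : ∀ n, lam n * a n = 1) (hβ : ∀ n, β n = bhat n / (ρ * √σ))
    (h0 : bhat 0 = 1) (h1 : bhat 1 = 1)
    (hrec : ∀ n, 1 ≤ n → bhat (n + 1) = bhat n + (bhat n)⁻¹) (k : ℕ) :
    β (k + 1) * l + ∑ n ∈ range (k + 1), (lam n * a n) ^ 2 / (2 * σ * β n)
      = bhat (k + 1) / √σ * (l / ρ + ρ / 2) := by
  have hterm : ∀ n, (lam n * a n) ^ 2 / (2 * σ * β n) = ρ / (2 * √σ) * (bhat n)⁻¹ := fun n => by
    rw [hunit, hβ]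
    field_simp
    rw [Real.sq_sqrt hσ.le]
  rw [sum_congr rfl fun n _ => hterm n, ← mul_sum, sum_range_inv_bhat h0 h1 hrec, hβ]
  field_simp

theorem le_rate_of_weighted_gap {Δ X S M b B s : ℝ} {k : ℕ} (hs : 0 < s) (hΔ : 0 ≤ Δ)
    (hX : 0 ≤ X) (hM : 0 ≤ M) (hMS : (k + 1 : ℝ) ≤ M * S) (hgap : S * Δ ≤ b / s * X)
    (hb : b ≤ B) : Δ ≤ M * (1 / s) * X * (B / (k + 1)) := by
  have key : (k + 1) * Δ ≤ M * (1 / s) * X * B :=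
    calc (k + 1) * Δ ≤ M * S * Δ := mul_le_mul_of_nonneg_right hMS hΔ
      _ = M * (S * Δ) := by ring
      _ ≤ M * (b / s * X) := mul_le_mul_of_nonneg_left hgap hM
      _ ≤ M * (B / s * X) := by gcongr
      _ = M * (1 / s) * X * B := by ring
  rw [← mul_div_assoc, le_div_iff₀ (by positivity)]
  linarith

/-- Indices are shifted: `z n`, `β n`, `bhat n`, `M n` stand for the paper's `z_{n-1}`,
`β_{n-1}`, `β̂_{n-1}`, `M_{n-1}`. -/
theorem subgradient_method_weighted_averages_general
    {E : Type*} [NormedAddCommGroup E] [NormedSpace ℝ E]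
    (Q : Set E) (hQcv : Convex ℝ Q)
    (f : E → ℝ) (hf_cv : ConvexOn ℝ Q f)
    (σ : ℝ) (hσ : 0 < σ)
    (d : E → ℝ) (d' : E → E →L[ℝ] ℝ)
    (hd_diff : ∀ y ∈ Q, HasFDerivWithinAt d (d' y) Q y)
    (x₀ : E) (hx₀Q : x₀ ∈ Q) (hdx₀ : d x₀ = 0) (hd_nonneg : ∀ u ∈ Q, 0 ≤ d u)
    (hBreg : ∀ w ∈ Q, ∀ u ∈ Q, σ / 2 * ‖u - w‖ ^ 2 ≤ d u - d w - d' w (u - w))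
    (lam : ℕ → ℝ) (hlam : ∀ k, 0 < lam k)
    (β : ℕ → ℝ) (hβmono : ∀ k, β k ≤ β (k + 1))
    (x : ℕ → E)
    (ψ : ℕ → E → ℝ) (z : ℕ → E)
    (hzQ : ∀ n, z n ∈ Q)
    (g : ℕ → E →L[ℝ] ℝ) (hg : ∀ k, ∀ y : E, f (x k) + g k (y - x k) ≤ f y)
    (hP1a : ψ 0 (z 0) = 0) (hP1b : z 0 = x₀)
    (hP2 : ∀ n : ℕ, ∀ u ∈ Q,
      ψ n (z n) + lam n * (f (x n) + g n (u - x n)) + β (n + 1) * d u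
        - β n * (d (z n) + d' (z n) (u - z n)) ≤ ψ (n + 1) u)
    (hP3 : ∀ k : ℕ, ∀ u ∈ Q,
      ψ (k + 1) (z (k + 1)) ≤ (∑ i ∈ Finset.range (k + 1), lam i * (f (x i) + g i (u - x i)))
        + β (k + 1) * (d (z (k + 1)) + d' (z (k + 1)) (u - z (k + 1))))
    (xs : E) (hxsQ : xs ∈ Q) (hxs_opt : ∀ u ∈ Q, f xs ≤ f u)
    (xhat : ℕ → E)
    (hmethod :
      ((∀ k, x k = z k) ∧
        (∀ k, xhat k = (∑ i ∈ Finset.range (k + 1), lam i)⁻¹ • ∑ i ∈ Finset.range (k + 1), lam i • x i))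
      ∨ ((∀ k, x k = (∑ i ∈ Finset.range (k + 1), lam i)⁻¹ • ∑ i ∈ Finset.range (k + 1), lam i • z i) ∧
        (∀ k, xhat k = x k)))
    (ρ : ℝ) (hρ : 0 < ρ)
    (bhat : ℕ → ℝ) (hbhat0 : bhat 0 = 1) (hbhat1 : bhat 1 = 1)
    (hbhatrec : ∀ n, 1 ≤ n → bhat (n + 1) = bhat n + (bhat n)⁻¹)
    (hgne : ∀ k, g k ≠ 0)
    (hlamw : ∀ k, lam k = ‖g k‖⁻¹) (hβ : ∀ n, β n = bhat n / (ρ * Real.sqrt σ))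
    (M : ℕ → ℝ) (hMrec : ∀ n, M (n + 1) = max (M n) ‖g n‖) :
    (∀ k : ℕ, f (xhat k) - f xs ≤
      M (k + 1) * (1 / Real.sqrt σ) *
        ((d (z (k + 1)) + d' (z (k + 1)) (xs - z (k + 1))) / ρ + ρ / 2) *
        ((0.5 + Real.sqrt (2 * (k : ℝ) + 1)) / ((k : ℝ) + 1)))
    ∧ (∀ n : ℕ,
      (z n ∈ Q ∧ ‖z n - xs‖ ^ 2 ≤ (2 * d xs + ρ ^ 2) / σ) ∧
      (x n ∈ Q ∧ ‖x n - xs‖ ^ 2 ≤ (2 * d xs + ρ ^ 2) / σ) ∧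
      (xhat n ∈ Q ∧ ‖xhat n - xs‖ ^ 2 ≤ (2 * d xs + ρ ^ 2) / σ)) := by
  have hscheme : IsWeightedAveraging lam z x xhat := hmethod
  have hbhat := bhat_pos hbhat0 hbhat1 hbhatrec
  have hβpos : ∀ n, 0 < β n := fun n => hβ n ▸ div_pos (hbhat n) (by positivity)
  have hunit : ∀ n, lam n * ‖g n‖ = 1 := fun n => by
    rw [hlamw, inv_mul_cancel₀ (norm_ne_zero_iff.2 (hgne n))]
  have hgap : ∀ k, (∑ i ∈ range (k + 1), lam i) * (f (xhat k) - f xs)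
      ≤ bhat (k + 1) / √σ * ((d (z (k + 1)) + d' (z (k + 1)) (xs - z (k + 1))) / ρ + ρ / 2) :=
    fun k => by
      have hlin := sum_linearization_sub_le hσ hβpos hβmono (fun n => (hlam n).le) hzQ hd_nonneg
        hBreg hg hP1a hP2 hP3 hxsQ k
      rw [weighted_bound_eq hσ hρ hunit hβ hbhat0 hbhat1 hbhatrec] at hlin
      rw [mul_sub]
      linarith [hscheme.mul_le_sum_linearization hf_cv hlam hzQ hg k]
  have hopt : ∀ k, 0 ≤ f (xhat k) - f xs := fun k =>
    sub_nonneg.2 (hxs_opt _ (hscheme.mem hlam hQcv hzQ k).2)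
  have hX : ∀ k, 0 ≤ (d (z (k + 1)) + d' (z (k + 1)) (xs - z (k + 1))) / ρ + ρ / 2 := fun k =>
    nonneg_of_mul_nonneg_right
      ((mul_nonneg (sum_nonneg fun i _ => (hlam i).le) (hopt k)).trans (hgap k))
      (div_pos (hbhat _) (by positivity))
  have hld : ∀ n, -(ρ ^ 2 / 2) ≤ d (z n) + d' (z n) (xs - z n) := by
    rintro (_ | k)
    · have hmin : IsMinOn d Q x₀ := isMinOn_iff.2 fun u hu => hdx₀ ▸ hd_nonneg u hu
      have := hmin.hasFDerivWithinAt_sub_nonneg_s11 (hd_diff x₀ hx₀Q) hQcv hx₀Q hxsQ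
      rw [hP1b, hdx₀]
      linarith [sq_nonneg ρ]
    · have := mul_nonneg hρ.le (hX k)
      rw [mul_add, mul_div_cancel₀ _ hρ.ne'] at this
      linarith
  have hball : ∀ n, ‖z n - xs‖ ^ 2 ≤ (2 * d xs + ρ ^ 2) / σ := fun n =>
    norm_sub_sq_le_of_bregman hσ (hBreg _ (hzQ n) _ hxsQ) (hld n)
  refine ⟨fun k => ?_, fun n => ?_⟩
  · have hMk : ∀ i ≤ k, ‖g i‖ ≤ M (k + 1) := fun i hi => le_of_succ_eq_max hMrec hi
    refine le_rate_of_weighted_gap (Real.sqrt_pos.2 hσ) (hopt k) (hX k)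
      ((norm_nonneg _).trans (hMk 0 k.zero_le)) ?_ (hgap k) (bhat_succ_le hbhat1 hbhatrec k)
    simp only [hlamw]
    exact add_one_le_mul_sum_inv (fun i _ => norm_pos_iff.2 (hgne i)) hMk
  · have hK := hQcv.inter (convex_setOf_norm_sub_sq_le xs ((2 * d xs + ρ ^ 2) / σ))
    obtain ⟨hx, hxhat⟩ := hscheme.mem hlam hK (fun n => ⟨hzQ n, hball n⟩) n
    exact ⟨⟨hzQ n, hball n⟩, hx, hxhat⟩

/-- Corollary 4.2, weighted averages: with `λ_k = 1/‖g_k‖` and `β_k = β̂_k/(ρ√σ)`, the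
general subgradient-based method (variant (a) or (b)) satisfies the stated estimate and
produces bounded iterates.  (Indices shifted: `z n`, `β n`, `bhat n`, `M n` stand for the
paper's `z_{n-1}`, `β_{n-1}`, `β̂_{n-1}`, `M_{n-1}`.) -/
theorem subgradient_method_weighted_averages
    {E : Type*} [NormedAddCommGroup E] [NormedSpace ℝ E] [FiniteDimensional ℝ E]
    (Q : Set E) (hQne : Q.Nonempty) (hQcl : IsClosed Q) (hQcv : Convex ℝ Q)
    (f : E → ℝ) (hf_cv : ConvexOn ℝ Q f) (hf_lsc : LowerSemicontinuousOn f Q)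
    (σ : ℝ) (hσ : 0 < σ)
    (d : E → ℝ) (d' : E → E →L[ℝ] ℝ)
    (hd_sc : StrongConvexOn Q σ d)
    (hd_diff : ∀ y ∈ Q, HasFDerivWithinAt d (d' y) Q y)
    (x₀ : E) (hx₀Q : x₀ ∈ Q) (hdx₀ : d x₀ = 0) (hd_nonneg : ∀ u ∈ Q, 0 ≤ d u)
    (hBreg : ∀ w ∈ Q, ∀ u ∈ Q, σ / 2 * ‖u - w‖ ^ 2 ≤ d u - d w - d' w (u - w))
    (lam : ℕ → ℝ) (hlam : ∀ k, 0 < lam k)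
    (β : ℕ → ℝ) (hβ0 : 0 < β 0) (hβmono : ∀ k, β k ≤ β (k + 1))
    (x : ℕ → E) (hxQ : ∀ k, x k ∈ Q)
    (ψ : ℕ → E → ℝ) (z : ℕ → E)
    (hzQ : ∀ n, z n ∈ Q) (hzmin : ∀ n, ∀ u ∈ Q, ψ n (z n) ≤ ψ n u)
    (g : ℕ → E →L[ℝ] ℝ) (hg : ∀ k, ∀ y : E, f (x k) + g k (y - x k) ≤ f y)
    (hP1a : ψ 0 (z 0) = 0) (hP1b : z 0 = x₀)
    (hP2 : ∀ n : ℕ, ∀ u ∈ Q,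
      ψ n (z n) + lam n * (f (x n) + g n (u - x n)) + β (n + 1) * d u
        - β n * (d (z n) + d' (z n) (u - z n)) ≤ ψ (n + 1) u)
    (hP3 : ∀ k : ℕ, ∀ u ∈ Q,
      ψ (k + 1) (z (k + 1)) ≤ (∑ i ∈ Finset.range (k + 1), lam i * (f (x i) + g i (u - x i)))
        + β (k + 1) * (d (z (k + 1)) + d' (z (k + 1)) (u - z (k + 1))))
    (xs : E) (hxsQ : xs ∈ Q) (hxs_opt : ∀ u ∈ Q, f xs ≤ f u)
    (xhat : ℕ → E)
    (hmethod :
      ((∀ k, x k = z k) ∧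
        (∀ k, xhat k = (∑ i ∈ Finset.range (k + 1), lam i)⁻¹ • ∑ i ∈ Finset.range (k + 1), lam i • x i))
      ∨ ((∀ k, x k = (∑ i ∈ Finset.range (k + 1), lam i)⁻¹ • ∑ i ∈ Finset.range (k + 1), lam i • z i) ∧
        (∀ k, xhat k = x k)))
    (ρ : ℝ) (hρ : 0 < ρ)
    (bhat : ℕ → ℝ) (hbhat0 : bhat 0 = 1) (hbhat1 : bhat 1 = 1)
    (hbhatrec : ∀ n, 1 ≤ n → bhat (n + 1) = bhat n + (bhat n)⁻¹)
    (hgne : ∀ k, g k ≠ 0)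
    (hlamw : ∀ k, lam k = ‖g k‖⁻¹) (hβ : ∀ n, β n = bhat n / (ρ * Real.sqrt σ))
    (M : ℕ → ℝ) (hM0 : M 0 = 0) (hMrec : ∀ n, M (n + 1) = max (M n) ‖g n‖) :
    (∀ k : ℕ, f (xhat k) - f xs ≤
      M (k + 1) * (1 / Real.sqrt σ) *
        ((d (z (k + 1)) + d' (z (k + 1)) (xs - z (k + 1))) / ρ + ρ / 2) *
        ((0.5 + Real.sqrt (2 * (k : ℝ) + 1)) / ((k : ℝ) + 1)))
    ∧ (∀ n : ℕ,
      (z n ∈ Q ∧ ‖z n - xs‖ ^ 2 ≤ (2 * d xs + ρ ^ 2) / σ) ∧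
      (x n ∈ Q ∧ ‖x n - xs‖ ^ 2 ≤ (2 * d xs + ρ ^ 2) / σ) ∧
      (xhat n ∈ Q ∧ ‖xhat n - xs‖ ^ 2 ≤ (2 * d xs + ρ ^ 2) / σ)) :=
  subgradient_method_weighted_averages_general Q hQcv f hf_cv σ hσ d d' hd_diff x₀ hx₀Q hdx₀
    hd_nonneg hBreg lam hlam β hβmono x ψ z hzQ g hg hP1a hP1b hP2 hP3 xs hxsQ hxs_opt xhat hmethod
    ρ hρ bhat hbhat0 hbhat1 hbhatrec hgne hlamw hβ M hMrec
end

section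
/- Define the real sequence {β̂_k}_{k≥−1} by β̂_{−1} := β̂_0 := 1 and β̂_{k+1} := β̂_k + 1/β̂_k for all k ≥ 0. Then for every k ≥ 0: β̂_k = Σ_{i=−1}^{k−1} 1/β̂_i, and √(2k+1) ≤ β̂_k ≤ 1/(1+√3) + √(2k+1). -/
private lemma sqrt_step_lower (s t x : ℝ) (hs0 : 0 ≤ s) (ht0 : 0 ≤ t)
    (ht2 : t ^ 2 = s ^ 2 + 2) (hsx : s ≤ x) (hx1 : 1 ≤ x) :
    t ≤ x + x⁻¹ := by
  have hxpos : (0:ℝ) < x := by linarith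
  have hinv : x * x⁻¹ = 1 := mul_inv_cancel₀ hxpos.ne'
  have hupos : (0:ℝ) < x⁻¹ := by positivity
  nlinarith [sq_nonneg x⁻¹, sq_nonneg (x - s), mul_pos hxpos hupos]

private lemma sqrt_step_upper (c s t x : ℝ) (hc : 0 < c) (hs1 : 1 ≤ s) (ht0 : 0 ≤ t)
    (ht2 : t ^ 2 = s ^ 2 + 2) (htc : t ≤ s + 2 * c) (hx1 : 1 ≤ x) (hxy : x ≤ c + s) :
    x + x⁻¹ ≤ c + t := by
  have hxpos : (0:ℝ) < x := by linarith
  have hinv : x * x⁻¹ = 1 := mul_inv_cancel₀ hxpos.ne'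
  have hupos : (0:ℝ) < x⁻¹ := by positivity
  have hy : (0:ℝ) < c + s := by linarith
  have hv : (0:ℝ) < (c + s)⁻¹ := by positivity
  have hyv : (c + s) * (c + s)⁻¹ = 1 := mul_inv_cancel₀ hy.ne'
  have hu1 : x⁻¹ ≤ 1 := by nlinarith
  have hv1 : (c + s)⁻¹ ≤ 1 := by nlinarith
  -- step A : x + x⁻¹ ≤ (c+s) + (c+s)⁻¹
  have hid : x⁻¹ - (c + s)⁻¹ = (c + s - x) * (x⁻¹ * (c + s)⁻¹) := by
    field_simp
  have stepA : x + x⁻¹ ≤ (c + s) + (c + s)⁻¹ := by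
    nlinarith [mul_nonneg (sub_nonneg.2 hxy)
      (sub_nonneg.2 (mul_le_one₀ hu1 hv.le hv1))]
  -- step B : (c+s) + (c+s)⁻¹ ≤ c + t
  have hts : s ≤ t := by nlinarith
  have key : 1 ≤ (t - s) * (c + s) := by
    nlinarith [mul_nonneg (sub_nonneg.2 hts) (show (0:ℝ) ≤ 2 * (c + s) - (t + s) by linarith)]
  have stepB : (c + s) + (c + s)⁻¹ ≤ c + t := by
    nlinarith [mul_le_mul_of_nonneg_right key hv.le, hyv]
  linarith

/-- Properties (4.8) and (4.9) of Nesterov's auxiliary sequence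
`β̂₋₁ = β̂₀ = 1`, `β̂_{k+1} = β̂_k + 1/β̂_k`:
`β̂_k = Σ_{i=-1}^{k-1} 1/β̂_i` and `√(2k+1) ≤ β̂_k ≤ 1/(1+√3) + √(2k+1)` for `k ≥ 0`.
(Index shifted: `b n` is the paper's `β̂_{n-1}`.) -/
theorem nesterov_hat_beta_properties
    (b : ℕ → ℝ) (hb0 : b 0 = 1) (hb1 : b 1 = 1)
    (hbrec : ∀ n, 1 ≤ n → b (n + 1) = b n + (b n)⁻¹) :
    ∀ k : ℕ, b (k + 1) = (∑ i ∈ Finset.range (k + 1), (b i)⁻¹)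
      ∧ Real.sqrt (2 * (k : ℝ) + 1) ≤ b (k + 1)
      ∧ b (k + 1) ≤ 1 / (1 + Real.sqrt 3) + Real.sqrt (2 * (k : ℝ) + 1) := by
  have hr2 : Real.sqrt 3 ^ 2 = 3 := Real.sq_sqrt (by norm_num)
  have hr1 : 1 ≤ Real.sqrt 3 := by nlinarith [Real.sqrt_nonneg 3]
  have hc : 0 < 1 / (1 + Real.sqrt 3) := by positivity
  have hc2 : 2 * (1 / (1 + Real.sqrt 3)) = Real.sqrt 3 - 1 := by
    have h : (1:ℝ) + Real.sqrt 3 ≠ 0 := by positivity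
    field_simp
    nlinarith
  intro k
  induction k with
  | zero =>
    refine ⟨by simp [hb1, hb0], ?_, ?_⟩
    · simp only [Nat.cast_zero]
      rw [show (2:ℝ) * 0 + 1 = 1 by ring, Real.sqrt_one, hb1]
    · simp only [Nat.cast_zero]
      rw [show (2:ℝ) * 0 + 1 = 1 by ring, Real.sqrt_one, hb1]
      linarith
  | succ k ih =>
    obtain ⟨heq, hlow, hupp⟩ := ih
    have hs0 : 0 ≤ Real.sqrt (2 * (k:ℝ) + 1) := Real.sqrt_nonneg _
    have hs2 : Real.sqrt (2 * (k:ℝ) + 1) ^ 2 = 2 * (k:ℝ) + 1 :=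
      Real.sq_sqrt (by positivity)
    have hs1 : 1 ≤ Real.sqrt (2 * (k:ℝ) + 1) := by
      have h := Real.sqrt_le_sqrt
        (show (1:ℝ) ≤ 2 * (k:ℝ) + 1 by have := Nat.cast_nonneg (α := ℝ) k; linarith)
      simpa using h
    have hcast : ((k + 1 : ℕ) : ℝ) = (k : ℝ) + 1 := by push_cast; ring
    have ht0 : 0 ≤ Real.sqrt (2 * ((k:ℝ) + 1) + 1) := Real.sqrt_nonneg _
    have ht2 : Real.sqrt (2 * ((k:ℝ) + 1) + 1) ^ 2 = Real.sqrt (2 * (k:ℝ) + 1) ^ 2 + 2 := by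
      rw [hs2, Real.sq_sqrt (by positivity : (0:ℝ) ≤ 2 * ((k:ℝ) + 1) + 1)]
      ring
    have hx1 : 1 ≤ b (k + 1) := le_trans hs1 hlow
    have hxpos : 0 < b (k + 1) := by linarith
    have hrec : b (k + 2) = b (k + 1) + (b (k + 1))⁻¹ := hbrec (k + 1) (by omega)
    have htc : Real.sqrt (2 * ((k:ℝ) + 1) + 1)
        ≤ Real.sqrt (2 * (k:ℝ) + 1) + 2 * (1 / (1 + Real.sqrt 3)) := by
      rw [hc2]
      nlinarith [ht0, hs1, hr1, ht2, hs2, hr2]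
    refine ⟨?_, ?_, ?_⟩
    · rw [Finset.sum_range_succ, ← heq, hrec]
    · rw [hcast, hrec]
      exact sqrt_step_lower _ _ _ hs0 ht0 ht2 hlow hx1
    · rw [hcast, hrec]
      exact sqrt_step_upper _ _ _ _ hc hs1 ht0 ht2 htc hx1 hupp
end

section
/- Suppose f belongs to the class of structured problems with lower convex approximation l_f(y; x) and functions L(y) > 0, δ(y) ≥ 0, and let {ψ_k} satisfy Property 1 with z_k := argmin_{x∈Q} ψ_k(x). Suppose the relation (R_k): S_k f(x̂_k) ≤ min_{x∈Q} ψ_k(x) + C_k holds for some k ≥ 0. If x_{k+1} = (S_k x̂_k + λ_{k+1} z_k)/S_{k+1} and σ β_k S_{k+1}/λ_{k+1}² ≥ L(x_{k+1}), then (R_{k+1}) holds with x̂_{k+1} := (S_k x̂_k + λ_{k+1} z_{k+1})/S_{k+1} and C_{k+1} := C_k + S_{k+1} δ(x_{k+1}). -/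
/-!
Write `S = S_k`, `S' = S_{k+1}` and `x̂' = (S x̂_k + λ z_{k+1}) / S'`. The upper model at
`x_{k+1}` together with convexity of `l_f(x_{k+1}; ·)` and `l_f ≤ f` give
`S' f(x̂') ≤ S f(x̂_k) + λ l_f(x_{k+1}; z_{k+1}) + (L λ² / 2S') ‖z_{k+1} - z_k‖² + S' δ`,
since `x̂' - x_{k+1} = (λ / S') (z_{k+1} - z_k)`. The step condition bounds the quadratic term by
`(σ β_k / 2) ‖z_{k+1} - z_k‖²`, and Property 1 (ii) at `z_{k+1}`, combined with the strong
convexity of `d` and `β_k ≤ β_{k+1}`, shows that `min ψ_{k+1}` exceeds `min ψ_k` by at least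
`λ l_f(x_{k+1}; z_{k+1}) + (σ β_k / 2) ‖z_{k+1} - z_k‖²`.
-/

open Finset

section

variable {E : Type*} [NormedAddCommGroup E] [NormedSpace ℝ E]

theorem inv_smul_smul_add_eq {S t : ℝ} (p w : E) :
    (S + t)⁻¹ • (S • p + t • w) = (S / (S + t)) • p + (t / (S + t)) • w := by
  rw [smul_add, smul_smul, smul_smul, div_eq_inv_mul, div_eq_inv_mul]

theorem Convex.inv_smul_smul_add_mem {Q : Set E} (hQ : Convex ℝ Q) {S t : ℝ} (hS : 0 ≤ S)
    (ht : 0 ≤ t) (hSt : 0 < S + t) {p w : E} (hp : p ∈ Q) (hw : w ∈ Q) :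
    (S + t)⁻¹ • (S • p + t • w) ∈ Q := by
  rw [inv_smul_smul_add_eq]
  exact hQ hp hw (by positivity) (by positivity) (by field_simp)

theorem ConvexOn.mul_map_inv_smul_smul_add_le {Q : Set E} {g : E → ℝ} (hg : ConvexOn ℝ Q g)
    {S t : ℝ} (hS : 0 ≤ S) (ht : 0 ≤ t) (hSt : 0 < S + t) {p w : E} (hp : p ∈ Q) (hw : w ∈ Q) :
    (S + t) * g ((S + t)⁻¹ • (S • p + t • w)) ≤ S * g p + t * g w := by
  have hconv := hg.2 hp hw (div_nonneg hS hSt.le) (div_nonneg ht hSt.le) (by field_simp)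
  rw [inv_smul_smul_add_eq]
  calc (S + t) * g ((S / (S + t)) • p + (t / (S + t)) • w)
      ≤ (S + t) * (S / (S + t) * g p + t / (S + t) * g w) := by
        gcongr; simpa only [smul_eq_mul] using hconv
    _ = S * g p + t * g w := by field_simp

theorem norm_inv_smul_smul_add_sub {S t : ℝ} (hSt : 0 < S + t) (ht : 0 ≤ t) (p w w' : E) :
    ‖(S + t)⁻¹ • (S • p + t • w') - (S + t)⁻¹ • (S • p + t • w)‖ = t / (S + t) * ‖w' - w‖ := by
  rw [← smul_sub, add_sub_add_left_eq_sub, ← smul_sub, smul_smul, norm_smul, Real.norm_eq_abs,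
    abs_of_nonneg (by positivity), inv_mul_eq_div]

theorem mul_map_inv_smul_smul_add_le_of_model {Q : Set E} (hQ : Convex ℝ Q) {f g : E → ℝ}
    {y : E} {L δ : ℝ} (hg : ConvexOn ℝ Q g) (hgf : ∀ u ∈ Q, g u ≤ f u)
    (hfg : ∀ u ∈ Q, f u ≤ g u + L / 2 * ‖u - y‖ ^ 2 + δ)
    {S t : ℝ} (hS : 0 ≤ S) (ht : 0 < t) {p w w' : E} (hp : p ∈ Q) (hw' : w' ∈ Q)
    (hy : y = (S + t)⁻¹ • (S • p + t • w)) :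
    (S + t) * f ((S + t)⁻¹ • (S • p + t • w'))
      ≤ S * f p + t * g w' + L * t ^ 2 / (2 * (S + t)) * ‖w' - w‖ ^ 2 + (S + t) * δ := by
  have hSt : 0 < S + t := by linarith
  set q := (S + t)⁻¹ • (S • p + t • w')
  have hq : q ∈ Q := hQ.inv_smul_smul_add_mem hS ht.le hSt hp hw'
  have hdist : ‖q - y‖ = t / (S + t) * ‖w' - w‖ := by
    rw [hy]; exact norm_inv_smul_smul_add_sub hSt ht.le p w w'
  calc (S + t) * f q ≤ (S + t) * (g q + L / 2 * ‖q - y‖ ^ 2 + δ) := by gcongr; exact hfg q hq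
    _ = (S + t) * g q + L * t ^ 2 / (2 * (S + t)) * ‖w' - w‖ ^ 2 + (S + t) * δ := by
      rw [hdist]; field_simp
    _ ≤ S * g p + t * g w' + L * t ^ 2 / (2 * (S + t)) * ‖w' - w‖ ^ 2 + (S + t) * δ := by
      gcongr; exact hg.mul_map_inv_smul_smul_add_le hS ht.le hSt hp hw'
    _ ≤ S * f p + t * g w' + L * t ^ 2 / (2 * (S + t)) * ‖w' - w‖ ^ 2 + (S + t) * δ := by
      gcongr; exact hgf p hp

/-- Property 1 (ii) at `u`, with the linearization of `d` at `w` bounded through the strong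
convexity of `d`. -/
theorem add_mul_sq_le_of_estimate_step {σ β β' A B : ℝ} {d : E → ℝ} {d' : E → E →L[ℝ] ℝ}
    {w u : E} (hstep : A + β' * d u - β * (d w + d' w (u - w)) ≤ B)
    (hBreg : σ / 2 * ‖u - w‖ ^ 2 ≤ d u - d w - d' w (u - w)) (hdu : 0 ≤ d u) (hβ : 0 ≤ β)
    (hββ' : β ≤ β') :
    A + σ * β / 2 * ‖u - w‖ ^ 2 ≤ B := by
  have hlin : β * (σ / 2 * ‖u - w‖ ^ 2) ≤ β * (d u - d w - d' w (u - w)) :=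
    mul_le_mul_of_nonneg_left hBreg hβ
  have hscale : β * d u ≤ β' * d u := mul_le_mul_of_nonneg_right hββ' hdu
  linarith

end

/-- Indices are shifted by one: `ψ (k+1)`, `z (k+1)`, `β (k+1)` are the paper's `ψ_k`, `z_k`, `β_k`. -/
theorem estrel_structured_step_alt_general
    {E : Type*} [NormedAddCommGroup E] [NormedSpace ℝ E]
    (Q : Set E) (hQcv : Convex ℝ Q)
    (f : E → ℝ)
    (σ : ℝ)
    (d : E → ℝ) (d' : E → E →L[ℝ] ℝ)
    (hd_nonneg : ∀ u ∈ Q, 0 ≤ d u)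
    (hBreg : ∀ w ∈ Q, ∀ u ∈ Q, σ / 2 * ‖u - w‖ ^ 2 ≤ d u - d w - d' w (u - w))
    (lam : ℕ → ℝ) (hlam : ∀ k, 0 < lam k)
    (β : ℕ → ℝ) (hβ0 : 0 < β 0) (hβmono : ∀ k, β k ≤ β (k + 1))
    (x : ℕ → E) (hxQ : ∀ k, x k ∈ Q)
    (ψ : ℕ → E → ℝ) (z : ℕ → E)
    (hzQ : ∀ n, z n ∈ Q)
    (lf : E → E → ℝ) (L : E → ℝ) (δ : E → ℝ)
    (hlf_cv : ∀ y ∈ Q, ConvexOn ℝ Q (lf y))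
    (hlf_lb : ∀ y ∈ Q, ∀ u ∈ Q, lf y u ≤ f u)
    (hlf_ub : ∀ y ∈ Q, ∀ u ∈ Q, f u ≤ lf y u + L y / 2 * ‖u - y‖ ^ 2 + δ y)
    (hP2 : ∀ n : ℕ, ∀ u ∈ Q,
      ψ n (z n) + lam n * lf (x n) u + β (n + 1) * d u
        - β n * (d (z n) + d' (z n) (u - z n)) ≤ ψ (n + 1) u)
    (k : ℕ) (xhat : E) (hxhatQ : xhat ∈ Q) (C : ℝ)
    (hRk : (∑ i ∈ Finset.range (k + 1), lam i) * f xhat ≤ ψ (k + 1) (z (k + 1)) + C)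
    (hx : x (k + 1) = (∑ i ∈ Finset.range (k + 2), lam i)⁻¹ •
        ((∑ i ∈ Finset.range (k + 1), lam i) • xhat + lam (k + 1) • z (k + 1)))
    (hcond : L (x (k + 1)) ≤ σ * β (k + 1) * (∑ i ∈ Finset.range (k + 2), lam i) / (lam (k + 1)) ^ 2) :
    (∑ i ∈ Finset.range (k + 2), lam i) * f ((∑ i ∈ Finset.range (k + 2), lam i)⁻¹ •
        ((∑ i ∈ Finset.range (k + 1), lam i) • xhat + lam (k + 1) • z (k + 2)))
      ≤ ψ (k + 2) (z (k + 2)) + (C + (∑ i ∈ Finset.range (k + 2), lam i) * δ (x (k + 1))) := by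
  have hS' : ∑ i ∈ range (k + 2), lam i = ∑ i ∈ range (k + 1), lam i + lam (k + 1) :=
    sum_range_succ lam (k + 1)
  rw [hS'] at hx hcond ⊢
  set S := ∑ i ∈ range (k + 1), lam i
  set t := lam (k + 1)
  have hS : 0 ≤ S := sum_nonneg fun i _ ↦ (hlam i).le
  have ht : 0 < t := hlam (k + 1)
  have hβ : 0 ≤ β (k + 1) := hβ0.le.trans (monotone_nat_of_le_succ hβmono (Nat.zero_le _))
  set y := x (k + 1)
  have hf := mul_map_inv_smul_smul_add_le_of_model hQcv (hlf_cv y (hxQ _)) (hlf_lb y (hxQ _))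
    (hlf_ub y (hxQ _)) hS ht hxhatQ (hzQ (k + 2)) hx
  have hquad : L y * t ^ 2 / (2 * (S + t)) ≤ σ * β (k + 1) / 2 := by
    rw [le_div_iff₀ (by positivity)] at hcond
    rw [div_le_iff₀ (by positivity)]
    linarith
  have hquadN := mul_le_mul_of_nonneg_right hquad (sq_nonneg ‖z (k + 2) - z (k + 1)‖)
  have hψ := add_mul_sq_le_of_estimate_step (hP2 (k + 1) _ (hzQ (k + 2)))
    (hBreg _ (hzQ (k + 1)) _ (hzQ (k + 2))) (hd_nonneg _ (hzQ (k + 2))) hβ (hβmono (k + 1))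
  linarith

/-- Theorem 5.1 (b'): for structured problems, if `(R_k)` holds,
`x_{k+1} = (S_k x̂_k + λ_{k+1} z_k)/S_{k+1}` and `σ β_k S_{k+1}/λ_{k+1}² ≥ L(x_{k+1})`,
then `(R_{k+1})` holds with `x̂_{k+1} := (S_k x̂_k + λ_{k+1} z_{k+1})/S_{k+1}` and
`C_{k+1} := C_k + S_{k+1} δ(x_{k+1})`.
(Indices shifted: `ψ (k+1)`, `z (k+1)`, `β (k+1)` are the paper's `ψ_k`, `z_k`, `β_k`.) -/
theorem estrel_structured_step_alt
    {E : Type*} [NormedAddCommGroup E] [NormedSpace ℝ E] [FiniteDimensional ℝ E]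
    (Q : Set E) (hQne : Q.Nonempty) (hQcl : IsClosed Q) (hQcv : Convex ℝ Q)
    (f : E → ℝ) (hf_cv : ConvexOn ℝ Q f) (hf_lsc : LowerSemicontinuousOn f Q)
    (σ : ℝ) (hσ : 0 < σ)
    (d : E → ℝ) (d' : E → E →L[ℝ] ℝ)
    (hd_sc : StrongConvexOn Q σ d)
    (hd_diff : ∀ y ∈ Q, HasFDerivWithinAt d (d' y) Q y)
    (x₀ : E) (hx₀Q : x₀ ∈ Q) (hdx₀ : d x₀ = 0) (hd_nonneg : ∀ u ∈ Q, 0 ≤ d u)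
    (hBreg : ∀ w ∈ Q, ∀ u ∈ Q, σ / 2 * ‖u - w‖ ^ 2 ≤ d u - d w - d' w (u - w))
    (lam : ℕ → ℝ) (hlam : ∀ k, 0 < lam k)
    (β : ℕ → ℝ) (hβ0 : 0 < β 0) (hβmono : ∀ k, β k ≤ β (k + 1))
    (x : ℕ → E) (hxQ : ∀ k, x k ∈ Q)
    (ψ : ℕ → E → ℝ) (z : ℕ → E)
    (hzQ : ∀ n, z n ∈ Q) (hzmin : ∀ n, ∀ u ∈ Q, ψ n (z n) ≤ ψ n u)
    (lf : E → E → ℝ) (L : E → ℝ) (δ : E → ℝ)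
    (hL : ∀ y ∈ Q, 0 < L y) (hδ : ∀ y ∈ Q, 0 ≤ δ y)
    (hlf_cv : ∀ y ∈ Q, ConvexOn ℝ Q (lf y))
    (hlf_lsc : ∀ y ∈ Q, LowerSemicontinuousOn (lf y) Q)
    (hlf_lb : ∀ y ∈ Q, ∀ u ∈ Q, lf y u ≤ f u)
    (hlf_ub : ∀ y ∈ Q, ∀ u ∈ Q, f u ≤ lf y u + L y / 2 * ‖u - y‖ ^ 2 + δ y)
    (hP1a : ψ 0 (z 0) = 0) (hP1b : z 0 = x₀)
    (hP2 : ∀ n : ℕ, ∀ u ∈ Q,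
      ψ n (z n) + lam n * lf (x n) u + β (n + 1) * d u
        - β n * (d (z n) + d' (z n) (u - z n)) ≤ ψ (n + 1) u)
    (hP3 : ∀ k : ℕ, ∀ u ∈ Q,
      ψ (k + 1) (z (k + 1)) ≤ (∑ i ∈ Finset.range (k + 1), lam i * lf (x i) u)
        + β (k + 1) * (d (z (k + 1)) + d' (z (k + 1)) (u - z (k + 1))))
    (k : ℕ) (xhat : E) (hxhatQ : xhat ∈ Q) (C : ℝ)
    (hRk : (∑ i ∈ Finset.range (k + 1), lam i) * f xhat ≤ ψ (k + 1) (z (k + 1)) + C)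
    (hx : x (k + 1) = (∑ i ∈ Finset.range (k + 2), lam i)⁻¹ •
        ((∑ i ∈ Finset.range (k + 1), lam i) • xhat + lam (k + 1) • z (k + 1)))
    (hcond : L (x (k + 1)) ≤ σ * β (k + 1) * (∑ i ∈ Finset.range (k + 2), lam i) / (lam (k + 1)) ^ 2) :
    (∑ i ∈ Finset.range (k + 2), lam i) * f ((∑ i ∈ Finset.range (k + 2), lam i)⁻¹ •
        ((∑ i ∈ Finset.range (k + 1), lam i) • xhat + lam (k + 1) • z (k + 2)))
      ≤ ψ (k + 2) (z (k + 2)) + (C + (∑ i ∈ Finset.range (k + 2), lam i) * δ (x (k + 1))) :=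
  estrel_structured_step_alt_general Q hQcv f σ d d' hd_nonneg hBreg lam hlam β hβ0 hβmono x hxQ ψ z
    hzQ lf L δ hlf_cv hlf_lb hlf_ub hP2 k xhat hxhatQ C hRk hx hcond
end

section
/- Suppose f belongs to the class of structured problems, and let {(z_{k−1}, x_k, x̂_k)}_{k≥0} be generated by the classical gradient method: x_k := z_{k−1} := argmin_{x∈Q} ψ_{k−1}(x) and x̂_k := (1/S_k) Σ_{i=0}^k λ_i x_{i+1}, where {ψ_k} is any sequence of auxiliary functions satisfying Property 1. If σ β_{k−1}/λ_k ≥ L(x_k) for all k ≥ 0, then for all k ≥ 0: f(x̂_k) − f(x*) ≤ (1/S_k) Σ_{i=0}^k λ_i f(x_{i+1}) − f(x*) ≤ (β_k l_d(z_k; x*) + Σ_{i=0}^k λ_i δ(x_i))/S_k. -/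
/-- Corollary 5.1 (a): convergence estimate of the classical gradient method for
structured problems.  (Indices shifted: `z k`, `β k` stand for the paper's
`z_{k-1}`, `β_{k-1}`.) -/
theorem classical_gradient_method_estimate
    {E : Type*} [NormedAddCommGroup E] [NormedSpace ℝ E] [FiniteDimensional ℝ E]
    (Q : Set E) (hQne : Q.Nonempty) (hQcl : IsClosed Q) (hQcv : Convex ℝ Q)
    (f : E → ℝ) (hf_cv : ConvexOn ℝ Q f) (hf_lsc : LowerSemicontinuousOn f Q)
    (σ : ℝ) (hσ : 0 < σ)
    (d : E → ℝ) (d' : E → E →L[ℝ] ℝ)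
    (hd_sc : StrongConvexOn Q σ d)
    (hd_diff : ∀ y ∈ Q, HasFDerivWithinAt d (d' y) Q y)
    (x₀ : E) (hx₀Q : x₀ ∈ Q) (hdx₀ : d x₀ = 0) (hd_nonneg : ∀ u ∈ Q, 0 ≤ d u)
    (hBreg : ∀ w ∈ Q, ∀ u ∈ Q, σ / 2 * ‖u - w‖ ^ 2 ≤ d u - d w - d' w (u - w))
    (lam : ℕ → ℝ) (hlam : ∀ k, 0 < lam k)
    (β : ℕ → ℝ) (hβ0 : 0 < β 0) (hβmono : ∀ k, β k ≤ β (k + 1))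
    (x : ℕ → E) (hxQ : ∀ k, x k ∈ Q)
    (ψ : ℕ → E → ℝ) (z : ℕ → E)
    (hzQ : ∀ n, z n ∈ Q) (hzmin : ∀ n, ∀ u ∈ Q, ψ n (z n) ≤ ψ n u)
    (lf : E → E → ℝ) (L : E → ℝ) (δ : E → ℝ)
    (hL : ∀ y ∈ Q, 0 < L y) (hδ : ∀ y ∈ Q, 0 ≤ δ y)
    (hlf_cv : ∀ y ∈ Q, ConvexOn ℝ Q (lf y))
    (hlf_lsc : ∀ y ∈ Q, LowerSemicontinuousOn (lf y) Q)
    (hlf_lb : ∀ y ∈ Q, ∀ u ∈ Q, lf y u ≤ f u)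
    (hlf_ub : ∀ y ∈ Q, ∀ u ∈ Q, f u ≤ lf y u + L y / 2 * ‖u - y‖ ^ 2 + δ y)
    (hP1a : ψ 0 (z 0) = 0) (hP1b : z 0 = x₀)
    (hP2 : ∀ n : ℕ, ∀ u ∈ Q,
      ψ n (z n) + lam n * lf (x n) u + β (n + 1) * d u
        - β n * (d (z n) + d' (z n) (u - z n)) ≤ ψ (n + 1) u)
    (hP3 : ∀ k : ℕ, ∀ u ∈ Q,
      ψ (k + 1) (z (k + 1)) ≤ (∑ i ∈ Finset.range (k + 1), lam i * lf (x i) u)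
        + β (k + 1) * (d (z (k + 1)) + d' (z (k + 1)) (u - z (k + 1))))
    (xs : E) (hxsQ : xs ∈ Q) (hxs_opt : ∀ u ∈ Q, f xs ≤ f u)
    (xhat : ℕ → E)
    (hmx : ∀ k, x k = z k)
    (hmxhat : ∀ k, xhat k = (∑ i ∈ Finset.range (k + 1), lam i)⁻¹ • ∑ i ∈ Finset.range (k + 1), lam i • x (i + 1))
    (hcond : ∀ k, L (x k) ≤ σ * β k / lam k) :
    ∀ k : ℕ,
      f (xhat k) - f xs ≤
        (∑ i ∈ Finset.range (k + 1), lam i)⁻¹ * (∑ i ∈ Finset.range (k + 1), lam i * f (x (i + 1))) - f xs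
      ∧ (∑ i ∈ Finset.range (k + 1), lam i)⁻¹ * (∑ i ∈ Finset.range (k + 1), lam i * f (x (i + 1))) - f xs ≤
        (β (k + 1) * (d (z (k + 1)) + d' (z (k + 1)) (xs - z (k + 1)))
          + ∑ i ∈ Finset.range (k + 1), lam i * δ (x i)) / (∑ i ∈ Finset.range (k + 1), lam i) := by
  -- positivity of β
  have hβpos : ∀ n, 0 < β n := by
    intro n
    induction n with
    | zero => exact hβ0
    | succ m ih => exact ih.trans_le (hβmono m)
  -- per-step inequality
  have hstep : ∀ n : ℕ,
      ψ n (z n) + lam n * (f (x (n + 1)) - δ (x n)) ≤ ψ (n + 1) (z (n + 1)) := by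
    intro n
    have h2 := hP2 n (z (n + 1)) (hzQ (n + 1))
    have hB := hBreg (z n) (hzQ n) (z (n + 1)) (hzQ (n + 1))
    have hub := hlf_ub (x n) (hxQ n) (z (n + 1)) (hzQ (n + 1))
    have hc := hcond n
    have hlp := hlam n
    have hzn : x n = z n := hmx n
    have hxn1 : x (n + 1) = z (n + 1) := hmx (n + 1)
    rw [hzn] at hub hc h2
    rw [hxn1, hzn]
    have hlm : lam n * L (z n) ≤ σ * β n := by
      nlinarith [(le_div_iff₀ hlp).mp hc]
    have hnn : (0:ℝ) ≤ ‖z (n + 1) - z n‖ ^ 2 := by positivity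
    have hd2 : 0 ≤ d (z (n + 1)) := hd_nonneg _ (hzQ (n + 1))
    have hβm := hβmono n
    have hβn := hβpos n
    refine le_trans ?_ h2
    nlinarith [mul_le_mul_of_nonneg_right hlm hnn,
      mul_le_mul_of_nonneg_left hB hβn.le,
      mul_le_mul_of_nonneg_right hβm hd2,
      mul_le_mul_of_nonneg_left hub hlp.le]
  -- summed inequality
  have hsum : ∀ n : ℕ,
      (∑ i ∈ Finset.range n, lam i * (f (x (i + 1)) - δ (x i))) ≤ ψ n (z n) := by
    intro n
    induction n with
    | zero => simp [hP1a]
    | succ m ih =>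
      rw [Finset.sum_range_succ]
      calc (∑ i ∈ Finset.range m, lam i * (f (x (i + 1)) - δ (x i)))
            + lam m * (f (x (m + 1)) - δ (x m))
          ≤ ψ m (z m) + lam m * (f (x (m + 1)) - δ (x m)) := by linarith
        _ ≤ ψ (m + 1) (z (m + 1)) := hstep m
  intro k
  set S := ∑ i ∈ Finset.range (k + 1), lam i with hSdef
  have hS : 0 < S := Finset.sum_pos (fun i _ => hlam i) ⟨0, Finset.mem_range.mpr (Nat.succ_pos k)⟩
  -- Part (b) core estimate
  have h3 := hP3 k xs hxsQ
  have hsum' := hsum (k + 1)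
  have hlfsum : (∑ i ∈ Finset.range (k + 1), lam i * lf (x i) xs)
      ≤ S * f xs := by
    rw [hSdef, Finset.sum_mul]
    refine Finset.sum_le_sum fun i _ => ?_
    exact mul_le_mul_of_nonneg_left (hlf_lb (x i) (hxQ i) xs hxsQ) (hlam i).le
  have hkey : (∑ i ∈ Finset.range (k + 1), lam i * f (x (i + 1)))
      ≤ β (k + 1) * (d (z (k + 1)) + d' (z (k + 1)) (xs - z (k + 1)))
        + (∑ i ∈ Finset.range (k + 1), lam i * δ (x i)) + S * f xs := by
    have hsplit : (∑ i ∈ Finset.range (k + 1), lam i * (f (x (i + 1)) - δ (x i)))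
        = (∑ i ∈ Finset.range (k + 1), lam i * f (x (i + 1)))
          - (∑ i ∈ Finset.range (k + 1), lam i * δ (x i)) := by
      rw [← Finset.sum_sub_distrib]
      exact Finset.sum_congr rfl fun i _ => by ring
    rw [hsplit] at hsum'
    linarith
  constructor
  · -- Jensen
    have hJ : f (xhat k) ≤
        (Finset.range (k + 1)).centerMass lam (f ∘ fun i => x (i + 1)) := by
      have := hf_cv.map_centerMass_le (t := Finset.range (k + 1))
        (fun i _ => (hlam i).le) (by simpa [hSdef] using hS)
        (fun i _ => hxQ (i + 1))
      rw [hmxhat k]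
      simpa [Finset.centerMass, hSdef] using this
    have hcm : (Finset.range (k + 1)).centerMass lam (f ∘ fun i => x (i + 1))
        = S⁻¹ * (∑ i ∈ Finset.range (k + 1), lam i * f (x (i + 1))) := by
      simp [Finset.centerMass, hSdef, smul_eq_mul]
    linarith [hJ.trans_eq hcm]
  · -- divide by S
    have heq : S⁻¹ * (∑ i ∈ Finset.range (k + 1), lam i * f (x (i + 1))) - f xs
        = ((∑ i ∈ Finset.range (k + 1), lam i * f (x (i + 1))) - S * f xs) / S := by
      field_simp
    rw [heq]
    exact (div_le_div_iff_of_pos_right hS).mpr (by linarith)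
end

section
/- Suppose f belongs to the class of structured problems, and let {(z_{k−1}, x_k, x̂_k)}_{k≥0} be generated by the fast gradient method: x_0 := z_{−1} := argmin_{x∈Q} d(x), x̂_0 := z_0 := argmin_{x∈Q} ψ_0(x), and for k ≥ 0: x_{k+1} := (Σ_{i=0}^k λ_i z_i + λ_{k+1} z_k)/S_{k+1}, z_{k+1} := argmin_{x∈Q} ψ_{k+1}(x), x̂_{k+1} := (1/S_{k+1}) Σ_{i=0}^{k+1} λ_i z_i, where {ψ_k} is any sequence of auxiliary functions satisfying Property 1. If σ β_{k−1} S_k/λ_k² ≥ L(x_k) for all k ≥ 0, then for all k ≥ 0: f(x̂_k) − f(x*) ≤ (β_k l_d(z_k; x*) + Σ_{i=0}^k S_i δ(x_i))/S_k. -/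
/-!
Each step compares the upper model of `f` at `x_k` with the auxiliary function `ψ_k`. Since
`x̂_k` and `x_k` are the same convex combination of `x̂_{k-1}` with `z_k` resp. `z_{k-1}`,
`‖x̂_k - x_k‖ = (λ_k / S_k) ‖z_k - z_{k-1}‖`, and the step-size condition turns the quadratic
term of the model into `σ β_{k-1} / 2 ‖z_k - z_{k-1}‖²`, which strong convexity of `d` absorbs
into the Bregman term `β (d - l_d)` supplied by Property 1 (ii). Summing, `S_k f(x̂_k)` is
bounded by `min ψ_k` plus the accumulated errors, and Property 1 (iii) together with
`l_f ≤ f` at `x*` finishes the estimate.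
-/

open Finset

section

variable {E : Type*} [NormedAddCommGroup E] [NormedSpace ℝ E]

theorem ConvexOn.add_mul_apply_inv_smul_le {Q : Set E} {g : E → ℝ} (hg : ConvexOn ℝ Q g)
    {a b : E} (ha : a ∈ Q) (hb : b ∈ Q) {A l : ℝ} (hA : 0 ≤ A) (hl : 0 < l) :
    (A + l) * g ((A + l)⁻¹ • (A • a + l • b)) ≤ A * g a + l * g b := by
  have hS : 0 < A + l := by linarith
  have h := hg.2 ha hb (div_nonneg hA hS.le) (div_nonneg hl.le hS.le)
    (by rw [← add_div, div_self hS.ne'])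
  rw [smul_add, smul_smul, smul_smul, ← div_eq_inv_mul, ← div_eq_inv_mul]
  calc (A + l) * g ((A / (A + l)) • a + (l / (A + l)) • b)
      ≤ (A + l) * (A / (A + l) * g a + l / (A + l) * g b) := by
        gcongr; simpa only [smul_eq_mul] using h
    _ = A * g a + l * g b := by field_simp

theorem add_mul_le_of_upper_model {Q : Set E} {f g : E → ℝ} (hg : ConvexOn ℝ Q g)
    {a y z z' xh : E} (ha : a ∈ Q) (hz' : z' ∈ Q) {A l L c δ : ℝ} (hA : 0 ≤ A) (hl : 0 < l)
    (hxh : xh = (A + l)⁻¹ • (A • a + l • z')) (hy : y = (A + l)⁻¹ • (A • a + l • z))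
    (hub : f xh ≤ g xh + L / 2 * ‖xh - y‖ ^ 2 + δ) (hL : L ≤ c * (A + l) / l ^ 2) :
    (A + l) * f xh ≤ A * g a + l * g z' + c / 2 * ‖z' - z‖ ^ 2 + (A + l) * δ := by
  have hS : 0 < A + l := by linarith
  have hdist : ‖xh - y‖ = l / (A + l) * ‖z' - z‖ := by
    rw [hxh, hy, ← smul_sub, add_sub_add_left_eq_sub, ← smul_sub, smul_smul, norm_smul,
      Real.norm_eq_abs, abs_of_pos (by positivity), div_eq_inv_mul]
  have hquad : (A + l) * (L / 2 * ‖xh - y‖ ^ 2) ≤ c / 2 * ‖z' - z‖ ^ 2 := by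
    rw [le_div_iff₀ (by positivity)] at hL
    rw [hdist]
    calc (A + l) * (L / 2 * (l / (A + l) * ‖z' - z‖) ^ 2)
        = L * l ^ 2 / (A + l) / 2 * ‖z' - z‖ ^ 2 := by field_simp
      _ ≤ c * (A + l) / (A + l) / 2 * ‖z' - z‖ ^ 2 := by gcongr
      _ = c / 2 * ‖z' - z‖ ^ 2 := by field_simp
  have hconv := hg.add_mul_apply_inv_smul_le ha hz' hA hl
  rw [← hxh] at hconv
  linarith [mul_le_mul_of_nonneg_left hub hS.le]

theorem estimate_step {Q : Set E} {f g : E → ℝ} (hg : ConvexOn ℝ Q g)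
    {a y z z' xh : E} (ha : a ∈ Q) (hz' : z' ∈ Q)
    {A l S L σ β β' δ D ℓ Ψ Ψ' : ℝ} (hA : 0 ≤ A) (hl : 0 < l) (hβ : 0 ≤ β) (hββ' : β ≤ β')
    (hAS : A + l = S) (hxh : xh = S⁻¹ • (A • a + l • z')) (hy : y = S⁻¹ • (A • a + l • z))
    (hlb : g a ≤ f a) (hub : f xh ≤ g xh + L / 2 * ‖xh - y‖ ^ 2 + δ)
    (hL : L ≤ σ * β * S / l ^ 2) (hBreg : σ / 2 * ‖z' - z‖ ^ 2 ≤ D - ℓ) (hD : 0 ≤ D)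
    (hψ : Ψ + l * g z' + β' * D - β * ℓ ≤ Ψ') :
    S * f xh ≤ A * f a + Ψ' - Ψ + S * δ := by
  subst hAS
  have hmodel := add_mul_le_of_upper_model hg ha hz' hA hl hxh hy hub hL
  linarith [mul_le_mul_of_nonneg_left hlb hA, mul_le_mul_of_nonneg_left hBreg hβ,
    mul_le_mul_of_nonneg_right hββ' hD]

theorem le_add_sum_of_le_add_sub {F Ψ e : ℕ → ℝ} (h0 : F 0 ≤ Ψ 1 + e 0)
    (hsucc : ∀ k, F (k + 1) ≤ F k + Ψ (k + 2) - Ψ (k + 1) + e (k + 1)) (k : ℕ) :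
    F k ≤ Ψ (k + 1) + ∑ i ∈ range (k + 1), e i := by
  induction k with
  | zero => simpa using h0
  | succ k ih => linarith [hsucc k, sum_range_succ e (k + 1)]

end

/-- Indices are shifted: `z k`, `ψ k` and `β k` stand for the paper's `z_{k-1}`, `ψ_{k-1}` and
`β_{k-1}`. -/
theorem fast_gradient_method_estimate_general
    {E : Type*} [NormedAddCommGroup E] [NormedSpace ℝ E]
    (Q : Set E) (hQcv : Convex ℝ Q)
    (f : E → ℝ)
    (σ : ℝ)
    (d : E → ℝ) (d' : E → E →L[ℝ] ℝ)
    (hd_nonneg : ∀ u ∈ Q, 0 ≤ d u)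
    (hBreg : ∀ w ∈ Q, ∀ u ∈ Q, σ / 2 * ‖u - w‖ ^ 2 ≤ d u - d w - d' w (u - w))
    (lam : ℕ → ℝ) (hlam : ∀ k, 0 < lam k)
    (β : ℕ → ℝ) (hβ0 : 0 < β 0) (hβmono : ∀ k, β k ≤ β (k + 1))
    (x : ℕ → E) (hxQ : ∀ k, x k ∈ Q)
    (ψ : ℕ → E → ℝ) (z : ℕ → E)
    (hzQ : ∀ n, z n ∈ Q)
    (lf : E → E → ℝ) (L : E → ℝ) (δ : E → ℝ)
    (hlf_cv : ∀ y ∈ Q, ConvexOn ℝ Q (lf y))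
    (hlf_lb : ∀ y ∈ Q, ∀ u ∈ Q, lf y u ≤ f u)
    (hlf_ub : ∀ y ∈ Q, ∀ u ∈ Q, f u ≤ lf y u + L y / 2 * ‖u - y‖ ^ 2 + δ y)
    (hP1a : ψ 0 (z 0) = 0)
    (hP2 : ∀ n : ℕ, ∀ u ∈ Q,
      ψ n (z n) + lam n * lf (x n) u + β (n + 1) * d u
        - β n * (d (z n) + d' (z n) (u - z n)) ≤ ψ (n + 1) u)
    (hP3 : ∀ k : ℕ, ∀ u ∈ Q,
      ψ (k + 1) (z (k + 1)) ≤ (∑ i ∈ Finset.range (k + 1), lam i * lf (x i) u)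
        + β (k + 1) * (d (z (k + 1)) + d' (z (k + 1)) (u - z (k + 1))))
    (xs : E) (hxsQ : xs ∈ Q)
    (xhat : ℕ → E)
    (hmx0 : x 0 = z 0)
    (hmx : ∀ k : ℕ, x (k + 1) = (∑ i ∈ Finset.range (k + 2), lam i)⁻¹ •
        ((∑ i ∈ Finset.range (k + 1), lam i • z (i + 1)) + lam (k + 1) • z (k + 1)))
    (hmxhat : ∀ k, xhat k = (∑ i ∈ Finset.range (k + 1), lam i)⁻¹ • ∑ i ∈ Finset.range (k + 1), lam i • z (i + 1))
    (hcond : ∀ k, L (x k) ≤ σ * β k * (∑ i ∈ Finset.range (k + 1), lam i) / (lam k) ^ 2) :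
    ∀ k : ℕ,
      f (xhat k) - f xs ≤
        (β (k + 1) * (d (z (k + 1)) + d' (z (k + 1)) (xs - z (k + 1)))
          + ∑ i ∈ Finset.range (k + 1), (∑ j ∈ Finset.range (i + 1), lam j) * δ (x i))
        / (∑ i ∈ Finset.range (k + 1), lam i) := by
  have hS : ∀ k, 0 < ∑ i ∈ range (k + 1), lam i := fun k =>
    sum_pos (fun i _ => hlam i) nonempty_range_add_one
  have hβ : ∀ k, 0 ≤ β k := fun k => hβ0.le.trans (monotone_nat_of_le_succ hβmono k.zero_le)
  have hsum : ∀ k, ∑ i ∈ range (k + 1), lam i • z (i + 1) = (∑ i ∈ range (k + 1), lam i) • xhat k :=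
    fun k => by rw [hmxhat, smul_inv_smul₀ (hS k).ne']
  have hxhatQ : ∀ k, xhat k ∈ Q := fun k => (hmxhat k).symm ▸
    hQcv.centerMass_mem (fun i _ => (hlam i).le) (hS k) (fun i _ => hzQ (i + 1))
  have step : ∀ k, ∀ a ∈ Q, ∀ A, 0 ≤ A → A + lam k = ∑ i ∈ range (k + 1), lam i →
      xhat k = (∑ i ∈ range (k + 1), lam i)⁻¹ • (A • a + lam k • z (k + 1)) →
      x k = (∑ i ∈ range (k + 1), lam i)⁻¹ • (A • a + lam k • z k) →
      (∑ i ∈ range (k + 1), lam i) * f (xhat k)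
        ≤ A * f a + ψ (k + 1) (z (k + 1)) - ψ k (z k) + (∑ i ∈ range (k + 1), lam i) * δ (x k) :=
    fun k a ha A hA hAS hxh hx => estimate_step (hlf_cv _ (hxQ k)) ha (hzQ (k + 1)) hA (hlam k)
      (hβ k) (hβmono k) hAS hxh hx (hlf_lb _ (hxQ k) a ha) (hlf_ub _ (hxQ k) _ (hxhatQ k))
      (hcond k) ((hBreg _ (hzQ k) _ (hzQ (k + 1))).trans_eq (sub_sub _ _ _))
      (hd_nonneg _ (hzQ (k + 1))) (hP2 k _ (hzQ (k + 1)))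
  have h0 := step 0 (z 1) (hzQ 1) 0 le_rfl (by simp) (by simp [hmxhat])
    (by simp [hmx0, (hlam 0).ne'])
  have key := le_add_sum_of_le_add_sub (F := fun k => (∑ i ∈ range (k + 1), lam i) * f (xhat k))
    (Ψ := fun k => ψ k (z k)) (e := fun k => (∑ i ∈ range (k + 1), lam i) * δ (x k))
    (by simpa [hP1a] using h0)
    (fun k => step (k + 1) (xhat k) (hxhatQ k) _ (hS k).le (sum_range_succ _ _).symm
      (by rw [hmxhat, sum_range_succ (fun i => lam i • z (i + 1)), hsum]) (by rw [hmx, hsum]))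
  intro k
  have hlin : ∑ i ∈ range (k + 1), lam i * lf (x i) xs ≤ (∑ i ∈ range (k + 1), lam i) * f xs := by
    rw [sum_mul]
    exact sum_le_sum fun i _ => mul_le_mul_of_nonneg_left (hlf_lb _ (hxQ i) xs hxsQ) (hlam i).le
  rw [le_div_iff₀ (hS k)]
  linarith [key k, hP3 k xs hxsQ]

/-- Corollary 5.1 (b): convergence estimate of the fast gradient method for structured
problems.  (Indices shifted: `z k`, `β k` stand for the paper's `z_{k-1}`, `β_{k-1}`.) -/
theorem fast_gradient_method_estimate
    {E : Type*} [NormedAddCommGroup E] [NormedSpace ℝ E] [FiniteDimensional ℝ E]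
    (Q : Set E) (hQne : Q.Nonempty) (hQcl : IsClosed Q) (hQcv : Convex ℝ Q)
    (f : E → ℝ) (hf_cv : ConvexOn ℝ Q f) (hf_lsc : LowerSemicontinuousOn f Q)
    (σ : ℝ) (hσ : 0 < σ)
    (d : E → ℝ) (d' : E → E →L[ℝ] ℝ)
    (hd_sc : StrongConvexOn Q σ d)
    (hd_diff : ∀ y ∈ Q, HasFDerivWithinAt d (d' y) Q y)
    (x₀ : E) (hx₀Q : x₀ ∈ Q) (hdx₀ : d x₀ = 0) (hd_nonneg : ∀ u ∈ Q, 0 ≤ d u)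
    (hBreg : ∀ w ∈ Q, ∀ u ∈ Q, σ / 2 * ‖u - w‖ ^ 2 ≤ d u - d w - d' w (u - w))
    (lam : ℕ → ℝ) (hlam : ∀ k, 0 < lam k)
    (β : ℕ → ℝ) (hβ0 : 0 < β 0) (hβmono : ∀ k, β k ≤ β (k + 1))
    (x : ℕ → E) (hxQ : ∀ k, x k ∈ Q)
    (ψ : ℕ → E → ℝ) (z : ℕ → E)
    (hzQ : ∀ n, z n ∈ Q) (hzmin : ∀ n, ∀ u ∈ Q, ψ n (z n) ≤ ψ n u)
    (lf : E → E → ℝ) (L : E → ℝ) (δ : E → ℝ)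
    (hL : ∀ y ∈ Q, 0 < L y) (hδ : ∀ y ∈ Q, 0 ≤ δ y)
    (hlf_cv : ∀ y ∈ Q, ConvexOn ℝ Q (lf y))
    (hlf_lsc : ∀ y ∈ Q, LowerSemicontinuousOn (lf y) Q)
    (hlf_lb : ∀ y ∈ Q, ∀ u ∈ Q, lf y u ≤ f u)
    (hlf_ub : ∀ y ∈ Q, ∀ u ∈ Q, f u ≤ lf y u + L y / 2 * ‖u - y‖ ^ 2 + δ y)
    (hP1a : ψ 0 (z 0) = 0) (hP1b : z 0 = x₀)
    (hP2 : ∀ n : ℕ, ∀ u ∈ Q,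
      ψ n (z n) + lam n * lf (x n) u + β (n + 1) * d u
        - β n * (d (z n) + d' (z n) (u - z n)) ≤ ψ (n + 1) u)
    (hP3 : ∀ k : ℕ, ∀ u ∈ Q,
      ψ (k + 1) (z (k + 1)) ≤ (∑ i ∈ Finset.range (k + 1), lam i * lf (x i) u)
        + β (k + 1) * (d (z (k + 1)) + d' (z (k + 1)) (u - z (k + 1))))
    (xs : E) (hxsQ : xs ∈ Q) (hxs_opt : ∀ u ∈ Q, f xs ≤ f u)
    (xhat : ℕ → E)
    (hmx0 : x 0 = z 0)
    (hmx : ∀ k : ℕ, x (k + 1) = (∑ i ∈ Finset.range (k + 2), lam i)⁻¹ •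
        ((∑ i ∈ Finset.range (k + 1), lam i • z (i + 1)) + lam (k + 1) • z (k + 1)))
    (hmxhat : ∀ k, xhat k = (∑ i ∈ Finset.range (k + 1), lam i)⁻¹ • ∑ i ∈ Finset.range (k + 1), lam i • z (i + 1))
    (hcond : ∀ k, L (x k) ≤ σ * β k * (∑ i ∈ Finset.range (k + 1), lam i) / (lam k) ^ 2) :
    ∀ k : ℕ,
      f (xhat k) - f xs ≤
        (β (k + 1) * (d (z (k + 1)) + d' (z (k + 1)) (xs - z (k + 1)))
          + ∑ i ∈ Finset.range (k + 1), (∑ j ∈ Finset.range (i + 1), lam j) * δ (x i))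
        / (∑ i ∈ Finset.range (k + 1), lam i) :=
  fast_gradient_method_estimate_general Q hQcv f σ d d' hd_nonneg hBreg lam hlam β hβ0 hβmono x hxQ
    ψ z hzQ lf L δ hlf_cv hlf_lb hlf_ub hP1a hP2 hP3 xs hxsQ xhat hmx0 hmx hmxhat hcond
end

section
/- Suppose f belongs to the class of structured problems in the special case L(·) ≡ L > 0 and δ(·) ≡ δ ≥ 0. Then any sequence {(z_{k−1}, x_k, x̂_k)}_{k≥0} generated by the classical gradient method with parameters λ_k := 1 and β_k := L/σ satisfies, for all k ≥ 0, f(x̂_k) − f(x*) ≤ (1/(k+1)) Σ_{i=0}^k f(x_{i+1}) − f(x*) ≤ L l_d(z_k; x*)/(σ(k+1)) + δ, and for all k ≥ −1 the points z_k, x_{k+1}, x̂_k lie in the set { x ∈ Q : ‖x − x*‖² ≤ 2 d(x*)/σ + (2δ/L)(k+1) }. -/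
/-!
With `λ ≡ 1`, `x = z` and `β σ = L`, Property 1 (ii) makes the minimal values `ψ n (z n)` grow
by at least `f (z (n + 1)) - δ` per step: the quadratic error `L / 2 ‖z (n + 1) - z n‖²` of the
upper model is absorbed by the Bregman term `β (d (z (n + 1)) - l_d (z n; z (n + 1)))`, which is
at least `β σ / 2 ‖z (n + 1) - z n‖²`. Property 1 (iii) at `x*` bounds the same values from above
by `(k + 1) f x* + β l_d (z (k + 1); x*)`. Comparing the two bounds gives the rate, and, since
`l_d (z; x*) ≤ d x* - σ / 2 ‖x* - z‖²` and `f (z i) ≥ f x*`, it also confines the iterates to a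
ball around `x*`. The averages `x̂ k` inherit both bounds by Jensen's inequality and convexity of
the ball.

Indices are shifted by one: `ψ n`, `z n`, `β n` stand for the paper's `ψ_{n-1}`, `z_{n-1}`,
`β_{n-1}`.
-/

open Finset

lemma sum_range_le_of_add_le_succ {a b : ℕ → ℝ} (h₀ : a 0 = 0) (h : ∀ n, a n + b n ≤ a (n + 1))
    (n : ℕ) : ∑ i ∈ range n, b i ≤ a n := by
  induction n with
  | zero => simp [h₀]
  | succ n ih => rw [sum_range_succ]; linarith [h n]

section

variable {E : Type*} [NormedAddCommGroup E] [NormedSpace ℝ E] {Q : Set E} {σ L δ β : ℝ}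
  {d : E → ℝ} {d' : E → E →L[ℝ] ℝ} {f : E → ℝ} {lf : E → E → ℝ} {ψ : ℕ → E → ℝ} {z : ℕ → E}

/-- First-order optimality `0 ≤ D (u - x₀)` at the minimiser removes the linear term. -/
lemma sq_norm_sub_le_sub_of_isMinOn {D : E →L[ℝ] ℝ} {x₀ u : E} (hQ : Convex ℝ Q)
    (hx₀ : x₀ ∈ Q) (hu : u ∈ Q) (hmin : IsMinOn d Q x₀) (hd : HasFDerivWithinAt d D Q x₀)
    (hBreg : σ / 2 * ‖u - x₀‖ ^ 2 ≤ d u - d x₀ - D (u - x₀)) :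
    σ / 2 * ‖u - x₀‖ ^ 2 ≤ d u - d x₀ := by
  have := hmin.localize.hasFDerivWithinAt_nonneg hd
    (sub_mem_posTangentConeAt_of_segment_subset (hQ.segment_subset hx₀ hu))
  linarith

lemma convex_sep_sq_norm_sub_le (hQ : Convex ℝ Q) (c : E) (r : ℝ) :
    Convex ℝ {u ∈ Q | ‖u - c‖ ^ 2 ≤ r} := by
  simpa [dist_eq_norm] using ((convexOn_dist c hQ).pow (fun _ _ ↦ dist_nonneg) 2).convex_le r

lemma psi_min_add_le_psi_min_succ (hβ : 0 ≤ β) (hLβ : L ≤ β * σ) (hzQ : ∀ n, z n ∈ Q)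
    (hBreg : ∀ w ∈ Q, ∀ u ∈ Q, σ / 2 * ‖u - w‖ ^ 2 ≤ d u - d w - d' w (u - w))
    (hlf_ub : ∀ y ∈ Q, ∀ u ∈ Q, f u ≤ lf y u + L / 2 * ‖u - y‖ ^ 2 + δ)
    (hP2 : ∀ n, ∀ u ∈ Q,
      ψ n (z n) + lf (z n) u + β * d u - β * (d (z n) + d' (z n) (u - z n)) ≤ ψ (n + 1) u)
    (n : ℕ) : ψ n (z n) + (f (z (n + 1)) - δ) ≤ ψ (n + 1) (z (n + 1)) := by
  have hstep := hP2 n _ (hzQ (n + 1))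
  have hmodel := hlf_ub _ (hzQ n) _ (hzQ (n + 1))
  have hbreg := mul_le_mul_of_nonneg_left (hBreg _ (hzQ n) _ (hzQ (n + 1))) hβ
  have hquad : L / 2 * ‖z (n + 1) - z n‖ ^ 2 ≤ β * (σ / 2 * ‖z (n + 1) - z n‖ ^ 2) := by
    nlinarith [sq_nonneg ‖z (n + 1) - z n‖]
  linarith

lemma psi_min_succ_le_mul_add_linearization (xs : E) (hxsQ : xs ∈ Q) (hzQ : ∀ n, z n ∈ Q)
    (hlf_lb : ∀ y ∈ Q, ∀ u ∈ Q, lf y u ≤ f u)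
    (hP3 : ∀ k : ℕ, ∀ u ∈ Q, ψ (k + 1) (z (k + 1)) ≤ (∑ i ∈ range (k + 1), lf (z i) u)
      + β * (d (z (k + 1)) + d' (z (k + 1)) (u - z (k + 1))))
    (k : ℕ) : ψ (k + 1) (z (k + 1)) ≤
      (k + 1) * f xs + β * (d (z (k + 1)) + d' (z (k + 1)) (xs - z (k + 1))) := by
  have hsum : ∑ i ∈ range (k + 1), lf (z i) xs ≤ ∑ _i ∈ range (k + 1), f xs :=
    sum_le_sum fun i _ ↦ hlf_lb _ (hzQ i) _ hxsQ
  simp only [sum_const, card_range, nsmul_eq_mul, Nat.cast_succ] at hsum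
  linarith [hP3 k xs hxsQ]

lemma sum_range_le_mul_add_linearization (xs : E)
    (hlow : ∀ n, ∑ i ∈ range n, (f (z (i + 1)) - δ) ≤ ψ n (z n))
    (hup : ∀ k : ℕ, ψ (k + 1) (z (k + 1)) ≤
      (k + 1) * f xs + β * (d (z (k + 1)) + d' (z (k + 1)) (xs - z (k + 1))))
    (k : ℕ) : ∑ i ∈ range (k + 1), f (z (i + 1)) ≤
      (k + 1) * (f xs + δ) + β * (d (z (k + 1)) + d' (z (k + 1)) (xs - z (k + 1))) := by
  have h := (hlow (k + 1)).trans (hup k)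
  simp only [sum_sub_distrib, sum_const, card_range, nsmul_eq_mul, Nat.cast_succ] at h
  linarith

lemma sq_norm_sub_le_of_sum_range_le (hσ : 0 < σ) (hL : 0 < L) (hβσ : β * σ = L) {xs : E}
    (hxsQ : xs ∈ Q) (hxs_opt : ∀ u ∈ Q, f xs ≤ f u) (hzQ : ∀ n, z n ∈ Q)
    (hBreg : ∀ w ∈ Q, ∀ u ∈ Q, σ / 2 * ‖u - w‖ ^ 2 ≤ d u - d w - d' w (u - w))
    (h₀ : σ / 2 * ‖xs - z 0‖ ^ 2 ≤ d xs)
    (hsum : ∀ k : ℕ, ∑ i ∈ range (k + 1), f (z (i + 1)) ≤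
      (k + 1) * (f xs + δ) + β * (d (z (k + 1)) + d' (z (k + 1)) (xs - z (k + 1))))
    (n : ℕ) : ‖z n - xs‖ ^ 2 ≤ 2 * d xs / σ + 2 * δ / L * n := by
  have hβ : 0 < β := pos_of_mul_pos_left (hβσ ▸ hL) hσ.le
  suffices h : L / 2 * ‖xs - z n‖ ^ 2 ≤ β * d xs + n * δ from
    calc ‖z n - xs‖ ^ 2 = 2 / L * (L / 2 * ‖xs - z n‖ ^ 2) := by
          rw [norm_sub_rev]; field_simp
      _ ≤ 2 / L * (β * d xs + n * δ) := by gcongr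
      _ = 2 * d xs / σ + 2 * δ / L * n := by rw [← hβσ]; field_simp
  rw [← hβσ]
  cases n with
  | zero =>
    have := mul_le_mul_of_nonneg_left h₀ hβ.le
    simp only [Nat.cast_zero, zero_mul, add_zero]
    linarith
  | succ k =>
    have hopt : ∑ _i ∈ range (k + 1), f xs ≤ ∑ i ∈ range (k + 1), f (z (i + 1)) :=
      sum_le_sum fun i _ ↦ hxs_opt _ (hzQ (i + 1))
    simp only [sum_const, card_range, nsmul_eq_mul, Nat.cast_succ] at hopt ⊢
    have := mul_le_mul_of_nonneg_left (hBreg _ (hzQ (k + 1)) _ hxsQ) hβ.le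
    linarith [hsum k]

end

theorem classical_gradient_method_constant_parameters_general
    {E : Type*} [NormedAddCommGroup E] [NormedSpace ℝ E]
    (Q : Set E) (hQcv : Convex ℝ Q)
    (f : E → ℝ) (hf_cv : ConvexOn ℝ Q f)
    (σ : ℝ) (hσ : 0 < σ)
    (d : E → ℝ) (d' : E → E →L[ℝ] ℝ)
    (hd_diff : ∀ y ∈ Q, HasFDerivWithinAt d (d' y) Q y)
    (x₀ : E) (hx₀Q : x₀ ∈ Q) (hdx₀ : d x₀ = 0) (hd_nonneg : ∀ u ∈ Q, 0 ≤ d u)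
    (hBreg : ∀ w ∈ Q, ∀ u ∈ Q, σ / 2 * ‖u - w‖ ^ 2 ≤ d u - d w - d' w (u - w))
    (lam : ℕ → ℝ)
    (β : ℕ → ℝ)
    (x : ℕ → E)
    (ψ : ℕ → E → ℝ) (z : ℕ → E)
    (hzQ : ∀ n, z n ∈ Q)
    (lf : E → E → ℝ) (Lc δc : ℝ) (hLc : 0 < Lc) (hδc : 0 ≤ δc)
    (hlf_lb : ∀ y ∈ Q, ∀ u ∈ Q, lf y u ≤ f u)
    (hlf_ub : ∀ y ∈ Q, ∀ u ∈ Q, f u ≤ lf y u + Lc / 2 * ‖u - y‖ ^ 2 + δc)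
    (hP1a : ψ 0 (z 0) = 0) (hP1b : z 0 = x₀)
    (hP2 : ∀ n : ℕ, ∀ u ∈ Q,
      ψ n (z n) + lam n * lf (x n) u + β (n + 1) * d u
        - β n * (d (z n) + d' (z n) (u - z n)) ≤ ψ (n + 1) u)
    (hP3 : ∀ k : ℕ, ∀ u ∈ Q,
      ψ (k + 1) (z (k + 1)) ≤ (∑ i ∈ Finset.range (k + 1), lam i * lf (x i) u)
        + β (k + 1) * (d (z (k + 1)) + d' (z (k + 1)) (u - z (k + 1))))
    (xs : E) (hxsQ : xs ∈ Q) (hxs_opt : ∀ u ∈ Q, f xs ≤ f u)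
    (xhat : ℕ → E)
    (hlam1 : ∀ k, lam k = 1) (hβL : ∀ n, β n = Lc / σ)
    (hmx : ∀ k, x k = z k)
    (hmxhat : ∀ k, xhat k = (∑ i ∈ Finset.range (k + 1), lam i)⁻¹ • ∑ i ∈ Finset.range (k + 1), lam i • x (i + 1)) :
    (∀ k : ℕ,
      f (xhat k) - f xs ≤ ((k : ℝ) + 1)⁻¹ * (∑ i ∈ Finset.range (k + 1), f (x (i + 1))) - f xs
      ∧ ((k : ℝ) + 1)⁻¹ * (∑ i ∈ Finset.range (k + 1), f (x (i + 1))) - f xs ≤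
        Lc * (d (z (k + 1)) + d' (z (k + 1)) (xs - z (k + 1))) / (σ * ((k : ℝ) + 1)) + δc)
    ∧ (∀ n : ℕ,
      (z n ∈ Q ∧ ‖z n - xs‖ ^ 2 ≤ 2 * d xs / σ + 2 * δc / Lc * (n : ℝ)) ∧
      (x n ∈ Q ∧ ‖x n - xs‖ ^ 2 ≤ 2 * d xs / σ + 2 * δc / Lc * (n : ℝ)))
    ∧ (∀ k : ℕ,
      xhat k ∈ Q ∧ ‖xhat k - xs‖ ^ 2 ≤ 2 * d xs / σ + 2 * δc / Lc * ((k : ℝ) + 1)) := by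
  have hβσ : Lc / σ * σ = Lc := div_mul_cancel₀ _ hσ.ne'
  have hxhat : ∀ k, xhat k = (range (k + 1)).centerMass lam fun i ↦ x (i + 1) := hmxhat
  obtain rfl : lam = fun _ ↦ 1 := funext hlam1
  obtain rfl : β = fun _ ↦ Lc / σ := funext hβL
  obtain rfl : z = x := (funext hmx).symm
  simp only [one_mul] at hP2 hP3
  have hsum := sum_range_le_mul_add_linearization xs
    (sum_range_le_of_add_le_succ hP1a <|
      psi_min_add_le_psi_min_succ (div_pos hLc hσ).le hβσ.ge hzQ hBreg hlf_ub hP2)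
    (psi_min_succ_le_mul_add_linearization xs hxsQ hzQ hlf_lb hP3)
  have h₀ : σ / 2 * ‖xs - z 0‖ ^ 2 ≤ d xs := by
    have := sq_norm_sub_le_sub_of_isMinOn hQcv hx₀Q hxsQ
      (isMinOn_iff.2 fun u hu ↦ hdx₀ ▸ hd_nonneg u hu) (hd_diff x₀ hx₀Q) (hBreg _ hx₀Q _ hxsQ)
    rwa [hdx₀, sub_zero, ← hP1b] at this
  have hball := sq_norm_sub_le_of_sum_range_le hσ hLc hβσ hxsQ hxs_opt hzQ hBreg h₀ hsum
  have hmem : ∀ k, ∀ i ∈ range (k + 1), z (i + 1) ∈ Q := fun _ i _ ↦ hzQ (i + 1)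
  refine ⟨fun k ↦ ⟨?_, ?_⟩, fun n ↦ ⟨⟨hzQ n, hball n⟩, hzQ n, hball n⟩, fun k ↦ ?_⟩
  · have := hf_cv.map_centerMass_le (fun _ _ ↦ zero_le_one) (by simp [Nat.cast_add_one_pos])
      (hmem k)
    rw [← hxhat] at this
    simpa [centerMass] using this
  · have hk : (0 : ℝ) < k + 1 := by positivity
    rw [sub_le_iff_le_add, inv_mul_le_iff₀ hk]
    refine (hsum k).trans_eq ?_
    field_simp
    ring
  · rw [hxhat]
    refine (convex_sep_sq_norm_sub_le hQcv xs _).centerMass_mem (fun _ _ ↦ zero_le_one)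
      (by simp [Nat.cast_add_one_pos]) fun i hi ↦ ⟨hzQ (i + 1), (hball (i + 1)).trans ?_⟩
    push_cast
    gcongr
    exact_mod_cast mem_range_succ_iff.1 hi

/-- Corollary 5.2 (a): the classical gradient method with `λ_k = 1`, `β_k = L/σ` for
structured problems with constant `L(·) ≡ L`, `δ(·) ≡ δ`: rate `L l_d(z_k;x*)/(σ(k+1)) + δ`
and boundedness of the iterates.  (Indices shifted: `z n`, `β n` stand for the paper's
`z_{n-1}`, `β_{n-1}`.) -/
theorem classical_gradient_method_constant_parameters
    {E : Type*} [NormedAddCommGroup E] [NormedSpace ℝ E] [FiniteDimensional ℝ E]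
    (Q : Set E) (hQne : Q.Nonempty) (hQcl : IsClosed Q) (hQcv : Convex ℝ Q)
    (f : E → ℝ) (hf_cv : ConvexOn ℝ Q f) (hf_lsc : LowerSemicontinuousOn f Q)
    (σ : ℝ) (hσ : 0 < σ)
    (d : E → ℝ) (d' : E → E →L[ℝ] ℝ)
    (hd_sc : StrongConvexOn Q σ d)
    (hd_diff : ∀ y ∈ Q, HasFDerivWithinAt d (d' y) Q y)
    (x₀ : E) (hx₀Q : x₀ ∈ Q) (hdx₀ : d x₀ = 0) (hd_nonneg : ∀ u ∈ Q, 0 ≤ d u)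
    (hBreg : ∀ w ∈ Q, ∀ u ∈ Q, σ / 2 * ‖u - w‖ ^ 2 ≤ d u - d w - d' w (u - w))
    (lam : ℕ → ℝ) (hlam : ∀ k, 0 < lam k)
    (β : ℕ → ℝ) (hβ0 : 0 < β 0) (hβmono : ∀ k, β k ≤ β (k + 1))
    (x : ℕ → E) (hxQ : ∀ k, x k ∈ Q)
    (ψ : ℕ → E → ℝ) (z : ℕ → E)
    (hzQ : ∀ n, z n ∈ Q) (hzmin : ∀ n, ∀ u ∈ Q, ψ n (z n) ≤ ψ n u)
    (lf : E → E → ℝ) (Lc δc : ℝ) (hLc : 0 < Lc) (hδc : 0 ≤ δc)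
    (hlf_cv : ∀ y ∈ Q, ConvexOn ℝ Q (lf y))
    (hlf_lsc : ∀ y ∈ Q, LowerSemicontinuousOn (lf y) Q)
    (hlf_lb : ∀ y ∈ Q, ∀ u ∈ Q, lf y u ≤ f u)
    (hlf_ub : ∀ y ∈ Q, ∀ u ∈ Q, f u ≤ lf y u + Lc / 2 * ‖u - y‖ ^ 2 + δc)
    (hP1a : ψ 0 (z 0) = 0) (hP1b : z 0 = x₀)
    (hP2 : ∀ n : ℕ, ∀ u ∈ Q,
      ψ n (z n) + lam n * lf (x n) u + β (n + 1) * d u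
        - β n * (d (z n) + d' (z n) (u - z n)) ≤ ψ (n + 1) u)
    (hP3 : ∀ k : ℕ, ∀ u ∈ Q,
      ψ (k + 1) (z (k + 1)) ≤ (∑ i ∈ Finset.range (k + 1), lam i * lf (x i) u)
        + β (k + 1) * (d (z (k + 1)) + d' (z (k + 1)) (u - z (k + 1))))
    (xs : E) (hxsQ : xs ∈ Q) (hxs_opt : ∀ u ∈ Q, f xs ≤ f u)
    (xhat : ℕ → E)
    (hlam1 : ∀ k, lam k = 1) (hβL : ∀ n, β n = Lc / σ)
    (hmx : ∀ k, x k = z k)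
    (hmxhat : ∀ k, xhat k = (∑ i ∈ Finset.range (k + 1), lam i)⁻¹ • ∑ i ∈ Finset.range (k + 1), lam i • x (i + 1)) :
    (∀ k : ℕ,
      f (xhat k) - f xs ≤ ((k : ℝ) + 1)⁻¹ * (∑ i ∈ Finset.range (k + 1), f (x (i + 1))) - f xs
      ∧ ((k : ℝ) + 1)⁻¹ * (∑ i ∈ Finset.range (k + 1), f (x (i + 1))) - f xs ≤
        Lc * (d (z (k + 1)) + d' (z (k + 1)) (xs - z (k + 1))) / (σ * ((k : ℝ) + 1)) + δc)
    ∧ (∀ n : ℕ,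
      (z n ∈ Q ∧ ‖z n - xs‖ ^ 2 ≤ 2 * d xs / σ + 2 * δc / Lc * (n : ℝ)) ∧
      (x n ∈ Q ∧ ‖x n - xs‖ ^ 2 ≤ 2 * d xs / σ + 2 * δc / Lc * (n : ℝ)))
    ∧ (∀ k : ℕ,
      xhat k ∈ Q ∧ ‖xhat k - xs‖ ^ 2 ≤ 2 * d xs / σ + 2 * δc / Lc * ((k : ℝ) + 1)) :=
  classical_gradient_method_constant_parameters_general Q hQcv f hf_cv σ hσ d d' hd_diff x₀ hx₀Q
    hdx₀ hd_nonneg hBreg lam β x ψ z hzQ lf Lc δc hLc hδc hlf_lb hlf_ub hP1a hP1b hP2 hP3 xs hxsQ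
    hxs_opt xhat hlam1 hβL hmx hmxhat
end
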